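/- arXiv:1905.13619 — 6 statements merged into one kernel-verified Lean document; each statement's English description precedes it below -/
import Mathlib

section
/- There exists c = c(Ω) > 0 such that for every ε ∈ (0,1) and every kernel κ : [0,1]² → P(Ω) there exist partitions S = (S_1,...,S_k) and X = (X_1,...,X_ℓ) of [0,1] into measurable sets with k + ℓ ≤ exp(c/ε²) such that D_⧠(κ, κ^{S,X}) < ε, where κ^{S,X} is the step-function obtained by averaging κ over the rectangles S_i × X_j. -/
open scoped BigOperators
open MeasureTheory

/-- A kernel `[0,1]² → P(Ω)`: measurable with values in the probability simplex. -/
def IsKernel {Ω : Type*} [Fintype Ω] (κ : ℝ → ℝ → Ω → ℝ) : Prop :=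
  (∀ ω, Measurable fun p : ℝ × ℝ => κ p.1 p.2 ω) ∧
  (∀ s x ω, 0 ≤ κ s x ω) ∧ (∀ s x, ∑ ω, κ s x ω = 1)

/-- A finite measurable partition of `[0,1]`. -/
def IsPartition {k : ℕ} (S : Fin k → Set ℝ) : Prop :=
  (∀ i, MeasurableSet (S i)) ∧ (Pairwise fun i j => Disjoint (S i) (S j)) ∧
  (⋃ i, S i) = Set.Icc 0 1

open Classical in
/-- The step kernel `κ^{S,X}` obtained by averaging `κ` over the rectangles
`S_i × X_j`. -/
noncomputable def stepKer {Ω : Type*} [Fintype Ω] {k ℓ : ℕ} (κ : ℝ → ℝ → Ω → ℝ)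
    (S : Fin k → Set ℝ) (X : Fin ℓ → Set ℝ) : ℝ → ℝ → Ω → ℝ := fun s x ω =>
  ∑ i, ∑ j, if s ∈ S i ∧ x ∈ X j then
    (∫ t in S i, (∫ y in X j, κ t y ω)) /
      ((volume (S i)).toReal * (volume (X j)).toReal)
  else 0

/-- The cut distance (without measure-preserving transformations). -/
noncomputable def cutFK {Ω : Type*} [Fintype Ω] (κ κ' : ℝ → ℝ → Ω → ℝ) : ℝ :=
  sSup { d | ∃ S X : Set ℝ, MeasurableSet S ∧ MeasurableSet X ∧
    S ⊆ Set.Icc 0 1 ∧ X ⊆ Set.Icc 0 1 ∧ ∃ ω : Ω,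
    d = |∫ s in S, (∫ x in X, (κ s x ω - κ' s x ω))| }

open scoped ENNReal
attribute [local instance] Classical.propDecidable

section Dev
variable {Ω : Type*} [Fintype Ω] {κ : ℝ → ℝ → Ω → ℝ}

lemma kernel_le_one (hκ : IsKernel κ) (s x : ℝ) (ω : Ω) : κ s x ω ≤ 1 := by
  have := hκ.2.2 s x
  calc κ s x ω ≤ ∑ ω', κ s x ω' :=
        Finset.single_le_sum (fun ω' _ => hκ.2.1 s x ω') (Finset.mem_univ ω)
    _ = 1 := this

lemma kernel_meas_left (hκ : IsKernel κ) (s : ℝ) (ω : Ω) :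
    Measurable fun x => κ s x ω :=
  (hκ.1 ω).comp measurable_prodMk_left

lemma kernel_integrableOn (hκ : IsKernel κ) (s : ℝ) (ω : Ω) {X : Set ℝ}
    (hX : volume X < ⊤) : IntegrableOn (fun x => κ s x ω) X := by
  refine Integrable.mono' (g := fun _ => 1) ?_ ((kernel_meas_left hκ s ω).aestronglyMeasurable) ?_
  · exact integrableOn_const hX.ne
  · filter_upwards with x
    rw [Real.norm_eq_abs, abs_of_nonneg (hκ.2.1 s x ω)]
    exact kernel_le_one hκ s x ω

/-- inner integral -/
noncomputable def inn (κ : ℝ → ℝ → Ω → ℝ) (X : Set ℝ) (ω : Ω) (s : ℝ) : ℝ :=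
  ∫ x in X, κ s x ω

lemma inn_meas (hκ : IsKernel κ) (X : Set ℝ) (ω : Ω) : Measurable (inn κ X ω) := by
  have h : StronglyMeasurable fun p : ℝ × ℝ => κ p.1 p.2 ω := (hκ.1 ω).stronglyMeasurable
  exact (h.integral_prod_right' (ν := volume.restrict X)).measurable

lemma inn_nonneg (hκ : IsKernel κ) (X : Set ℝ) (ω : Ω) (s : ℝ) : 0 ≤ inn κ X ω s :=
  integral_nonneg fun x => hκ.2.1 s x ω

lemma inn_le (hκ : IsKernel κ) {X : Set ℝ} (hX : volume X < ⊤) (ω : Ω) (s : ℝ) :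
    inn κ X ω s ≤ (volume X).toReal := by
  have h1 : inn κ X ω s ≤ ∫ _x in X, (1 : ℝ) :=
    integral_mono (kernel_integrableOn hκ s ω hX) (integrableOn_const hX.ne)
      (fun x => kernel_le_one hκ s x ω)
  simpa [measureReal_def] using h1

lemma inn_integrableOn (hκ : IsKernel κ) {X : Set ℝ} (hX : volume X < ⊤) (hX1 : (volume X).toReal ≤ 1)
    (ω : Ω) {S : Set ℝ} (hS : volume S < ⊤) : IntegrableOn (inn κ X ω) S := by
  refine Integrable.mono' (g := fun _ => 1) (integrableOn_const hS.ne)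
    ((inn_meas hκ X ω).aestronglyMeasurable) ?_
  filter_upwards with s
  rw [Real.norm_eq_abs, abs_of_nonneg (inn_nonneg hκ X ω s)]
  exact le_trans (inn_le hκ hX ω s) hX1

/-- the rectangle integral a = ∫_S ∫_X κ -/
noncomputable def rInt (κ : ℝ → ℝ → Ω → ℝ) (S X : Set ℝ) (ω : Ω) : ℝ :=
  ∫ s in S, inn κ X ω s

lemma rInt_nonneg (hκ : IsKernel κ) (S X : Set ℝ) (ω : Ω) : 0 ≤ rInt κ S X ω :=
  integral_nonneg fun s => inn_nonneg hκ X ω s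

lemma rInt_le (hκ : IsKernel κ) {S X : Set ℝ} (hS : volume S < ⊤) (hX : volume X < ⊤) (ω : Ω) :
    rInt κ S X ω ≤ (volume S).toReal * (volume X).toReal := by
  have h1 : rInt κ S X ω ≤ ∫ _s in S, (volume X).toReal := by
    refine integral_mono ?_ (integrableOn_const hS.ne) (fun s => inn_le hκ hX ω s)
    refine Integrable.mono' (g := fun _ => (volume X).toReal)
      (integrableOn_const hS.ne) ((inn_meas hκ X ω).aestronglyMeasurable) ?_
    filter_upwards with s
    rw [Real.norm_eq_abs, abs_of_nonneg (inn_nonneg hκ X ω s)]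
    exact inn_le hκ hX ω s
  simpa [mul_comm, measureReal_def] using h1

/-- sum over ω of rectangle integrals equals product of measures -/
lemma rInt_sum (hκ : IsKernel κ) {S X : Set ℝ} (hS : volume S < ⊤) (hX : volume X < ⊤) :
    ∑ ω, rInt κ S X ω = (volume S).toReal * (volume X).toReal := by
  have h1 : ∀ s, ∑ ω, inn κ X ω s = (volume X).toReal := by
    intro s
    have : ∫ x in X, ∑ ω, κ s x ω = ∑ ω, inn κ X ω s :=
      integral_finset_sum _ (fun ω _ => kernel_integrableOn hκ s ω hX)
    rw [← this]
    simp [hκ.2.2 s, measureReal_def]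
  have h2 : ∫ s in S, ∑ ω, inn κ X ω s = ∑ ω, rInt κ S X ω := by
    refine integral_finset_sum _ ?_
    intro ω _
    refine Integrable.mono' (g := fun _ => (volume X).toReal)
      (integrableOn_const hS.ne) ((inn_meas hκ X ω).aestronglyMeasurable) ?_
    filter_upwards with s
    rw [Real.norm_eq_abs, abs_of_nonneg (inn_nonneg hκ X ω s)]
    exact inn_le hκ hX ω s
  rw [← h2]
  calc ∫ s in S, ∑ ω, inn κ X ω s = ∫ _s in S, (volume X).toReal := by
        congr 1; ext s; exact h1 s
    _ = (volume S).toReal * (volume X).toReal := by simp [mul_comm, measureReal_def]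

section Partition
variable {k : ℕ} {S : Fin k → Set ℝ}

lemma part_subset (hS : IsPartition S) (i : Fin k) : S i ⊆ Set.Icc 0 1 := by
  rw [← hS.2.2]; exact Set.subset_iUnion S i

lemma part_vol_lt (hS : IsPartition S) (i : Fin k) : volume (S i) < ⊤ :=
  lt_of_le_of_lt (measure_mono (part_subset hS i)) (by simp)

lemma part_vol_le_one (hS : IsPartition S) (i : Fin k) : (volume (S i)).toReal ≤ 1 := by
  have h : volume (S i) ≤ volume (Set.Icc (0:ℝ) 1) := measure_mono (part_subset hS i)
  rw [(by simp : volume (Set.Icc (0:ℝ) 1) = 1)] at h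
  calc (volume (S i)).toReal ≤ (1 : ℝ≥0∞).toReal :=
        ENNReal.toReal_mono (by simp) h
    _ = 1 := by simp

lemma part_vol_sum (hS : IsPartition S) : ∑ i, (volume (S i)).toReal = 1 := by
  have h : volume (⋃ i, S i) = ∑' i, volume (S i) :=
    measure_iUnion hS.2.1 hS.1
  rw [hS.2.2, tsum_fintype] at h
  have h2 : (volume (Set.Icc (0:ℝ) 1)) = 1 := by simp
  rw [h2] at h
  have := congrArg ENNReal.toReal h.symm
  rw [ENNReal.toReal_sum (fun i _ => (part_vol_lt hS i).ne)] at this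
  simpa using this

lemma part_exists_mem (hS : IsPartition S) {s : ℝ} (hs : s ∈ Set.Icc (0:ℝ) 1) :
    ∃ i, s ∈ S i := by
  rw [← hS.2.2] at hs; exact Set.mem_iUnion.1 hs
end Partition

section Step
variable {k l : ℕ} {S : Fin k → Set ℝ} {X : Fin l → Set ℝ}

/-- average over a rectangle -/
noncomputable def avg (κ : ℝ → ℝ → Ω → ℝ) (A B : Set ℝ) (ω : Ω) : ℝ :=
  rInt κ A B ω / ((volume A).toReal * (volume B).toReal)

lemma avg_nonneg (hκ : IsKernel κ) (A B : Set ℝ) (ω : Ω) : 0 ≤ avg κ A B ω :=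
  div_nonneg (rInt_nonneg hκ A B ω) (mul_nonneg ENNReal.toReal_nonneg ENNReal.toReal_nonneg)

lemma avg_le_one (hκ : IsKernel κ) {A B : Set ℝ} (hA : volume A < ⊤) (hB : volume B < ⊤)
    (ω : Ω) : avg κ A B ω ≤ 1 := by
  rcases eq_or_lt_of_le (mul_nonneg (ENNReal.toReal_nonneg (a := volume A))
    (ENNReal.toReal_nonneg (a := volume B))) with h | h
  · simp [avg, ← h]
  · exact (div_le_one h).2 (rInt_le hκ hA hB ω)

lemma stepKer_eq (hS : IsPartition S) (hX : IsPartition X) (ω : Ω) {s x : ℝ} {i₀ : Fin k}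
    {j₀ : Fin l} (hi : s ∈ S i₀) (hj : x ∈ X j₀) :
    stepKer κ S X s x ω = avg κ (S i₀) (X j₀) ω := by
  unfold stepKer
  rw [Finset.sum_eq_single_of_mem i₀ (Finset.mem_univ i₀)
    (fun i _ hine => Finset.sum_eq_zero fun j _ => by
      rw [if_neg]; rintro ⟨hsi, -⟩; exact (hS.2.1 hine).le_bot ⟨hsi, hi⟩)]
  rw [Finset.sum_eq_single_of_mem j₀ (Finset.mem_univ j₀)
    (fun j _ hjne => by
      rw [if_neg]; rintro ⟨-, hxj⟩; exact (hX.2.1 hjne).le_bot ⟨hxj, hj⟩)]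
  rw [if_pos ⟨hi, hj⟩]
  rfl

lemma stepKer_eq_zero (hS : IsPartition S) {s x : ℝ} (ω : Ω)
    (h : ∀ i j, ¬(s ∈ S i ∧ x ∈ X j)) : stepKer κ S X s x ω = 0 := by
  unfold stepKer
  exact Finset.sum_eq_zero fun i _ => Finset.sum_eq_zero fun j _ => if_neg (h i j)

lemma stepKer_nonneg (hκ : IsKernel κ) (ω : Ω) (s x : ℝ) : 0 ≤ stepKer κ S X s x ω := by
  unfold stepKer
  refine Finset.sum_nonneg fun i _ => Finset.sum_nonneg fun j _ => ?_
  split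
  · exact avg_nonneg hκ _ _ ω
  · exact le_refl 0

lemma stepKer_le_one (hκ : IsKernel κ) (hS : IsPartition S) (hX : IsPartition X) (ω : Ω)
    (s x : ℝ) : stepKer κ S X s x ω ≤ 1 := by
  by_cases h : ∃ i j, s ∈ S i ∧ x ∈ X j
  · obtain ⟨i, j, hi, hj⟩ := h
    rw [stepKer_eq hS hX ω hi hj]
    exact avg_le_one hκ (part_vol_lt hS i) (part_vol_lt hX j) ω
  · push_neg at h
    rw [stepKer_eq_zero hS ω (fun i j => by rintro ⟨h1, h2⟩; exact h i j h1 h2)]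
    exact zero_le_one


lemma subIcc_vol_lt {A : Set ℝ} (h : A ⊆ Set.Icc 0 1) : volume A < ⊤ :=
  lt_of_le_of_lt (measure_mono h) (by simp)

lemma subIcc_vol_le_one {A : Set ℝ} (h : A ⊆ Set.Icc 0 1) : (volume A).toReal ≤ 1 := by
  have h2 : volume A ≤ volume (Set.Icc (0:ℝ) 1) := measure_mono h
  rw [(by simp : volume (Set.Icc (0:ℝ) 1) = 1)] at h2
  calc (volume A).toReal ≤ (1 : ℝ≥0∞).toReal := ENNReal.toReal_mono (by simp) h2
    _ = 1 := by simp

lemma stepKer_fun_eq (hκ : IsKernel κ) (ω : Ω) (s : ℝ) : ∀ x,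
    stepKer κ S X s x ω =
      ∑ i, ∑ j, (if s ∈ S i then (X j).indicator (fun _ => avg κ (S i) (X j) ω) x else 0) := by
  intro x
  unfold stepKer
  refine Finset.sum_congr rfl fun i _ => Finset.sum_congr rfl fun j _ => ?_
  by_cases hsi : s ∈ S i <;> by_cases hxj : x ∈ X j <;>
    simp [Set.indicator, hsi, hxj, avg, rInt, inn]

lemma stepKer_meas_left (hκ : IsKernel κ) (hX : IsPartition X) (ω : Ω) (s : ℝ) :
    Measurable fun x => stepKer κ S X s x ω := by
  have : (fun x => stepKer κ S X s x ω) = fun x =>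
      ∑ i, ∑ j, (if s ∈ S i then (X j).indicator (fun _ => avg κ (S i) (X j) ω) x else 0) :=
    funext (stepKer_fun_eq hκ ω s)
  rw [this]
  refine Finset.measurable_sum _ fun i _ => Finset.measurable_sum _ fun j _ => ?_
  by_cases hsi : s ∈ S i
  · simp only [if_pos hsi]
    exact measurable_const.indicator (hX.1 j)
  · simp only [if_neg hsi]; exact measurable_const

/-- inner integral of the step kernel over `U` -/
lemma step_inn (hκ : IsKernel κ) (hS : IsPartition S) (hX : IsPartition X)
    {U : Set ℝ} (hU : MeasurableSet U) (hUsub : U ⊆ Set.Icc 0 1) (ω : Ω) (s : ℝ) :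
    ∫ x in U, stepKer κ S X s x ω =
      ∑ i, ∑ j, (if s ∈ S i then avg κ (S i) (X j) ω * (volume (U ∩ X j)).toReal else 0) := by
  have hUfin : volume U < ⊤ := subIcc_vol_lt hUsub
  have hint : ∀ (i : Fin k) (j : Fin l), IntegrableOn
      (fun x => if s ∈ S i then (X j).indicator (fun _ => avg κ (S i) (X j) ω) x else 0)
      U volume := by
    intro i j
    by_cases hsi : s ∈ S i
    · simp only [if_pos hsi]
      exact (integrableOn_const hUfin.ne).indicator (hX.1 j)
    · simp only [if_neg hsi]
      exact integrableOn_const hUfin.ne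
  calc ∫ x in U, stepKer κ S X s x ω
      = ∫ x in U, ∑ i, ∑ j,
          (if s ∈ S i then (X j).indicator (fun _ => avg κ (S i) (X j) ω) x else 0) := by
        exact integral_congr_ae (Filter.Eventually.of_forall fun x => stepKer_fun_eq hκ ω s x)
    _ = ∑ i, ∫ x in U, ∑ j,
          (if s ∈ S i then (X j).indicator (fun _ => avg κ (S i) (X j) ω) x else 0) :=
        integral_finset_sum _ fun i _ => integrable_finset_sum _ fun j _ => hint i j
    _ = ∑ i, ∑ j, ∫ x in U,
          (if s ∈ S i then (X j).indicator (fun _ => avg κ (S i) (X j) ω) x else 0) :=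
        Finset.sum_congr rfl fun i _ => integral_finset_sum _ fun j _ => hint i j
    _ = ∑ i, ∑ j, (if s ∈ S i then avg κ (S i) (X j) ω * (volume (U ∩ X j)).toReal else 0) := by
        refine Finset.sum_congr rfl fun i _ => Finset.sum_congr rfl fun j _ => ?_
        by_cases hsi : s ∈ S i
        · simp only [if_pos hsi]
          rw [setIntegral_indicator (hX.1 j), setIntegral_const]
          rw [smul_eq_mul, mul_comm, measureReal_def]
        · simp only [if_neg hsi, integral_zero]

/-- full rectangle integral of the step-inner formula -/
lemma step_rect_aux (hκ : IsKernel κ) (hS : IsPartition S) (hX : IsPartition X)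
    {T U : Set ℝ} (hT : MeasurableSet T) (hTsub : T ⊆ Set.Icc 0 1)
    (hU : MeasurableSet U) (hUsub : U ⊆ Set.Icc 0 1) (ω : Ω) :
    ∫ s in T, (∑ i, ∑ j,
        (if s ∈ S i then avg κ (S i) (X j) ω * (volume (U ∩ X j)).toReal else 0)) =
      ∑ i, ∑ j, avg κ (S i) (X j) ω * (volume (T ∩ S i)).toReal *
        (volume (U ∩ X j)).toReal := by
  have hTfin : volume T < ⊤ := subIcc_vol_lt hTsub
  have hfix : ∀ s, (∑ i, ∑ j,
      (if s ∈ S i then avg κ (S i) (X j) ω * (volume (U ∩ X j)).toReal else 0)) =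
      ∑ i, (S i).indicator
        (fun _ => ∑ j, avg κ (S i) (X j) ω * (volume (U ∩ X j)).toReal) s := by
    intro s
    refine Finset.sum_congr rfl fun i _ => ?_
    by_cases hsi : s ∈ S i <;> simp [Set.indicator, hsi]
  calc ∫ s in T, (∑ i, ∑ j,
        (if s ∈ S i then avg κ (S i) (X j) ω * (volume (U ∩ X j)).toReal else 0))
      = ∫ s in T, ∑ i, (S i).indicator
          (fun _ => ∑ j, avg κ (S i) (X j) ω * (volume (U ∩ X j)).toReal) s :=
        integral_congr_ae (Filter.Eventually.of_forall hfix)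
    _ = ∑ i, ∫ s in T, (S i).indicator
          (fun _ => ∑ j, avg κ (S i) (X j) ω * (volume (U ∩ X j)).toReal) s :=
        integral_finset_sum _ fun i _ =>
          (integrableOn_const hTfin.ne).indicator (hS.1 i)
    _ = ∑ i, (volume (T ∩ S i)).toReal *
          ∑ j, avg κ (S i) (X j) ω * (volume (U ∩ X j)).toReal := by
        refine Finset.sum_congr rfl fun i _ => ?_
        rw [setIntegral_indicator (hS.1 i), setIntegral_const, smul_eq_mul, measureReal_def]
    _ = ∑ i, ∑ j, avg κ (S i) (X j) ω * (volume (T ∩ S i)).toReal *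
          (volume (U ∩ X j)).toReal := by
        refine Finset.sum_congr rfl fun i _ => ?_
        rw [Finset.mul_sum]
        refine Finset.sum_congr rfl fun j _ => by ring

/-- the cut-norm integrand over a rectangle `T × U` -/
lemma diff_rect (hκ : IsKernel κ) (hS : IsPartition S) (hX : IsPartition X)
    {T U : Set ℝ} (hT : MeasurableSet T) (hTsub : T ⊆ Set.Icc 0 1)
    (hU : MeasurableSet U) (hUsub : U ⊆ Set.Icc 0 1) (ω : Ω) :
    ∫ s in T, (∫ x in U, (κ s x ω - stepKer κ S X s x ω)) =
      rInt κ T U ω - ∑ i, ∑ j, avg κ (S i) (X j) ω * (volume (T ∩ S i)).toReal *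
        (volume (U ∩ X j)).toReal := by
  have hUfin : volume U < ⊤ := subIcc_vol_lt hUsub
  have hTfin : volume T < ⊤ := subIcc_vol_lt hTsub
  have hstepint : ∀ s, IntegrableOn (fun x => stepKer κ S X s x ω) U volume := by
    intro s
    refine Integrable.mono' (g := fun _ => 1) (integrableOn_const hUfin.ne)
      ((stepKer_meas_left hκ hX ω s).aestronglyMeasurable) ?_
    filter_upwards with x
    rw [Real.norm_eq_abs, abs_of_nonneg (stepKer_nonneg hκ ω s x)]
    exact stepKer_le_one hκ hS hX ω s x
  have hinner : ∀ s, ∫ x in U, (κ s x ω - stepKer κ S X s x ω) =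
      inn κ U ω s - ∑ i, ∑ j,
        (if s ∈ S i then avg κ (S i) (X j) ω * (volume (U ∩ X j)).toReal else 0) := by
    intro s
    rw [integral_sub (kernel_integrableOn hκ s ω hUfin) (hstepint s)]
    rw [step_inn hκ hS hX hU hUsub ω s]
    rfl
  calc ∫ s in T, (∫ x in U, (κ s x ω - stepKer κ S X s x ω))
      = ∫ s in T, (inn κ U ω s - ∑ i, ∑ j,
          (if s ∈ S i then avg κ (S i) (X j) ω * (volume (U ∩ X j)).toReal else 0)) :=
        integral_congr_ae (Filter.Eventually.of_forall hinner)
    _ = (∫ s in T, inn κ U ω s) - ∫ s in T, (∑ i, ∑ j,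
          (if s ∈ S i then avg κ (S i) (X j) ω * (volume (U ∩ X j)).toReal else 0)) := by
        refine integral_sub (inn_integrableOn hκ hUfin (subIcc_vol_le_one hUsub) ω hTfin) ?_
        refine integrable_finset_sum _ fun i _ => integrable_finset_sum _ fun j _ => ?_
        have heq : (fun s => if s ∈ S i then avg κ (S i) (X j) ω * (volume (U ∩ X j)).toReal else 0)
            = (S i).indicator (fun _ => avg κ (S i) (X j) ω * (volume (U ∩ X j)).toReal) := by
          funext s; by_cases hsi : s ∈ S i <;> simp [Set.indicator, hsi]
        rw [heq]
        exact (integrableOn_const hTfin.ne).indicator (hS.1 i)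
    _ = rInt κ T U ω - ∑ i, ∑ j, avg κ (S i) (X j) ω * (volume (T ∩ S i)).toReal *
          (volume (U ∩ X j)).toReal := by
        rw [step_rect_aux hκ hS hX hT hTsub hU hUsub ω]
        rfl

end Step

/-- energy of a pair of partitions -/
noncomputable def energy (κ : ℝ → ℝ → Ω → ℝ) {k l : ℕ} (S : Fin k → Set ℝ)
    (X : Fin l → Set ℝ) : ℝ :=
  ∑ ω, ∑ i, ∑ j,
    (rInt κ (S i) (X j) ω) ^ 2 / ((volume (S i)).toReal * (volume (X j)).toReal)

section Energy
variable {k l : ℕ} {S : Fin k → Set ℝ} {X : Fin l → Set ℝ}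

lemma energy_nonneg (hκ : IsKernel κ) : 0 ≤ energy κ S X := by
  refine Finset.sum_nonneg fun ω _ => Finset.sum_nonneg fun i _ =>
    Finset.sum_nonneg fun j _ => ?_
  exact div_nonneg (sq_nonneg _) (mul_nonneg ENNReal.toReal_nonneg ENNReal.toReal_nonneg)

lemma energy_le_one (hκ : IsKernel κ) (hS : IsPartition S) (hX : IsPartition X) :
    energy κ S X ≤ 1 := by
  have key : ∀ (i : Fin k) (j : Fin l), ∑ ω,
      (rInt κ (S i) (X j) ω) ^ 2 / ((volume (S i)).toReal * (volume (X j)).toReal)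
      ≤ (volume (S i)).toReal * (volume (X j)).toReal := by
    intro i j
    set w := (volume (S i)).toReal * (volume (X j)).toReal with hw
    have hw0 : 0 ≤ w := mul_nonneg ENNReal.toReal_nonneg ENNReal.toReal_nonneg
    rcases eq_or_lt_of_le hw0 with h0 | hpos
    · have : ∀ ω : Ω, rInt κ (S i) (X j) ω = 0 := by
        intro ω
        have h1 := rInt_nonneg hκ (S i) (X j) ω
        have h2 := rInt_le hκ (part_vol_lt hS i) (part_vol_lt hX j) ω
        rw [← hw, ← h0] at h2
        linarith
      simp [this, ← h0]
    · have hsum := rInt_sum hκ (part_vol_lt hS i) (part_vol_lt hX j)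
      calc ∑ ω, (rInt κ (S i) (X j) ω) ^ 2 / w ≤ ∑ ω, rInt κ (S i) (X j) ω := by
            refine Finset.sum_le_sum fun ω _ => ?_
            rw [div_le_iff₀ hpos]
            have h1 := rInt_nonneg hκ (S i) (X j) ω
            have h2 : rInt κ (S i) (X j) ω ≤ w :=
              rInt_le hκ (part_vol_lt hS i) (part_vol_lt hX j) ω
            nlinarith
        _ = w := hsum
  calc energy κ S X = ∑ i, ∑ j, ∑ ω,
        (rInt κ (S i) (X j) ω) ^ 2 / ((volume (S i)).toReal * (volume (X j)).toReal) := by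
        exact Finset.sum_comm.trans
          (Finset.sum_congr rfl fun i _ => Finset.sum_comm)
    _ ≤ ∑ i, ∑ j, (volume (S i)).toReal * (volume (X j)).toReal :=
        Finset.sum_le_sum fun i _ => Finset.sum_le_sum fun j _ => key i j
    _ = (∑ i, (volume (S i)).toReal) * (∑ j, (volume (X j)).toReal) := by
        exact (Finset.sum_mul_sum _ _ _ _).symm
    _ = 1 := by rw [part_vol_sum hS, part_vol_sum hX]; ring
end Energy

/-- abstract variance identity -/
lemma variance_aux {ι : Type*} [Fintype ι] (w A : ι → ℝ) (hw : ∀ r, 0 ≤ w r)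
    (hA0 : ∀ r, w r = 0 → A r = 0) :
    ∑ r, w r * (A r / w r - (∑ r, A r) / (∑ r, w r)) ^ 2
      = ∑ r, (A r) ^ 2 / w r - (∑ r, A r) ^ 2 / (∑ r, w r) := by
  classical
  set W := ∑ r, w r with hW
  by_cases hW0 : W = 0
  · have hwr : ∀ r, w r = 0 := fun r =>
      (Finset.sum_eq_zero_iff_of_nonneg (fun r _ => hw r)).1 hW0 r (Finset.mem_univ r)
    have hAr : ∀ r, A r = 0 := fun r => hA0 r (hwr r)
    simp [hAr, hwr]
  · set m := (∑ r, A r) / W with hm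
    have hterm : ∀ r, w r * (A r / w r - m) ^ 2 = (A r) ^ 2 / w r - 2 * A r * m + w r * m ^ 2 := by
      intro r
      by_cases hwr : w r = 0
      · rw [hwr, hA0 r hwr]; simp
      · field_simp
        ring
    rw [Finset.sum_congr rfl fun r _ => hterm r]
    rw [Finset.sum_add_distrib, Finset.sum_sub_distrib]
    rw [← Finset.sum_mul, ← Finset.mul_sum, ← Finset.sum_mul]
    have : ∑ r, A r = m * W := by rw [hm]; field_simp
    rw [← hW]
    rw [this]
    field_simp
    ring

section Refine
variable {k l : ℕ} {S : Fin k → Set ℝ} {X : Fin l → Set ℝ}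

/-- refinement of a partition by a set, indexed by `Fin 2 × Fin k` -/
def refineP {k : ℕ} (S : Fin k → Set ℝ) (T : Set ℝ) : Fin 2 × Fin k → Set ℝ :=
  fun p => S p.2 ∩ (if p.1 = 0 then T else Tᶜ)

/-- the same, reindexed by `Fin (2 * k)` -/
def refineF {k : ℕ} (S : Fin k → Set ℝ) (T : Set ℝ) : Fin (2 * k) → Set ℝ :=
  refineP S T ∘ finProdFinEquiv.symm

lemma refineF_isPartition (hS : IsPartition S) {T : Set ℝ} (hT : MeasurableSet T) :
    IsPartition (refineF S T) := by
  refine ⟨?_, ?_, ?_⟩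
  · intro r
    exact (hS.1 _).inter (by split <;> [exact hT; exact hT.compl])
  · intro r r' hne
    have hpq : (finProdFinEquiv.symm r : Fin 2 × Fin k) ≠ finProdFinEquiv.symm r' :=
      fun h => hne (finProdFinEquiv.symm.injective h)
    set p := (finProdFinEquiv.symm r : Fin 2 × Fin k)
    set q := (finProdFinEquiv.symm r' : Fin 2 × Fin k)
    show Disjoint (refineP S T p) (refineP S T q)
    by_cases hii : p.2 = q.2
    · have hbb : p.1 ≠ q.1 := fun hb => hpq (Prod.ext hb hii)
      have hd : Disjoint (if p.1 = 0 then T else Tᶜ) (if q.1 = 0 then T else Tᶜ) := by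
        have h2 : ∀ b : Fin 2, b = 0 ∨ b = 1 := by decide
        rcases h2 p.1 with h1 | h1 <;> rcases h2 q.1 with h3 | h3
        · exact absurd (h1.trans h3.symm) hbb
        · rw [if_pos h1, if_neg (by rw [h3]; decide)]
          exact disjoint_compl_right
        · rw [if_neg (by rw [h1]; decide), if_pos h3]
          exact disjoint_compl_left
        · exact absurd (h1.trans h3.symm) hbb
      exact Set.disjoint_of_subset Set.inter_subset_right Set.inter_subset_right hd
    · exact Set.disjoint_of_subset Set.inter_subset_left Set.inter_subset_left (hS.2.1 hii)
  · have h1 : ⋃ r, refineF S T r = ⋃ p, refineP S T p :=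
      finProdFinEquiv.symm.surjective.iUnion_comp (g := refineP S T)
    rw [h1, ← hS.2.2]
    ext x
    simp only [Set.mem_iUnion, refineP, Set.mem_inter_iff]
    constructor
    · rintro ⟨p, hx, -⟩; exact ⟨p.2, hx⟩
    · rintro ⟨i, hx⟩
      by_cases hxT : x ∈ T
      · exact ⟨(0, i), hx, by simp [hxT]⟩
      · exact ⟨(1, i), hx, by simp [hxT]⟩

lemma vol_split {A T : Set ℝ} (hAsub : A ⊆ Set.Icc 0 1) (hT : MeasurableSet T) :
    (volume (A ∩ T)).toReal + (volume (A ∩ Tᶜ)).toReal = (volume A).toReal := by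
  have h1 : volume (A ∩ T) + volume (A \ T) = volume A := measure_inter_add_diff A hT
  rw [Set.diff_eq] at h1
  have h2 : volume (A ∩ T) < ⊤ := subIcc_vol_lt fun x hx => hAsub hx.1
  have h3 : volume (A ∩ Tᶜ) < ⊤ := subIcc_vol_lt fun x hx => hAsub hx.1
  rw [← h1, ENNReal.toReal_add h2.ne h3.ne]

lemma inn_split (hκ : IsKernel κ) {B : Set ℝ} (hBsub : B ⊆ Set.Icc 0 1)
    (hBm : MeasurableSet B) {U : Set ℝ} (hU : MeasurableSet U) (ω : Ω) (s : ℝ) :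
    inn κ B ω s = inn κ (B ∩ U) ω s + inn κ (B ∩ Uᶜ) ω s := by
  have h1 : (B ∩ U) ∪ (B ∩ Uᶜ) = B := Set.inter_union_compl B U
  have hd : Disjoint (B ∩ U) (B ∩ Uᶜ) :=
    Set.disjoint_of_subset Set.inter_subset_right Set.inter_subset_right disjoint_compl_right
  rw [show inn κ B ω s = ∫ x in (B ∩ U) ∪ (B ∩ Uᶜ), κ s x ω by rw [h1]; rfl]
  exact setIntegral_union hd (hBm.inter hU.compl)
    (kernel_integrableOn hκ s ω (subIcc_vol_lt fun x hx => hBsub hx.1))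
    (kernel_integrableOn hκ s ω (subIcc_vol_lt fun x hx => hBsub hx.1))

lemma rInt_split_right (hκ : IsKernel κ) {A B : Set ℝ} (hAsub : A ⊆ Set.Icc 0 1)
    (hBsub : B ⊆ Set.Icc 0 1) (hBm : MeasurableSet B) {U : Set ℝ} (hU : MeasurableSet U)
    (ω : Ω) : rInt κ A B ω = rInt κ A (B ∩ U) ω + rInt κ A (B ∩ Uᶜ) ω := by
  have hint : ∀ C : Set ℝ, C ⊆ Set.Icc 0 1 → IntegrableOn (inn κ C ω) A volume :=
    fun C hC => inn_integrableOn hκ (subIcc_vol_lt hC) (subIcc_vol_le_one hC) ω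
      (subIcc_vol_lt hAsub)
  calc rInt κ A B ω = ∫ s in A, (inn κ (B ∩ U) ω s + inn κ (B ∩ Uᶜ) ω s) :=
        integral_congr_ae (Filter.Eventually.of_forall fun s => inn_split hκ hBsub hBm hU ω s)
    _ = rInt κ A (B ∩ U) ω + rInt κ A (B ∩ Uᶜ) ω :=
        integral_add (hint _ fun x hx => hBsub hx.1) (hint _ fun x hx => hBsub hx.1)

lemma rInt_split_left (hκ : IsKernel κ) {A B : Set ℝ} (hAsub : A ⊆ Set.Icc 0 1)
    (hBsub : B ⊆ Set.Icc 0 1) (hAm : MeasurableSet A) {T : Set ℝ} (hT : MeasurableSet T)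
    (ω : Ω) : rInt κ A B ω = rInt κ (A ∩ T) B ω + rInt κ (A ∩ Tᶜ) B ω := by
  have h1 : (A ∩ T) ∪ (A ∩ Tᶜ) = A := Set.inter_union_compl A T
  have hd : Disjoint (A ∩ T) (A ∩ Tᶜ) :=
    Set.disjoint_of_subset Set.inter_subset_right Set.inter_subset_right disjoint_compl_right
  have hint : ∀ C : Set ℝ, C ⊆ Set.Icc 0 1 → IntegrableOn (inn κ B ω) C volume :=
    fun C hC => inn_integrableOn hκ (subIcc_vol_lt hBsub) (subIcc_vol_le_one hBsub) ω
      (subIcc_vol_lt hC)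
  rw [show rInt κ A B ω = ∫ s in (A ∩ T) ∪ (A ∩ Tᶜ), inn κ B ω s by rw [h1]; rfl]
  exact setIntegral_union hd (hAm.inter hT.compl)
    (hint _ fun x hx => hAsub hx.1) (hint _ fun x hx => hAsub hx.1)

section Decomp
variable {k l : ℕ} {S : Fin k → Set ℝ} {X : Fin l → Set ℝ}

lemma iUnion_inter_part (hS : IsPartition S) {T : Set ℝ} (hTsub : T ⊆ Set.Icc 0 1) :
    ⋃ i, (S i ∩ T) = T := by
  ext x
  simp only [Set.mem_iUnion, Set.mem_inter_iff]
  constructor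
  · rintro ⟨i, -, hx⟩; exact hx
  · intro hx
    obtain ⟨i, hi⟩ := part_exists_mem hS (hTsub hx)
    exact ⟨i, hi, hx⟩

lemma rInt_decomp (hκ : IsKernel κ) (hS : IsPartition S) (hX : IsPartition X)
    {T U : Set ℝ} (hT : MeasurableSet T) (hTsub : T ⊆ Set.Icc 0 1)
    (hU : MeasurableSet U) (hUsub : U ⊆ Set.Icc 0 1) (ω : Ω) :
    rInt κ T U ω = ∑ i, ∑ j, rInt κ (S i ∩ T) (X j ∩ U) ω := by
  have hsubXU : ∀ j, X j ∩ U ⊆ Set.Icc 0 1 := fun j x hx => part_subset hX j hx.1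
  have hsubST : ∀ i, S i ∩ T ⊆ Set.Icc 0 1 := fun i x hx => part_subset hS i hx.1
  have hinn : ∀ s, inn κ U ω s = ∑ j, inn κ (X j ∩ U) ω s := by
    intro s
    rw [show inn κ U ω s = ∫ x in ⋃ j, (X j ∩ U), κ s x ω by
      rw [iUnion_inter_part hX hUsub]; rfl]
    exact integral_iUnion_fintype (fun j => (hX.1 j).inter hU)
      (fun j j' hne => Set.disjoint_of_subset Set.inter_subset_left Set.inter_subset_left
        (hX.2.1 hne))
      (fun j => kernel_integrableOn hκ s ω (subIcc_vol_lt (hsubXU j)))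
  have hint : ∀ (C A : Set ℝ), C ⊆ Set.Icc 0 1 → A ⊆ Set.Icc 0 1 →
      IntegrableOn (inn κ C ω) A volume := fun C A hC hA =>
    inn_integrableOn hκ (subIcc_vol_lt hC) (subIcc_vol_le_one hC) ω (subIcc_vol_lt hA)
  calc rInt κ T U ω = ∫ s in T, ∑ j, inn κ (X j ∩ U) ω s :=
        integral_congr_ae (Filter.Eventually.of_forall hinn)
    _ = ∑ j, ∫ s in T, inn κ (X j ∩ U) ω s :=
        integral_finset_sum _ fun j _ => hint _ _ (hsubXU j) hTsub
    _ = ∑ j, ∑ i, rInt κ (S i ∩ T) (X j ∩ U) ω := by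
        refine Finset.sum_congr rfl fun j _ => ?_
        rw [show (∫ s in T, inn κ (X j ∩ U) ω s)
            = ∫ s in ⋃ i, (S i ∩ T), inn κ (X j ∩ U) ω s by rw [iUnion_inter_part hS hTsub]]
        exact integral_iUnion_fintype (fun i => (hS.1 i).inter hT)
          (fun i i' hne => Set.disjoint_of_subset Set.inter_subset_left Set.inter_subset_left
            (hS.2.1 hne))
          (fun i => hint _ _ (hsubXU j) (hsubST i))
    _ = ∑ i, ∑ j, rInt κ (S i ∩ T) (X j ∩ U) ω := Finset.sum_comm
end Decomp
end Refine

section Increment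
variable {k l : ℕ} {S : Fin k → Set ℝ} {X : Fin l → Set ℝ}

lemma refineP_zero {T : Set ℝ} (i : Fin k) : refineP S T (0, i) = S i ∩ T := by
  simp [refineP]

lemma refineP_one {T : Set ℝ} (i : Fin k) : refineP S T (1, i) = S i ∩ Tᶜ := by
  norm_num [refineP]

lemma sum_vol_inter_part (hS : IsPartition S) {T : Set ℝ} (hT : MeasurableSet T)
    (hTsub : T ⊆ Set.Icc 0 1) :
    ∑ i, (volume (S i ∩ T)).toReal = (volume T).toReal := by
  have h : volume (⋃ i, (S i ∩ T)) = ∑' i, volume (S i ∩ T) :=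
    measure_iUnion
      (fun i i' hne => Set.disjoint_of_subset Set.inter_subset_left Set.inter_subset_left
        (hS.2.1 hne))
      (fun i => (hS.1 i).inter hT)
  rw [iUnion_inter_part hS hTsub, tsum_fintype] at h
  have := congrArg ENNReal.toReal h
  rw [ENNReal.toReal_sum
    (fun i _ => (subIcc_vol_lt fun x hx => part_subset hS i hx.1).ne)] at this
  exact this.symm

lemma sum2_reindex {M : Type*} [AddCommMonoid M] {k l : ℕ} (F : Set ℝ → Set ℝ → M)
    (S' : Fin 2 × Fin k → Set ℝ) (X' : Fin 2 × Fin l → Set ℝ) :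
    ∑ r : Fin (2 * k), ∑ r' : Fin (2 * l),
      F (S' (finProdFinEquiv.symm r)) (X' (finProdFinEquiv.symm r'))
      = ∑ p, ∑ q, F (S' p) (X' q) := by
  have h1 : ∀ A : Set ℝ, ∑ r' : Fin (2 * l), F A (X' (finProdFinEquiv.symm r'))
      = ∑ q, F A (X' q) := fun A =>
    Equiv.sum_comp (finProdFinEquiv (m := 2) (n := l)).symm (fun q => F A (X' q))
  calc ∑ r : Fin (2 * k), ∑ r' : Fin (2 * l),
      F (S' (finProdFinEquiv.symm r)) (X' (finProdFinEquiv.symm r'))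
      = ∑ r : Fin (2 * k), ∑ q, F (S' (finProdFinEquiv.symm r)) (X' q) :=
        Finset.sum_congr rfl fun r _ => h1 _
    _ = ∑ p, ∑ q, F (S' p) (X' q) :=
        Equiv.sum_comp (finProdFinEquiv (m := 2) (n := k)).symm
          (fun p => ∑ q, F (S' p) (X' q))

lemma energy_increment (hκ : IsKernel κ) (hS : IsPartition S) (hX : IsPartition X)
    {T U : Set ℝ} (hT : MeasurableSet T) (hTsub : T ⊆ Set.Icc 0 1)
    (hU : MeasurableSet U) (hUsub : U ⊆ Set.Icc 0 1) (ω₀ : Ω) {δ : ℝ} (hδ : 0 ≤ δ)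
    (hwit : δ ≤ |∫ s in T, (∫ x in U, (κ s x ω₀ - stepKer κ S X s x ω₀))|) :
    energy κ S X + δ ^ 2 ≤ energy κ (refineF S T) (refineF X U) := by
  classical
  set P := refineP S T with hP
  set Q := refineP X U with hQ
  -- basic facts about the refined cells
  have hPsub : ∀ p : Fin 2 × Fin k, P p ⊆ Set.Icc 0 1 :=
    fun p x hx => part_subset hS p.2 hx.1
  have hQsub : ∀ q : Fin 2 × Fin l, Q q ⊆ Set.Icc 0 1 :=
    fun q x hx => part_subset hX q.2 hx.1
  -- abbreviations
  set w : Fin k → Fin l → Fin 2 × Fin 2 → ℝ := fun i j bc =>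
    (volume (P (bc.1, i))).toReal * (volume (Q (bc.2, j))).toReal with hwdef
  set A : Fin k → Fin l → Fin 2 × Fin 2 → Ω → ℝ := fun i j bc ω =>
    rInt κ (P (bc.1, i)) (Q (bc.2, j)) ω with hAdef
  have hw0 : ∀ i j bc, 0 ≤ w i j bc := fun i j bc =>
    mul_nonneg ENNReal.toReal_nonneg ENNReal.toReal_nonneg
  have hAw : ∀ i j bc ω, A i j bc ω ≤ w i j bc := fun i j bc ω =>
    rInt_le hκ (subIcc_vol_lt (hPsub _)) (subIcc_vol_lt (hQsub _)) ω
  have hA0 : ∀ i j bc ω, w i j bc = 0 → A i j bc ω = 0 := by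
    intro i j bc ω hw
    have h1 := rInt_nonneg hκ (P (bc.1, i)) (Q (bc.2, j)) ω
    have h2 := hAw i j bc ω
    rw [hw] at h2
    linarith
  -- sum of w over bc
  have hsumw : ∀ i j, ∑ bc : Fin 2 × Fin 2, w i j bc
      = (volume (S i)).toReal * (volume (X j)).toReal := by
    intro i j
    rw [Fintype.sum_prod_type]
    have e1 : ∀ b : Fin 2, ∑ c : Fin 2, w i j (b, c)
        = (volume (P (b, i))).toReal *
          ((volume (X j ∩ U)).toReal + (volume (X j ∩ Uᶜ)).toReal) := by
      intro b
      rw [Fin.sum_univ_two]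
      show (volume (P (b, i))).toReal * (volume (Q (0, j))).toReal
          + (volume (P (b, i))).toReal * (volume (Q (1, j))).toReal = _
      rw [hQ, refineP_zero, refineP_one]
      ring
    rw [Fin.sum_univ_two, e1 0, e1 1, hP, refineP_zero, refineP_one,
      vol_split (part_subset hX j) hU, ← vol_split (part_subset hS i) hT]
    ring
  -- sum of A over bc
  have hsumA : ∀ i j ω, ∑ bc : Fin 2 × Fin 2, A i j bc ω = rInt κ (S i) (X j) ω := by
    intro i j ω
    rw [Fintype.sum_prod_type, Fin.sum_univ_two]
    have e1 : ∀ b : Fin 2, ∑ c : Fin 2, A i j (b, c) ω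
        = rInt κ (P (b, i)) (X j) ω := by
      intro b
      rw [Fin.sum_univ_two]
      show rInt κ (P (b, i)) (Q (0, j)) ω + rInt κ (P (b, i)) (Q (1, j)) ω = _
      rw [hQ, refineP_zero, refineP_one]
      exact (rInt_split_right hκ (hPsub _) (part_subset hX j) (hX.1 j) hU ω).symm
    rw [e1 0, e1 1, hP, refineP_zero, refineP_one]
    exact (rInt_split_left hκ (part_subset hS i) (part_subset hX j) (hS.1 i) hT ω).symm
  -- the refined energy, reindexed
  have hre : energy κ (refineF S T) (refineF X U)
      = ∑ ω, ∑ i, ∑ j, ∑ bc : Fin 2 × Fin 2,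
          (A i j bc ω) ^ 2 / w i j bc := by
    unfold energy
    refine Finset.sum_congr rfl fun ω _ => ?_
    have h1 : ∑ r : Fin (2 * k), ∑ r' : Fin (2 * l),
        (rInt κ (refineF S T r) (refineF X U r') ω) ^ 2 /
          ((volume (refineF S T r)).toReal * (volume (refineF X U r')).toReal)
        = ∑ p : Fin 2 × Fin k, ∑ q : Fin 2 × Fin l,
        (rInt κ (P p) (Q q) ω) ^ 2 /
          ((volume (P p)).toReal * (volume (Q q)).toReal) :=
      sum2_reindex (fun C D => (rInt κ C D ω) ^ 2 /
        ((volume C).toReal * (volume D).toReal)) P Q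
    rw [h1]
    rw [Fintype.sum_prod_type (f := fun p : Fin 2 × Fin k => ∑ q : Fin 2 × Fin l,
      (rInt κ (P p) (Q q) ω) ^ 2 / ((volume (P p)).toReal * (volume (Q q)).toReal))]
    rw [Finset.sum_comm]
    refine Finset.sum_congr rfl fun i _ => ?_
    have h2 : ∀ b : Fin 2, ∑ q : Fin 2 × Fin l,
        (rInt κ (P (b, i)) (Q q) ω) ^ 2 /
          ((volume (P (b, i))).toReal * (volume (Q q)).toReal)
        = ∑ j, ∑ c : Fin 2, (A i j (b, c) ω) ^ 2 / w i j (b, c) := by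
      intro b
      rw [Fintype.sum_prod_type (f := fun q : Fin 2 × Fin l =>
        (rInt κ (P (b, i)) (Q q) ω) ^ 2 /
          ((volume (P (b, i))).toReal * (volume (Q q)).toReal))]
      rw [Finset.sum_comm]
    calc ∑ b : Fin 2, ∑ q : Fin 2 × Fin l,
          (rInt κ (P (b, i)) (Q q) ω) ^ 2 /
            ((volume (P (b, i))).toReal * (volume (Q q)).toReal)
        = ∑ b : Fin 2, ∑ j, ∑ c : Fin 2, (A i j (b, c) ω) ^ 2 / w i j (b, c) :=
          Finset.sum_congr rfl fun b _ => h2 b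
      _ = ∑ j, ∑ b : Fin 2, ∑ c : Fin 2, (A i j (b, c) ω) ^ 2 / w i j (b, c) :=
          Finset.sum_comm
      _ = ∑ j, ∑ bc : Fin 2 × Fin 2, (A i j bc ω) ^ 2 / w i j bc :=
          Finset.sum_congr rfl fun j _ => (Fintype.sum_prod_type
            (f := fun bc : Fin 2 × Fin 2 => (A i j bc ω) ^ 2 / w i j bc)).symm
  -- per-cell variance identity
  have hvar : ∀ i j ω, ∑ bc : Fin 2 × Fin 2,
      w i j bc * (A i j bc ω / w i j bc - avg κ (S i) (X j) ω) ^ 2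
      = (∑ bc : Fin 2 × Fin 2, (A i j bc ω) ^ 2 / w i j bc)
        - (rInt κ (S i) (X j) ω) ^ 2 /
          ((volume (S i)).toReal * (volume (X j)).toReal) := by
    intro i j ω
    have := variance_aux (w i j) (fun bc => A i j bc ω) (hw0 i j)
      (fun bc => hA0 i j bc ω)
    rw [hsumw i j, hsumA i j ω] at this
    rw [show avg κ (S i) (X j) ω = rInt κ (S i) (X j) ω /
      ((volume (S i)).toReal * (volume (X j)).toReal) from rfl]
    exact this
  -- total increment
  set Δ : ℝ := ∑ ω, ∑ i, ∑ j, ∑ bc : Fin 2 × Fin 2,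
      w i j bc * (A i j bc ω / w i j bc - avg κ (S i) (X j) ω) ^ 2 with hΔ
  have hEE : energy κ (refineF S T) (refineF X U) = energy κ S X + Δ := by
    rw [hre, hΔ]
    unfold energy
    rw [← Finset.sum_add_distrib]
    refine Finset.sum_congr rfl fun ω _ => ?_
    rw [← Finset.sum_add_distrib]
    refine Finset.sum_congr rfl fun i _ => ?_
    rw [← Finset.sum_add_distrib]
    refine Finset.sum_congr rfl fun j _ => ?_
    rw [hvar i j ω]
    ring
  -- the witness gives a lower bound on Δ
  have hD : ∫ s in T, (∫ x in U, (κ s x ω₀ - stepKer κ S X s x ω₀))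
      = ∑ i, ∑ j, w i j (0, 0) * (A i j (0, 0) ω₀ / w i j (0, 0)
        - avg κ (S i) (X j) ω₀) := by
    rw [diff_rect hκ hS hX hT hTsub hU hUsub ω₀]
    rw [rInt_decomp hκ hS hX hT hTsub hU hUsub ω₀]
    rw [← Finset.sum_sub_distrib]
    refine Finset.sum_congr rfl fun i _ => ?_
    rw [← Finset.sum_sub_distrib]
    refine Finset.sum_congr rfl fun j _ => ?_
    have hw00 : w i j (0, 0) = (volume (S i ∩ T)).toReal * (volume (X j ∩ U)).toReal := by
      rw [hwdef]
      show (volume (P (0, i))).toReal * (volume (Q (0, j))).toReal = _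
      rw [hP, hQ, refineP_zero, refineP_zero]
    have hA00 : A i j (0, 0) ω₀ = rInt κ (S i ∩ T) (X j ∩ U) ω₀ := by
      rw [hAdef]
      show rInt κ (P (0, i)) (Q (0, j)) ω₀ = _
      rw [hP, hQ, refineP_zero, refineP_zero]
    rw [hw00, hA00, Set.inter_comm T (S i), Set.inter_comm U (X j)]
    by_cases hz : (volume (S i ∩ T)).toReal * (volume (X j ∩ U)).toReal = 0
    · have hv1 : volume (S i ∩ T) < ⊤ :=
        subIcc_vol_lt fun x (hx : x ∈ S i ∩ T) => part_subset hS i hx.1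
      have hv2 : volume (X j ∩ U) < ⊤ :=
        subIcc_vol_lt fun x (hx : x ∈ X j ∩ U) => part_subset hX j hx.1
      have hz0 : rInt κ (S i ∩ T) (X j ∩ U) ω₀ = 0 := by
        have h1 := rInt_nonneg hκ (S i ∩ T) (X j ∩ U) ω₀
        have h2 := rInt_le hκ hv1 hv2 ω₀
        rw [hz] at h2
        linarith
      rcases mul_eq_zero.1 hz with h | h <;> rw [hz0, h] <;> simp
    · have ha := left_ne_zero_of_mul hz; have hb := right_ne_zero_of_mul hz; field_simp
  have hCS : δ ^ 2 ≤ ∑ i, ∑ j, w i j (0, 0) * (A i j (0, 0) ω₀ / w i j (0, 0)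
      - avg κ (S i) (X j) ω₀) ^ 2 := by
    set dv : Fin k × Fin l → ℝ := fun ij =>
      A ij.1 ij.2 (0, 0) ω₀ / w ij.1 ij.2 (0, 0) - avg κ (S ij.1) (X ij.2) ω₀ with hdv
    set wf : Fin k × Fin l → ℝ := fun ij => w ij.1 ij.2 (0, 0) with hwf
    have hD2 : (∑ ij : Fin k × Fin l, wf ij * dv ij)
        = ∑ i, ∑ j, w i j (0, 0) * (A i j (0, 0) ω₀ / w i j (0, 0)
          - avg κ (S i) (X j) ω₀) := by
      rw [Fintype.sum_prod_type]
    have hCS0 : (∑ ij : Fin k × Fin l, wf ij * dv ij) ^ 2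
        ≤ (∑ ij : Fin k × Fin l, wf ij) * ∑ ij : Fin k × Fin l, wf ij * dv ij ^ 2 := by
      have h := Finset.sum_mul_sq_le_sq_mul_sq Finset.univ
        (fun ij => Real.sqrt (wf ij)) (fun ij => Real.sqrt (wf ij) * dv ij)
      have e1 : ∀ ij : Fin k × Fin l,
          Real.sqrt (wf ij) * (Real.sqrt (wf ij) * dv ij) = wf ij * dv ij := by
        intro ij
        rw [← mul_assoc, Real.mul_self_sqrt (hw0 ij.1 ij.2 (0, 0))]
      have e2 : ∀ ij : Fin k × Fin l, Real.sqrt (wf ij) ^ 2 = wf ij :=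
        fun ij => Real.sq_sqrt (hw0 ij.1 ij.2 (0, 0))
      have e3 : ∀ ij : Fin k × Fin l,
          (Real.sqrt (wf ij) * dv ij) ^ 2 = wf ij * dv ij ^ 2 := by
        intro ij
        rw [mul_pow, e2 ij]
      calc (∑ ij : Fin k × Fin l, wf ij * dv ij) ^ 2
          = (∑ ij : Fin k × Fin l, Real.sqrt (wf ij) * (Real.sqrt (wf ij) * dv ij)) ^ 2 := by
            rw [Finset.sum_congr rfl fun ij _ => (e1 ij).symm]
        _ ≤ (∑ ij : Fin k × Fin l, Real.sqrt (wf ij) ^ 2) *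
            ∑ ij : Fin k × Fin l, (Real.sqrt (wf ij) * dv ij) ^ 2 := h
        _ = (∑ ij : Fin k × Fin l, wf ij) * ∑ ij : Fin k × Fin l, wf ij * dv ij ^ 2 := by
            rw [Finset.sum_congr rfl fun ij _ => e2 ij,
              Finset.sum_congr rfl fun ij _ => e3 ij]
    have hwf1 : (∑ ij : Fin k × Fin l, wf ij) ≤ 1 := by
      rw [Fintype.sum_prod_type]
      have : ∑ i, ∑ j, wf (i, j)
          = (∑ i, (volume (S i ∩ T)).toReal) * (∑ j, (volume (X j ∩ U)).toReal) := by
        rw [Finset.sum_mul_sum]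
        refine Finset.sum_congr rfl fun i _ => Finset.sum_congr rfl fun j _ => ?_
        rw [hwf, hwdef]
        show (volume (P (0, i))).toReal * (volume (Q (0, j))).toReal = _
        rw [hP, hQ, refineP_zero, refineP_zero]
      rw [this, sum_vol_inter_part hS hT hTsub, sum_vol_inter_part hX hU hUsub]
      exact mul_le_one₀ (subIcc_vol_le_one hTsub) ENNReal.toReal_nonneg
        (subIcc_vol_le_one hUsub)
    have hδ2 : δ ^ 2 ≤ (∑ ij : Fin k × Fin l, wf ij * dv ij) ^ 2 := by
      rw [hD2, ← hD]
      calc δ ^ 2 ≤ |∫ s in T, (∫ x in U, (κ s x ω₀ - stepKer κ S X s x ω₀))| ^ 2 :=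
            pow_le_pow_left₀ hδ hwit 2
        _ = (∫ s in T, (∫ x in U, (κ s x ω₀ - stepKer κ S X s x ω₀))) ^ 2 := sq_abs _
    have hsum_nonneg : ∀ ij : Fin k × Fin l, 0 ≤ wf ij * dv ij ^ 2 :=
      fun ij => mul_nonneg (hw0 ij.1 ij.2 (0, 0)) (sq_nonneg _)
    calc δ ^ 2 ≤ (∑ ij : Fin k × Fin l, wf ij * dv ij) ^ 2 := hδ2
      _ ≤ (∑ ij : Fin k × Fin l, wf ij) * ∑ ij : Fin k × Fin l, wf ij * dv ij ^ 2 := hCS0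
      _ ≤ 1 * ∑ ij : Fin k × Fin l, wf ij * dv ij ^ 2 := by
          refine mul_le_mul_of_nonneg_right hwf1 ?_
          exact Finset.sum_nonneg fun ij _ => hsum_nonneg ij
      _ = ∑ ij : Fin k × Fin l, wf ij * dv ij ^ 2 := one_mul _
      _ = ∑ i, ∑ j, w i j (0, 0) * (A i j (0, 0) ω₀ / w i j (0, 0)
            - avg κ (S i) (X j) ω₀) ^ 2 := by rw [Fintype.sum_prod_type]
  -- Δ dominates the ω₀, (0,0) contribution
  have hΔge : δ ^ 2 ≤ Δ := by
    have hterm_nonneg : ∀ (ω : Ω) (i : Fin k) (j : Fin l) (bc : Fin 2 × Fin 2),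
        0 ≤ w i j bc * (A i j bc ω / w i j bc - avg κ (S i) (X j) ω) ^ 2 :=
      fun ω i j bc => mul_nonneg (hw0 i j bc) (sq_nonneg _)
    have h1 : ∑ i, ∑ j, w i j (0, 0) * (A i j (0, 0) ω₀ / w i j (0, 0)
        - avg κ (S i) (X j) ω₀) ^ 2
        ≤ ∑ i, ∑ j, ∑ bc : Fin 2 × Fin 2,
          w i j bc * (A i j bc ω₀ / w i j bc - avg κ (S i) (X j) ω₀) ^ 2 := by
      refine Finset.sum_le_sum fun i _ => Finset.sum_le_sum fun j _ => ?_
      exact Finset.single_le_sum (fun bc _ => hterm_nonneg ω₀ i j bc)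
        (Finset.mem_univ ((0 : Fin 2), (0 : Fin 2)))
    have h2 : ∑ i, ∑ j, ∑ bc : Fin 2 × Fin 2,
        w i j bc * (A i j bc ω₀ / w i j bc - avg κ (S i) (X j) ω₀) ^ 2 ≤ Δ := by
      rw [hΔ]
      refine Finset.single_le_sum (f := fun ω => ∑ i, ∑ j, ∑ bc : Fin 2 × Fin 2,
        w i j bc * (A i j bc ω / w i j bc - avg κ (S i) (X j) ω) ^ 2)
        (fun ω _ => ?_) (Finset.mem_univ ω₀)
      exact Finset.sum_nonneg fun i _ => Finset.sum_nonneg fun j _ =>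
        Finset.sum_nonneg fun bc _ => hterm_nonneg ω i j bc
    linarith [hCS]
  rw [hEE]
  linarith
end Increment

lemma regularity_induction (hκ : IsKernel κ) (ε : ℝ) (hε : 0 < ε) : ∀ n : ℕ,
    ∀ (k l : ℕ) (S : Fin k → Set ℝ) (X : Fin l → Set ℝ), IsPartition S → IsPartition X →
    1 ≤ energy κ S X + (n : ℝ) * (ε / 2) ^ 2 →
    ∃ (k' l' : ℕ) (S' : Fin k' → Set ℝ) (X' : Fin l' → Set ℝ),
      IsPartition S' ∧ IsPartition X' ∧ k' ≤ 2 ^ n * k ∧ l' ≤ 2 ^ n * l ∧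
      cutFK κ (stepKer κ S' X') < ε := by
  intro n
  induction n with
  | zero =>
    intro k l S X hS hX hE
    by_cases hcut : ∃ T U : Set ℝ, MeasurableSet T ∧ MeasurableSet U ∧
        T ⊆ Set.Icc 0 1 ∧ U ⊆ Set.Icc 0 1 ∧ ∃ ω : Ω,
        ε / 2 ≤ |∫ s in T, (∫ x in U, (κ s x ω - stepKer κ S X s x ω))|
    · obtain ⟨T, U, hT, hU, hTsub, hUsub, ω₀, hwit⟩ := hcut
      have hinc := energy_increment hκ hS hX hT hTsub hU hUsub ω₀
        (by positivity : (0:ℝ) ≤ ε / 2) hwit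
      have hle1 := energy_le_one hκ (refineF_isPartition hS hT) (refineF_isPartition hX hU)
      have : (0:ℝ) < (ε / 2) ^ 2 := by positivity
      simp only [Nat.cast_zero, zero_mul, add_zero] at hE
      exact absurd rfl (by intro _; linarith : ¬(0 = 0))
    · push_neg at hcut
      refine ⟨k, l, S, X, hS, hX, by simpa using Nat.le_refl k, by simpa using Nat.le_refl l, ?_⟩
      have hle : cutFK κ (stepKer κ S X) ≤ ε / 2 := by
        refine Real.sSup_le ?_ (by positivity)
        rintro d ⟨T, U, hT, hU, hTsub, hUsub, ω, rfl⟩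
        exact le_of_lt (hcut T U hT hU hTsub hUsub ω)
      linarith
  | succ n ih =>
    intro k l S X hS hX hE
    by_cases hcut : ∃ T U : Set ℝ, MeasurableSet T ∧ MeasurableSet U ∧
        T ⊆ Set.Icc 0 1 ∧ U ⊆ Set.Icc 0 1 ∧ ∃ ω : Ω,
        ε / 2 ≤ |∫ s in T, (∫ x in U, (κ s x ω - stepKer κ S X s x ω))|
    · obtain ⟨T, U, hT, hU, hTsub, hUsub, ω₀, hwit⟩ := hcut
      have hinc := energy_increment hκ hS hX hT hTsub hU hUsub ω₀
        (by positivity : (0:ℝ) ≤ ε / 2) hwit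
      have hE' : 1 ≤ energy κ (refineF S T) (refineF X U) + (n : ℝ) * (ε / 2) ^ 2 := by
        push_cast at hE
        linarith
      obtain ⟨k', l', S', X', hS', hX', hk', hl', hcut'⟩ :=
        ih (2 * k) (2 * l) (refineF S T) (refineF X U)
          (refineF_isPartition hS hT) (refineF_isPartition hX hU) hE'
      refine ⟨k', l', S', X', hS', hX', ?_, ?_, hcut'⟩
      · calc k' ≤ 2 ^ n * (2 * k) := hk'
          _ = 2 ^ (n + 1) * k := by ring
      · calc l' ≤ 2 ^ n * (2 * l) := hl'
          _ = 2 ^ (n + 1) * l := by ring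
    · push_neg at hcut
      have hkp : k ≤ 2 ^ (n + 1) * k := Nat.le_mul_of_pos_left k (Nat.pow_pos two_pos)
      have hlp : l ≤ 2 ^ (n + 1) * l := Nat.le_mul_of_pos_left l (Nat.pow_pos two_pos)
      refine ⟨k, l, S, X, hS, hX, hkp, hlp, ?_⟩
      have hle : cutFK κ (stepKer κ S X) ≤ ε / 2 := by
        refine Real.sSup_le ?_ (by positivity)
        rintro d ⟨T, U, hT, hU, hTsub, hUsub, ω, rfl⟩
        exact le_of_lt (hcut T U hT hU hTsub hUsub ω)
      linarith
end Dev

/-- Theorem (weak regularity for kernels): there is `c = c(Ω) > 0` such that for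
every `ε ∈ (0,1)` and every kernel `κ : [0,1]² → P(Ω)` there are partitions
`S = (S_1,…,S_k)`, `X = (X_1,…,X_ℓ)` of `[0,1]` with `k + ℓ ≤ exp(c/ε²)` and
`D_⧠(κ, κ^{S,X}) < ε`. -/
theorem kernel_weak_regularity {Ω : Type*} [Fintype Ω] :
    ∃ c : ℝ, 0 < c ∧ ∀ ε : ℝ, 0 < ε → ε < 1 → ∀ κ : ℝ → ℝ → Ω → ℝ, IsKernel κ →
      ∃ (k ℓ : ℕ) (S : Fin k → Set ℝ) (X : Fin ℓ → Set ℝ),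
        IsPartition S ∧ IsPartition X ∧ ((k + ℓ : ℕ) : ℝ) ≤ Real.exp (c / ε ^ 2) ∧
        cutFK κ (stepKer κ S X) < ε := by
  refine ⟨5, by norm_num, ?_⟩
  intro ε hε hε1 κ hκ
  set n : ℕ := ⌈(4:ℝ) / ε ^ 2⌉₊ with hn
  -- trivial partitions
  have htriv : IsPartition (fun _ : Fin 1 => Set.Icc (0:ℝ) 1) := by
    refine ⟨fun _ => measurableSet_Icc, ?_, ?_⟩
    · intro i j hij
      exact absurd (Subsingleton.elim i j) hij
    · exact Set.iUnion_const _
  have hE : 1 ≤ energy κ (fun _ : Fin 1 => Set.Icc (0:ℝ) 1)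
      (fun _ : Fin 1 => Set.Icc (0:ℝ) 1) + (n : ℝ) * (ε / 2) ^ 2 := by
    have h1 : (4:ℝ) / ε ^ 2 ≤ (n : ℝ) := Nat.le_ceil _
    have h2 : (0:ℝ) < ε ^ 2 := by positivity
    have h3 : (4 / ε ^ 2) * (ε / 2) ^ 2 = 1 := by field_simp; ring
    have h4 : 1 ≤ (n : ℝ) * (ε / 2) ^ 2 := by
      rw [← h3]
      exact mul_le_mul_of_nonneg_right h1 (by positivity)
    have h5 := energy_nonneg (S := fun _ : Fin 1 => Set.Icc (0:ℝ) 1)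
      (X := fun _ : Fin 1 => Set.Icc (0:ℝ) 1) hκ
    linarith
  obtain ⟨k, l, S, X, hS, hX, hk, hl, hcut⟩ :=
    regularity_induction hκ ε hε n 1 1 _ _ htriv htriv hE
  refine ⟨k, l, S, X, hS, hX, ?_, hcut⟩
  have hk2 : (k : ℝ) ≤ 2 ^ n := by
    have := hk
    simp only [mul_one] at this
    exact_mod_cast this
  have hl2 : (l : ℝ) ≤ 2 ^ n := by
    have := hl
    simp only [mul_one] at this
    exact_mod_cast this
  have hkl : ((k + l : ℕ) : ℝ) ≤ 2 ^ (n + 1) := by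
    push_cast
    rw [pow_succ]
    linarith
  refine le_trans hkl ?_
  -- 2 ^ (n+1) ≤ exp (5 / ε²)
  have hpow : (2:ℝ) ^ (n + 1) = Real.exp (((n + 1 : ℕ) : ℝ) * Real.log 2) := by
    rw [← Real.log_pow, Real.exp_log (by positivity)]
  rw [hpow, Real.exp_le_exp]
  push_cast
  have hE2 : (0:ℝ) < ε ^ 2 := by positivity
  have hE2le : ε ^ 2 ≤ 1 := by nlinarith
  have hnle : (n : ℝ) < 4 / ε ^ 2 + 1 := Nat.ceil_lt_add_one (by positivity)
  have hlog : Real.log 2 < 0.7 := lt_trans Real.log_two_lt_d9 (by norm_num)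
  have hlogpos : 0 < Real.log 2 := Real.log_pos (by norm_num)
  have hinv : 1 ≤ 1 / ε ^ 2 := by
    rw [le_div_iff₀ hE2]
    linarith
  have hn2 : (n : ℝ) + 1 ≤ 6 / ε ^ 2 := by
    have : 4 / ε ^ 2 + 2 ≤ 6 / ε ^ 2 := by
      have h2 : (2:ℝ) ≤ 2 / ε ^ 2 := by
        rw [le_div_iff₀ hE2]
        nlinarith
      have : (4:ℝ) / ε ^ 2 + 2 / ε ^ 2 = 6 / ε ^ 2 := by ring
      linarith
    linarith
  calc ((n : ℝ) + 1) * Real.log 2 ≤ (6 / ε ^ 2) * Real.log 2 :=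
        mul_le_mul_of_nonneg_right hn2 (le_of_lt hlogpos)
    _ ≤ (6 / ε ^ 2) * 0.7 := mul_le_mul_of_nonneg_left (le_of_lt hlog) (by positivity)
    _ ≤ 5 / ε ^ 2 := by
        rw [div_mul_eq_mul_div, div_le_div_iff₀ hE2 hE2]
        nlinarith
end

section
/- Let R, S be finite measurable partitions of [0,1] such that R refines S, and let κ : [0,1]² → [0,1] be symmetric and measurable. Then D_⧠(κ, κ^R) ≤ 2 D_⧠(κ, κ^S), where κ^P denotes the conditional expectation (stepping) of κ with respect to the rectangles of partition P. -/
open scoped BigOperators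
open MeasureTheory

open Classical in
/-- The stepping `κ^P` of a real-valued kernel with respect to the rectangles of a
partition `P` (conditional expectation over rectangles of positive measure). -/
noncomputable def stepR {m : ℕ} (W : ℝ → ℝ → ℝ) (P : Fin m → Set ℝ) : ℝ → ℝ → ℝ :=
  fun s x => ∑ i, ∑ j, if s ∈ P i ∧ x ∈ P j then
    (∫ t in P i, (∫ y in P j, W t y)) /
      ((volume (P i)).toReal * (volume (P j)).toReal)
  else 0

/-- The cut distance (cut norm of the difference) between real-valued kernels. -/
noncomputable def cutFKR (W W' : ℝ → ℝ → ℝ) : ℝ :=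
  sSup { d | ∃ S X : Set ℝ, MeasurableSet S ∧ MeasurableSet X ∧
    S ⊆ Set.Icc 0 1 ∧ X ⊆ Set.Icc 0 1 ∧
    d = |∫ s in S, (∫ x in X, (W s x - W' s x))| }

section Auxiliary

open scoped ENNReal

/-- Rounding a linear form with `[0,1]` coefficients to a vertex of the cube. -/
lemma roundLin {n : ℕ} (α v : Fin n → ℝ) (h0 : ∀ i, 0 ≤ α i) (h1 : ∀ i, α i ≤ 1) :
    ∃ A : Finset (Fin n), |∑ i, α i * v i| ≤ |∑ i ∈ A, v i| := by
  classical
  rcases le_total 0 (∑ i, α i * v i) with h | h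
  · refine ⟨Finset.univ.filter (fun i => 0 ≤ v i), ?_⟩
    have hA : (0:ℝ) ≤ ∑ i ∈ Finset.univ.filter (fun i => 0 ≤ v i), v i :=
      Finset.sum_nonneg fun i hi => (Finset.mem_filter.1 hi).2
    rw [abs_of_nonneg h, abs_of_nonneg hA]
    have h2 : ∑ i, α i * v i ≤ ∑ i ∈ Finset.univ.filter (fun i => 0 ≤ v i), α i * v i := by
      have hsplit := Finset.sum_filter_add_sum_filter_not Finset.univ (fun i => 0 ≤ v i)
        (fun i => α i * v i)
      have hneg : ∑ i ∈ Finset.univ.filter (fun i => ¬ 0 ≤ v i), α i * v i ≤ 0 :=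
        Finset.sum_nonpos fun i hi => mul_nonpos_of_nonneg_of_nonpos (h0 i)
          (le_of_lt (lt_of_not_ge (Finset.mem_filter.1 hi).2))
      linarith
    exact h2.trans (Finset.sum_le_sum fun i hi =>
      mul_le_of_le_one_left (Finset.mem_filter.1 hi).2 (h1 i))
  · refine ⟨Finset.univ.filter (fun i => v i ≤ 0), ?_⟩
    have hA : ∑ i ∈ Finset.univ.filter (fun i => v i ≤ 0), v i ≤ 0 :=
      Finset.sum_nonpos fun i hi => (Finset.mem_filter.1 hi).2
    rw [abs_of_nonpos h, abs_of_nonpos hA]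
    have h2 : ∑ i ∈ Finset.univ.filter (fun i => v i ≤ 0), α i * v i ≤ ∑ i, α i * v i := by
      have hsplit := Finset.sum_filter_add_sum_filter_not Finset.univ (fun i => v i ≤ 0)
        (fun i => α i * v i)
      have hpos : 0 ≤ ∑ i ∈ Finset.univ.filter (fun i => ¬ v i ≤ 0), α i * v i :=
        Finset.sum_nonneg fun i hi => mul_nonneg (h0 i)
          (le_of_lt (lt_of_not_ge (Finset.mem_filter.1 hi).2))
      linarith
    have h3 : ∑ i ∈ Finset.univ.filter (fun i => v i ≤ 0), v i ≤
        ∑ i ∈ Finset.univ.filter (fun i => v i ≤ 0), α i * v i :=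
      Finset.sum_le_sum fun i hi => le_mul_of_le_one_left (Finset.mem_filter.1 hi).2 (h1 i)
    linarith

lemma alg_key (aI rI bJ rJ vS K : ℝ) (h1 : 0 ≤ aI) (h2 : aI ≤ rI) (h3 : 0 ≤ bJ) (h4 : bJ ≤ rJ) :
    aI * (bJ * (vS - K / (rI * rJ))) = aI / rI * (bJ / rJ * (rI * (rJ * vS) - K)) := by
  rcases eq_or_ne rI 0 with hrI | hrI
  · have haI : aI = 0 := le_antisymm (hrI ▸ h2) h1
    simp [haI, hrI]
  rcases eq_or_ne rJ 0 with hrJ | hrJ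
  · have hbJ : bJ = 0 := le_antisymm (hrJ ▸ h4) h3
    simp [hbJ, hrJ]
  rw [div_eq_mul_inv, div_eq_mul_inv, div_eq_mul_inv, mul_inv]
  have e1 : rI * rI⁻¹ = 1 := mul_inv_cancel₀ hrI
  have e2 : rJ * rJ⁻¹ = 1 := mul_inv_cancel₀ hrJ
  calc aI * (bJ * (vS - K * (rI⁻¹ * rJ⁻¹)))
      = (rI * rI⁻¹) * ((rJ * rJ⁻¹) * (aI * (bJ * vS))) - aI * (bJ * (K * (rI⁻¹ * rJ⁻¹))) := by
        rw [e1, e2]; ring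
    _ = aI * rI⁻¹ * (bJ * rJ⁻¹ * (rI * (rJ * vS) - K)) := by ring

lemma vol_lt_top {V : Set ℝ} (hV : V ⊆ Set.Icc 0 1) : volume V < ⊤ := by
  have h1 : volume V ≤ volume (Set.Icc (0:ℝ) 1) := measure_mono hV
  have h2 : volume (Set.Icc (0:ℝ) 1) = 1 := by simp [Real.volume_Icc]
  rw [h2] at h1
  exact lt_of_le_of_lt h1 ENNReal.one_lt_top

lemma vol_toReal_le_one {V : Set ℝ} (hV : V ⊆ Set.Icc 0 1) : (volume V).toReal ≤ 1 := by
  have h1 : volume V ≤ 1 := by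
    have := measure_mono (μ := volume) hV
    simpa [Real.volume_Icc] using this
  calc (volume V).toReal ≤ (1:ℝ≥0∞).toReal := ENNReal.toReal_mono (by simp) h1
  _ = 1 := by simp

lemma integrableOn_of_bdd {f : ℝ → ℝ} {V : Set ℝ} (hf : Measurable f)
    (hV : volume V < ⊤) {C : ℝ} (hC : ∀ x, |f x| ≤ C) : IntegrableOn f V volume :=
  Integrable.mono' (integrableOn_const hV.ne) hf.aestronglyMeasurable.restrict
    (Filter.Eventually.of_forall fun x => by simpa using hC x)

section Kernel
variable {F : ℝ → ℝ → ℝ}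

lemma meas_section (hF : Measurable fun p : ℝ × ℝ => F p.1 p.2) (s : ℝ) :
    Measurable (F s) :=
  hF.comp measurable_prodMk_left

lemma meas_inner (hF : Measurable fun p : ℝ × ℝ => F p.1 p.2) (U : Set ℝ) :
    Measurable fun s => ∫ x in U, F s x := by
  have h : StronglyMeasurable (Function.uncurry F) := hF.stronglyMeasurable
  exact (MeasureTheory.StronglyMeasurable.integral_prod_right
    (ν := volume.restrict U) h).measurable

lemma inner_bound (hF : Measurable fun p : ℝ × ℝ => F p.1 p.2)
    {C : ℝ} (hC : ∀ s x, |F s x| ≤ C) {U : Set ℝ} (hU : U ⊆ Set.Icc 0 1) (s : ℝ) :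
    |∫ x in U, F s x| ≤ C := by
  have hC0 : 0 ≤ C := (abs_nonneg _).trans (hC 0 0)
  have h := norm_setIntegral_le_of_norm_le_const (μ := volume) (f := F s) (vol_lt_top hU)
      (fun x _ => by simpa using hC s x)
  rw [Real.norm_eq_abs] at h
  calc |∫ x in U, F s x| ≤ C * (volume U).toReal := h
  _ ≤ C * 1 := mul_le_mul_of_nonneg_left (vol_toReal_le_one hU) hC0
  _ = C := mul_one C

lemma integrable_inner (hF : Measurable fun p : ℝ × ℝ => F p.1 p.2)
    {C : ℝ} (hC : ∀ s x, |F s x| ≤ C) {T U : Set ℝ}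
    (hT : volume T < ⊤) (hU : U ⊆ Set.Icc 0 1) :
    IntegrableOn (fun s => ∫ x in U, F s x) T volume :=
  integrableOn_of_bdd (meas_inner hF U) hT (fun s => inner_bound hF hC hU s)

lemma double_bound (hF : Measurable fun p : ℝ × ℝ => F p.1 p.2)
    {C : ℝ} (hC : ∀ s x, |F s x| ≤ C) {T U : Set ℝ}
    (hT : T ⊆ Set.Icc 0 1) (hU : U ⊆ Set.Icc 0 1) :
    |∫ s in T, ∫ x in U, F s x| ≤ C := by
  have hC0 : 0 ≤ C := (abs_nonneg _).trans (hC 0 0)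
  have h := norm_setIntegral_le_of_norm_le_const (μ := volume)
      (f := fun s => ∫ x in U, F s x) (vol_lt_top hT)
      (fun s _ => by simpa using inner_bound hF hC hU s)
  rw [Real.norm_eq_abs] at h
  calc |∫ s in T, ∫ x in U, F s x| ≤ C * (volume T).toReal := h
  _ ≤ C * 1 := mul_le_mul_of_nonneg_left (vol_toReal_le_one hT) hC0
  _ = C := mul_one C

end Kernel

lemma double_sub {F G : ℝ → ℝ → ℝ}
    (hF : Measurable fun p : ℝ × ℝ => F p.1 p.2) (hG : Measurable fun p : ℝ × ℝ => G p.1 p.2)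
    {CF CG : ℝ} (hCF : ∀ s x, |F s x| ≤ CF) (hCG : ∀ s x, |G s x| ≤ CG)
    {T U : Set ℝ} (hT : T ⊆ Set.Icc 0 1) (hU : U ⊆ Set.Icc 0 1) :
    ∫ s in T, ∫ x in U, (F s x - G s x) =
      (∫ s in T, ∫ x in U, F s x) - ∫ s in T, ∫ x in U, G s x := by
  have hUt := vol_lt_top hU
  have hTt := vol_lt_top hT
  have h1 : ∀ s, ∫ x in U, (F s x - G s x) = (∫ x in U, F s x) - ∫ x in U, G s x := fun s =>
    integral_sub (integrableOn_of_bdd (meas_section hF s) hUt (hCF s))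
      (integrableOn_of_bdd (meas_section hG s) hUt (hCG s))
  simp only [h1]
  exact integral_sub (integrable_inner hF hCF hTt hU) (integrable_inner hG hCG hTt hU)

lemma single_decomp {m : ℕ} {P : Fin m → Set ℝ}
    (hPm : ∀ i, MeasurableSet (P i)) (hPd : Pairwise fun i j => Disjoint (P i) (P j))
    (hPu : (⋃ i, P i) = Set.Icc 0 1)
    {g : ℝ → ℝ} (hg : Measurable g) {C : ℝ} (hC : ∀ x, |g x| ≤ C)
    {V : Set ℝ} (hVm : MeasurableSet V) (hV : V ⊆ Set.Icc 0 1) :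
    ∫ x in V, g x = ∑ i, ∫ x in V ∩ P i, g x := by
  have hV' : V = ⋃ i, V ∩ P i := by
    rw [← Set.inter_iUnion, hPu]
    exact (Set.inter_eq_left.mpr hV).symm
  have h2 : ∫ x in ⋃ i, V ∩ P i, g x = ∑' i, ∫ x in V ∩ P i, g x :=
    integral_iUnion (fun i => hVm.inter (hPm i))
      (hPd.mono fun i j h => h.mono Set.inter_subset_right Set.inter_subset_right)
      ((integrableOn_of_bdd hg (vol_lt_top hV) hC).mono_set
        (Set.iUnion_subset fun i => Set.inter_subset_left))
  rw [← hV'] at h2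
  rw [h2, tsum_fintype]

lemma double_decomp {m : ℕ} {P : Fin m → Set ℝ}
    (hPm : ∀ i, MeasurableSet (P i)) (hPd : Pairwise fun i j => Disjoint (P i) (P j))
    (hPu : (⋃ i, P i) = Set.Icc 0 1)
    {F : ℝ → ℝ → ℝ} (hF : Measurable fun p : ℝ × ℝ => F p.1 p.2)
    {C : ℝ} (hC : ∀ s x, |F s x| ≤ C)
    {T U : Set ℝ} (hTm : MeasurableSet T) (hUm : MeasurableSet U)
    (hT : T ⊆ Set.Icc 0 1) (hU : U ⊆ Set.Icc 0 1) :
    ∫ s in T, ∫ x in U, F s x = ∑ i, ∑ j, ∫ s in T ∩ P i, ∫ x in U ∩ P j, F s x := by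
  have hstep1 : ∀ s, ∫ x in U, F s x = ∑ j, ∫ x in U ∩ P j, F s x := fun s =>
    single_decomp hPm hPd hPu (meas_section hF s) (hC s) hUm hU
  calc ∫ s in T, ∫ x in U, F s x = ∫ s in T, ∑ j, ∫ x in U ∩ P j, F s x := by
        simp only [hstep1]
    _ = ∑ j, ∫ s in T, ∫ x in U ∩ P j, F s x :=
        integral_finset_sum _ (fun j _ => integrable_inner hF hC (vol_lt_top hT)
          (Set.inter_subset_left.trans hU))
    _ = ∑ j, ∑ i, ∫ s in T ∩ P i, ∫ x in U ∩ P j, F s x := Finset.sum_congr rfl fun j _ =>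
        single_decomp hPm hPd hPu (meas_inner hF _)
          (fun s => inner_bound hF hC (Set.inter_subset_left.trans hU) s) hTm hT
    _ = ∑ i, ∑ j, ∫ s in T ∩ P i, ∫ x in U ∩ P j, F s x := Finset.sum_comm

lemma stepR_eq_of_mem {m : ℕ} {W : ℝ → ℝ → ℝ} {P : Fin m → Set ℝ}
    (hPd : Pairwise fun i j => Disjoint (P i) (P j)) {s x : ℝ} {a b : Fin m}
    (hs : s ∈ P a) (hx : x ∈ P b) :
    stepR W P s x =
      (∫ t in P a, (∫ y in P b, W t y)) / ((volume (P a)).toReal * (volume (P b)).toReal) := by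
  classical
  unfold stepR
  rw [Finset.sum_eq_single a]
  · rw [Finset.sum_eq_single b]
    · rw [if_pos ⟨hs, hx⟩]
    · intro j _ hj
      rw [if_neg]
      rintro ⟨-, hxj⟩
      exact Set.disjoint_left.mp (hPd hj) hxj hx
    · intro h; exact absurd (Finset.mem_univ b) h
  · intro i _ hi
    refine Finset.sum_eq_zero fun j _ => ?_
    rw [if_neg]
    rintro ⟨hsi, -⟩
    exact Set.disjoint_left.mp (hPd hi) hsi hs
  · intro h; exact absurd (Finset.mem_univ a) h

/-- A crude uniform bound on the values of a step function. -/
noncomputable def stepBound {m : ℕ} (W : ℝ → ℝ → ℝ) (P : Fin m → Set ℝ) : ℝ :=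
  ∑ i, ∑ j, |(∫ t in P i, (∫ y in P j, W t y)) /
      ((volume (P i)).toReal * (volume (P j)).toReal)|

lemma abs_stepR_le {m : ℕ} (W : ℝ → ℝ → ℝ) (P : Fin m → Set ℝ) (s x : ℝ) :
    |stepR W P s x| ≤ stepBound W P := by
  classical
  unfold stepR stepBound
  refine (Finset.abs_sum_le_sum_abs _ _).trans (Finset.sum_le_sum fun i _ => ?_)
  refine (Finset.abs_sum_le_sum_abs _ _).trans (Finset.sum_le_sum fun j _ => ?_)
  split
  · exact le_refl _
  · simp [abs_nonneg]

lemma measurable_stepR {m : ℕ} (W : ℝ → ℝ → ℝ) {P : Fin m → Set ℝ}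
    (hPm : ∀ i, MeasurableSet (P i)) :
    Measurable fun p : ℝ × ℝ => stepR W P p.1 p.2 := by
  classical
  unfold stepR
  refine Finset.measurable_sum _ fun i _ => Finset.measurable_sum _ fun j _ => ?_
  exact Measurable.ite ((hPm i).prod (hPm j)) measurable_const measurable_const

lemma double_const {F : ℝ → ℝ → ℝ} {A B : Set ℝ} (hA : MeasurableSet A) (hB : MeasurableSet B)
    {v : ℝ} (hv : ∀ s ∈ A, ∀ x ∈ B, F s x = v) :
    ∫ s in A, ∫ x in B, F s x = (volume A).toReal * ((volume B).toReal * v) := by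
  have h1 : ∫ s in A, ∫ x in B, F s x = ∫ s in A, ((volume B).toReal * v : ℝ) := by
    refine setIntegral_congr_fun hA fun s hs => ?_
    have h2 : ∫ x in B, F s x = ∫ x in B, v :=
      setIntegral_congr_fun hB fun x hx => hv s hs x hx
    rw [h2, setIntegral_const, smul_eq_mul]; rfl
  rw [h1, setIntegral_const, smul_eq_mul]; rfl

/-- Key step: the cut-norm pairing of `κ^S - κ^R` against any pair of sets is dominated
by the pairing of `κ^S - κ` against a union of parts of `R`. -/
lemma term2 {m k : ℕ} {R : Fin m → Set ℝ} {S : Fin k → Set ℝ}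
    (hRm : ∀ i, MeasurableSet (R i)) (hRd : Pairwise fun i j => Disjoint (R i) (R j))
    (hRu : (⋃ i, R i) = Set.Icc 0 1)
    (hSd : Pairwise fun i j => Disjoint (S i) (S j))
    (σ : Fin m → Fin k) (hσ : ∀ i, R i ⊆ S (σ i))
    {κ : ℝ → ℝ → ℝ} (hmeas : Measurable fun p : ℝ × ℝ => κ p.1 p.2)
    (hκb : ∀ s x, |κ s x| ≤ 1)
    (hmS : Measurable fun p : ℝ × ℝ => stepR κ S p.1 p.2)
    {BS : ℝ} (hSb : ∀ s x, |stepR κ S s x| ≤ BS)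
    (hmR : Measurable fun p : ℝ × ℝ => stepR κ R p.1 p.2)
    {BR : ℝ} (hRb : ∀ s x, |stepR κ R s x| ≤ BR)
    {S0 X0 : Set ℝ} (hS0m : MeasurableSet S0) (hX0m : MeasurableSet X0)
    (hS0 : S0 ⊆ Set.Icc 0 1) (hX0 : X0 ⊆ Set.Icc 0 1) :
    ∃ S' X' : Set ℝ, MeasurableSet S' ∧ MeasurableSet X' ∧
      S' ⊆ Set.Icc 0 1 ∧ X' ⊆ Set.Icc 0 1 ∧
      |∫ s in S0, ∫ x in X0, (stepR κ S s x - stepR κ R s x)| ≤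
        |∫ s in S', ∫ x in X', (stepR κ S s x - κ s x)| := by
  classical
  have hRsub : ∀ i, R i ⊆ Set.Icc 0 1 := fun i => hRu ▸ Set.subset_iUnion R i
  have hm1 : Measurable fun p : ℝ × ℝ => stepR κ S p.1 p.2 - stepR κ R p.1 p.2 := hmS.sub hmR
  have hb1 : ∀ s x, |stepR κ S s x - stepR κ R s x| ≤ BS + BR := fun s x =>
    (abs_sub _ _).trans (add_le_add (hSb s x) (hRb s x))
  have hm2 : Measurable fun p : ℝ × ℝ => stepR κ S p.1 p.2 - κ p.1 p.2 := hmS.sub hmeas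
  have hb2 : ∀ s x, |stepR κ S s x - κ s x| ≤ BS + 1 := fun s x =>
    (abs_sub _ _).trans (add_le_add (hSb s x) (hκb s x))
  set c : Fin m → Fin m → ℝ :=
    fun i j => ∫ s in R i, ∫ x in R j, (stepR κ S s x - κ s x) with hcdef
  set a : Fin m → ℝ :=
    fun i => (volume (S0 ∩ R i)).toReal / (volume (R i)).toReal with hadef
  set b : Fin m → ℝ :=
    fun j => (volume (X0 ∩ R j)).toReal / (volume (R j)).toReal with hbdef
  -- the termwise identity
  have hterm : ∀ i j, ∫ s in S0 ∩ R i, ∫ x in X0 ∩ R j, (stepR κ S s x - stepR κ R s x)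
      = a i * (b j * c i j) := by
    intro i j
    simp only [hadef, hbdef, hcdef]
    have hconst : ∀ s ∈ S0 ∩ R i, ∀ x ∈ X0 ∩ R j,
        stepR κ S s x - stepR κ R s x =
          (∫ t in S (σ i), (∫ y in S (σ j), κ t y)) /
            ((volume (S (σ i))).toReal * (volume (S (σ j))).toReal) -
          (∫ t in R i, (∫ y in R j, κ t y)) /
            ((volume (R i)).toReal * (volume (R j)).toReal) := fun s hs x hx => by
      rw [stepR_eq_of_mem hSd (hσ i hs.2) (hσ j hx.2), stepR_eq_of_mem hRd hs.2 hx.2]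
    have hLHS := double_const (hS0m.inter (hRm i)) (hX0m.inter (hRm j)) hconst
    have hcS : ∫ s in R i, ∫ x in R j, stepR κ S s x
        = (volume (R i)).toReal * ((volume (R j)).toReal *
            ((∫ t in S (σ i), (∫ y in S (σ j), κ t y)) /
              ((volume (S (σ i))).toReal * (volume (S (σ j))).toReal))) :=
      double_const (hRm i) (hRm j) (fun s hs x hx => stepR_eq_of_mem hSd (hσ i hs) (hσ j hx))
    have hcval : (∫ s in R i, ∫ x in R j, (stepR κ S s x - κ s x)) =
        (volume (R i)).toReal * ((volume (R j)).toReal *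
            ((∫ t in S (σ i), (∫ y in S (σ j), κ t y)) /
              ((volume (S (σ i))).toReal * (volume (S (σ j))).toReal))) -
          ∫ s in R i, ∫ x in R j, κ s x := by
      rw [double_sub hmS hmeas hSb hκb (hRsub i) (hRsub j), hcS]
    rw [hLHS, hcval]
    have hsub1 : (volume (S0 ∩ R i)).toReal ≤ (volume (R i)).toReal :=
      ENNReal.toReal_mono (vol_lt_top (hRsub i)).ne (measure_mono Set.inter_subset_right)
    have hsub2 : (volume (X0 ∩ R j)).toReal ≤ (volume (R j)).toReal :=
      ENNReal.toReal_mono (vol_lt_top (hRsub j)).ne (measure_mono Set.inter_subset_right)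
    exact alg_key _ _ _ _ _ _ ENNReal.toReal_nonneg hsub1 ENNReal.toReal_nonneg hsub2
  -- decomposition of the pairing
  have hdec : ∫ s in S0, ∫ x in X0, (stepR κ S s x - stepR κ R s x)
      = ∑ i, ∑ j, a i * (b j * c i j) := by
    rw [double_decomp hRm hRd hRu hm1 hb1 hS0m hX0m hS0 hX0]
    exact Finset.sum_congr rfl fun i _ => Finset.sum_congr rfl fun j _ => hterm i j
  have ha0 : ∀ i, 0 ≤ a i := fun i => by
    simp only [hadef]; exact div_nonneg ENNReal.toReal_nonneg ENNReal.toReal_nonneg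
  have ha1 : ∀ i, a i ≤ 1 := fun i => by
    simp only [hadef]
    exact div_le_one_of_le₀
      (ENNReal.toReal_mono (vol_lt_top (hRsub i)).ne (measure_mono Set.inter_subset_right))
      ENNReal.toReal_nonneg
  have hb0 : ∀ j, 0 ≤ b j := fun j => by
    simp only [hbdef]; exact div_nonneg ENNReal.toReal_nonneg ENNReal.toReal_nonneg
  have hb1' : ∀ j, b j ≤ 1 := fun j => by
    simp only [hbdef]
    exact div_le_one_of_le₀
      (ENNReal.toReal_mono (vol_lt_top (hRsub j)).ne (measure_mono Set.inter_subset_right))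
      ENNReal.toReal_nonneg
  -- rounding twice
  obtain ⟨A, hA⟩ := roundLin a (fun i => ∑ j, b j * c i j) ha0 ha1
  obtain ⟨B, hB⟩ := roundLin b (fun j => ∑ i ∈ A, c i j) hb0 hb1'
  have hstep : |∫ s in S0, ∫ x in X0, (stepR κ S s x - stepR κ R s x)| ≤
      |∑ j ∈ B, ∑ i ∈ A, c i j| := by
    rw [hdec]
    have e1 : ∑ i, ∑ j, a i * (b j * c i j) = ∑ i, a i * ∑ j, b j * c i j :=
      Finset.sum_congr rfl fun i _ => (Finset.mul_sum _ _ _).symm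
    rw [e1]
    refine hA.trans (le_trans (le_of_eq ?_) hB)
    congr 1
    calc ∑ i ∈ A, ∑ j, b j * c i j = ∑ j, ∑ i ∈ A, b j * c i j := Finset.sum_comm
      _ = ∑ j, b j * ∑ i ∈ A, c i j :=
        Finset.sum_congr rfl fun j _ => (Finset.mul_sum _ _ _).symm
  -- the vertex sets
  refine ⟨⋃ i ∈ A, R i, ⋃ j ∈ B, R j,
    MeasurableSet.biUnion A.countable_toSet (fun i _ => hRm i),
    MeasurableSet.biUnion B.countable_toSet (fun j _ => hRm j),
    Set.iUnion₂_subset fun i _ => hRsub i,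
    Set.iUnion₂_subset fun j _ => hRsub j, ?_⟩
  refine hstep.trans (le_of_eq (congrArg abs ?_))
  -- ∑ j ∈ B, ∑ i ∈ A, c i j = ∫ over the unions
  have hdecomp2 : ∫ s in ⋃ i ∈ A, R i, ∫ x in ⋃ j ∈ B, R j, (stepR κ S s x - κ s x)
      = ∑ i, ∑ j, ∫ s in (⋃ i' ∈ A, R i') ∩ R i,
          ∫ x in (⋃ j' ∈ B, R j') ∩ R j, (stepR κ S s x - κ s x) :=
    double_decomp hRm hRd hRu hm2 hb2
      (MeasurableSet.biUnion A.countable_toSet (fun i _ => hRm i))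
      (MeasurableSet.biUnion B.countable_toSet (fun j _ => hRm j))
      (Set.iUnion₂_subset fun i _ => hRsub i)
      (Set.iUnion₂_subset fun j _ => hRsub j)
  have hIA : ∀ i ∈ A, (⋃ i' ∈ A, R i') ∩ R i = R i := fun i hi =>
    Set.inter_eq_right.mpr (Set.subset_biUnion_of_mem hi)
  have hIA' : ∀ i, i ∉ A → (⋃ i' ∈ A, R i') ∩ R i = ∅ := fun i hi =>
    Set.eq_empty_iff_forall_notMem.mpr fun s hs => by
      obtain ⟨hs1, hs2⟩ := hs
      obtain ⟨i', hi', hsi'⟩ := Set.mem_iUnion₂.mp hs1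
      exact Set.disjoint_left.mp (hRd (show i' ≠ i from fun h => hi (h ▸ hi'))) hsi' hs2
  have hJB : ∀ j ∈ B, (⋃ j' ∈ B, R j') ∩ R j = R j := fun j hj =>
    Set.inter_eq_right.mpr (Set.subset_biUnion_of_mem hj)
  have hJB' : ∀ j, j ∉ B → (⋃ j' ∈ B, R j') ∩ R j = ∅ := fun j hj =>
    Set.eq_empty_iff_forall_notMem.mpr fun x hx => by
      obtain ⟨hx1, hx2⟩ := hx
      obtain ⟨j', hj', hxj'⟩ := Set.mem_iUnion₂.mp hx1
      exact Set.disjoint_left.mp (hRd (show j' ≠ j from fun h => hj (h ▸ hj'))) hxj' hx2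
  have h1 : ∑ i, ∑ j, ∫ s in (⋃ i' ∈ A, R i') ∩ R i,
      ∫ x in (⋃ j' ∈ B, R j') ∩ R j, (stepR κ S s x - κ s x)
      = ∑ i ∈ A, ∑ j, ∫ s in (⋃ i' ∈ A, R i') ∩ R i,
        ∫ x in (⋃ j' ∈ B, R j') ∩ R j, (stepR κ S s x - κ s x) :=
    (Finset.sum_subset A.subset_univ (fun i _ hi =>
      Finset.sum_eq_zero fun j _ => by rw [hIA' i hi]; simp)).symm
  have h2 : ∀ i ∈ A, (∑ j, ∫ s in (⋃ i' ∈ A, R i') ∩ R i,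
      ∫ x in (⋃ j' ∈ B, R j') ∩ R j, (stepR κ S s x - κ s x))
      = ∑ j ∈ B, ∫ s in (⋃ i' ∈ A, R i') ∩ R i,
        ∫ x in (⋃ j' ∈ B, R j') ∩ R j, (stepR κ S s x - κ s x) := fun i hi =>
    (Finset.sum_subset B.subset_univ (fun j _ hj => by rw [hJB' j hj]; simp)).symm
  calc ∑ j ∈ B, ∑ i ∈ A, c i j
      = ∑ i ∈ A, ∑ j ∈ B, c i j := Finset.sum_comm
    _ = ∑ i ∈ A, ∑ j ∈ B, ∫ s in (⋃ i' ∈ A, R i') ∩ R i,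
          ∫ x in (⋃ j' ∈ B, R j') ∩ R j, (stepR κ S s x - κ s x) :=
        Finset.sum_congr rfl fun i hi => Finset.sum_congr rfl fun j hj => by
          rw [hIA i hi, hJB j hj]
    _ = ∑ i ∈ A, ∑ j, ∫ s in (⋃ i' ∈ A, R i') ∩ R i,
          ∫ x in (⋃ j' ∈ B, R j') ∩ R j, (stepR κ S s x - κ s x) :=
        Finset.sum_congr rfl fun i hi => (h2 i hi).symm
    _ = ∑ i, ∑ j, ∫ s in (⋃ i' ∈ A, R i') ∩ R i,
          ∫ x in (⋃ j' ∈ B, R j') ∩ R j, (stepR κ S s x - κ s x) := h1.symm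
    _ = ∫ s in ⋃ i ∈ A, R i, ∫ x in ⋃ j ∈ B, R j, (stepR κ S s x - κ s x) := hdecomp2.symm

end Auxiliary

/-- Corollary (refining partitions at most doubles the cut-distance to the stepping):
if `R` refines `S` then `D_⧠(κ, κ^R) ≤ 2 D_⧠(κ, κ^S)`. -/
theorem cut_step_refine {m k : ℕ} (R : Fin m → Set ℝ) (S : Fin k → Set ℝ)
    (hR : IsPartition R) (hS : IsPartition S)
    (hrefine : ∀ i, ∃ j, R i ⊆ S j)
    (κ : ℝ → ℝ → ℝ) (hmeas : Measurable fun p : ℝ × ℝ => κ p.1 p.2)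
    (hsymm : ∀ s x, κ s x = κ x s)
    (hrange : ∀ s x, κ s x ∈ Set.Icc (0 : ℝ) 1) :
    cutFKR κ (stepR κ R) ≤ 2 * cutFKR κ (stepR κ S) := by
  classical
  obtain ⟨hRm, hRd, hRu⟩ := hR
  obtain ⟨hSm, hSd, hSu⟩ := hS
  choose σ hσ using hrefine
  have hmS : Measurable fun p : ℝ × ℝ => stepR κ S p.1 p.2 := measurable_stepR κ hSm
  have hmR : Measurable fun p : ℝ × ℝ => stepR κ R p.1 p.2 := measurable_stepR κ hRm
  have hκb : ∀ s x, |κ s x| ≤ 1 := fun s x =>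
    abs_le.2 ⟨by linarith [(hrange s x).1], (hrange s x).2⟩
  have hSb : ∀ s x, |stepR κ S s x| ≤ stepBound κ S := fun s x => abs_stepR_le κ S s x
  have hRb : ∀ s x, |stepR κ R s x| ≤ stepBound κ R := fun s x => abs_stepR_le κ R s x
  have hmKS : Measurable fun p : ℝ × ℝ => κ p.1 p.2 - stepR κ S p.1 p.2 := hmeas.sub hmS
  have hbKS : ∀ s x, |κ s x - stepR κ S s x| ≤ 1 + stepBound κ S := fun s x =>
    (abs_sub _ _).trans (add_le_add (hκb s x) (hSb s x))
  -- the set defining `cutFKR κ (stepR κ S)` is bounded above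
  have hDSbdd : BddAbove { d | ∃ S0 X0 : Set ℝ, MeasurableSet S0 ∧ MeasurableSet X0 ∧
      S0 ⊆ Set.Icc 0 1 ∧ X0 ⊆ Set.Icc 0 1 ∧
      d = |∫ s in S0, (∫ x in X0, (κ s x - stepR κ S s x))| } := by
    refine ⟨1 + stepBound κ S, fun d hd => ?_⟩
    obtain ⟨S0, X0, hS0m, hX0m, hS0, hX0, rfl⟩ := hd
    exact double_bound hmKS hbKS hS0 hX0
  have hcutS : ∀ {T U : Set ℝ}, MeasurableSet T → MeasurableSet U →
      T ⊆ Set.Icc 0 1 → U ⊆ Set.Icc 0 1 →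
      |∫ s in T, (∫ x in U, (κ s x - stepR κ S s x))| ≤ cutFKR κ (stepR κ S) :=
    fun hTm hUm hT hU => le_csSup hDSbdd ⟨_, _, hTm, hUm, hT, hU, rfl⟩
  have hmem0 : (0:ℝ) ∈ { d | ∃ S0 X0 : Set ℝ, MeasurableSet S0 ∧ MeasurableSet X0 ∧
      S0 ⊆ Set.Icc 0 1 ∧ X0 ⊆ Set.Icc 0 1 ∧
      d = |∫ s in S0, (∫ x in X0, (κ s x - stepR κ S s x))| } :=
    ⟨∅, ∅, MeasurableSet.empty, MeasurableSet.empty,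
      Set.empty_subset _, Set.empty_subset _, by simp⟩
  have hcutSnn : 0 ≤ cutFKR κ (stepR κ S) := le_csSup hDSbdd hmem0
  refine Real.sSup_le ?_ (by linarith)
  rintro d ⟨S0, X0, hS0m, hX0m, hS0, hX0, rfl⟩
  have e1 := double_sub hmeas hmR hκb hRb hS0 hX0
  have e2 := double_sub hmeas hmS hκb hSb hS0 hX0
  have e3 := double_sub hmS hmR hSb hRb hS0 hX0
  obtain ⟨S', X', hS'm, hX'm, hS', hX', hle⟩ :=
    term2 hRm hRd hRu hSd σ hσ hmeas hκb hmS hSb hmR hRb hS0m hX0m hS0 hX0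
  have e4 := double_sub hmS hmeas hSb hκb hS' hX'
  have e5 := double_sub hmeas hmS hκb hSb hS' hX'
  have t1 : |∫ s in S0, (∫ x in X0, (κ s x - stepR κ S s x))| ≤ cutFKR κ (stepR κ S) :=
    hcutS hS0m hX0m hS0 hX0
  have t2' : |∫ s in S', (∫ x in X', (κ s x - stepR κ S s x))| ≤ cutFKR κ (stepR κ S) :=
    hcutS hS'm hX'm hS' hX'
  have t2 : |∫ s in S0, ∫ x in X0, (stepR κ S s x - stepR κ R s x)| ≤
      cutFKR κ (stepR κ S) := by
    refine hle.trans (le_trans (le_of_eq ?_) t2')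
    rw [e4, e5, abs_sub_comm]
  rw [e1]
  calc |(∫ s in S0, ∫ x in X0, κ s x) - ∫ s in S0, ∫ x in X0, stepR κ R s x|
      = |((∫ s in S0, ∫ x in X0, κ s x) - ∫ s in S0, ∫ x in X0, stepR κ S s x) +
          ((∫ s in S0, ∫ x in X0, stepR κ S s x) - ∫ s in S0, ∫ x in X0, stepR κ R s x)| := by
        ring_nf
    _ ≤ |(∫ s in S0, ∫ x in X0, κ s x) - ∫ s in S0, ∫ x in X0, stepR κ S s x| +
        |(∫ s in S0, ∫ x in X0, stepR κ S s x) - ∫ s in S0, ∫ x in X0, stepR κ R s x| :=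
        abs_add_le _ _
    _ ≤ cutFKR κ (stepR κ S) + cutFKR κ (stepR κ S) := by
        refine add_le_add ?_ ?_
        · rw [← e2]; exact t1
        · rw [← e3]; exact t2
    _ = 2 * cutFKR κ (stepR κ S) := by ring
end

section
/- Let Ω be finite and let κ_n, κ̂_n be defined as follows: κ_n is the step kernel of the n × n matrix (κ_{s_i, x_j})_{i,j} for i.i.d. uniform s_1,...,s_n, x_1,...,x_n ∈ [0,1], and κ̂_n ∈ Ω^{n×n} is obtained by independently drawing κ̂_{n,i,j} = ω with probability κ_{s_i,x_j}(ω). Then E[ D_⧠(κ_n, κ̂_n) ] = O(n^{−1/2}). -/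
open scoped BigOperators
open MeasureTheory

/-- The index `i ∈ {0,…,n−1}` of the interval `[i/n,(i+1)/n)` containing `s`. -/
noncomputable def toIdx (n : ℕ) (s : ℝ) : ℕ := min ⌊s * n⌋₊ (n - 1)

/-- The step kernel on `[0,1]²` associated with an `n × n` matrix of elements of
`ℝ^Ω` (indexed by naturals, only the indices `< n` matter). -/
noncomputable def stepMat {Ω : Type*} (n : ℕ) (A : ℕ → ℕ → Ω → ℝ) :
    ℝ → ℝ → Ω → ℝ := fun s x ω => A (toIdx n s) (toIdx n x) ω

open Classical in
/-- The sampled matrix kernel `κ_n` for sample points `s, x ∈ [0,1]^n`. -/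
noncomputable def sampleKer {Ω : Type*} [Fintype Ω] (κ : ℝ → ℝ → Ω → ℝ) (n : ℕ)
    (s x : Fin n → ℝ) : ℝ → ℝ → Ω → ℝ :=
  stepMat n (fun i j ω => if h : i < n ∧ j < n then κ (s ⟨i, h.1⟩) (x ⟨j, h.2⟩) ω else 0)

open Classical in
/-- The step kernel of an `Ω`-valued sample matrix `M`, via indicators. -/
noncomputable def sampleInd {Ω : Type*} [Fintype Ω] (n : ℕ) (M : Fin n → Fin n → Ω) :
    ℝ → ℝ → Ω → ℝ :=
  stepMat n (fun i j ω => if h : i < n ∧ j < n then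
    (if M ⟨i, h.1⟩ ⟨j, h.2⟩ = ω then 1 else 0) else 0)

namespace CutAux

lemma toIdx_lt {n : ℕ} (hn : 1 ≤ n) (s : ℝ) : toIdx n s < n :=
  lt_of_le_of_lt (min_le_right _ _) (Nat.sub_lt hn one_pos)

lemma measurable_toIdx (n : ℕ) : Measurable (toIdx n) :=
  (Nat.measurable_floor.comp (measurable_id.mul_const _)).min measurable_const

/-- Partition pieces. -/
def T (n m : ℕ) : Set ℝ := toIdx n ⁻¹' {m}

lemma measurableSet_T (n m : ℕ) : MeasurableSet (T n m) :=
  measurable_toIdx n (measurableSet_singleton m)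

lemma indicator_decomp {n : ℕ} (hn : 1 ≤ n) (h : ℕ → ℝ) (x : ℝ) :
    h (toIdx n x) = ∑ j : Fin n, (T n j).indicator (fun _ => h j) x := by
  classical
  have hx : (⟨toIdx n x, toIdx_lt hn x⟩ : Fin n) ∈ Finset.univ := Finset.mem_univ _
  rw [Finset.sum_eq_single (⟨toIdx n x, toIdx_lt hn x⟩ : Fin n)]
  · rw [Set.indicator_of_mem]; rfl
  · intro b _ hb
    apply Set.indicator_of_notMem
    intro hxb
    apply hb
    have : toIdx n x = (b : ℕ) := hxb
    exact Fin.ext (by simp [← this])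
  · intro hc; exact absurd hx hc

lemma setIntegral_step {n : ℕ} (hn : 1 ≤ n) {X : Set ℝ} (hX : MeasurableSet X)
    (hX1 : X ⊆ Set.Icc 0 1) (h : ℕ → ℝ) :
    ∫ x in X, h (toIdx n x) = ∑ j : Fin n, (volume (X ∩ T n j)).toReal * h j := by
  have hXfin : volume X < ⊤ :=
    lt_of_le_of_lt (measure_mono hX1) (by simp [Real.volume_Icc])
  calc ∫ x in X, h (toIdx n x)
      = ∫ x in X, ∑ j : Fin n, (T n j).indicator (fun _ => h j) x := by
        apply integral_congr_ae
        exact Filter.Eventually.of_forall (fun x => indicator_decomp hn h x)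
    _ = ∑ j : Fin n, ∫ x in X, (T n j).indicator (fun _ => h j) x := by
        apply integral_finset_sum
        intro j _
        exact (integrableOn_const hXfin.ne).indicator (measurableSet_T n j)
    _ = ∑ j : Fin n, (volume (X ∩ T n j)).toReal * h j := by
        apply Finset.sum_congr rfl
        intro j _
        rw [setIntegral_indicator (measurableSet_T n j), setIntegral_const, smul_eq_mul]; rfl

lemma volume_T_le {n : ℕ} (hn : 1 ≤ n) {X : Set ℝ} (hX1 : X ⊆ Set.Icc 0 1) (j : Fin n) :
    (volume (X ∩ T n j)).toReal ≤ 1 / n := by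
  have hnpos : (0:ℝ) < n := by exact_mod_cast hn
  have hsub : X ∩ T n j ⊆ Set.Icc ((j : ℝ) / n) (((j : ℝ) + 1) / n) := by
    rintro y ⟨hyX, hyT⟩
    obtain ⟨hy0, hy1⟩ := hX1 hyX
    have hyT' : min ⌊y * n⌋₊ (n - 1) = (j : ℕ) := hyT
    constructor
    · have h1 : (j : ℕ) ≤ ⌊y * n⌋₊ := hyT' ▸ min_le_left _ _
      have h2 : ((j : ℕ) : ℝ) ≤ y * n :=
        le_trans (by exact_mod_cast h1) (Nat.floor_le (by positivity))
      rw [div_le_iff₀ hnpos]; exact h2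
    · rcases le_total ⌊y * n⌋₊ (n - 1) with hc | hc
      · have h1 : ⌊y * n⌋₊ = (j : ℕ) := by rwa [min_eq_left hc] at hyT'
        have h2 : y * n < (j : ℝ) + 1 := by
          have := Nat.lt_floor_add_one (y * n)
          rw [h1] at this; exact_mod_cast this
        rw [le_div_iff₀ hnpos]; linarith
      · have h1 : (j : ℕ) = n - 1 := by rw [min_eq_right hc] at hyT'; omega
        have h2 : ((j : ℝ) + 1) = n := by
          have : ((j : ℕ) : ℝ) = ((n - 1 : ℕ) : ℝ) := by exact_mod_cast h1
          rw [this, Nat.cast_sub hn]; ring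
        rw [h2, le_div_iff₀ hnpos]; nlinarith
  have hvm : volume (X ∩ T n j) ≤ volume (Set.Icc ((j : ℝ) / n) (((j : ℝ) + 1) / n)) :=
    measure_mono hsub
  rw [Real.volume_Icc] at hvm
  have h3 : ((j : ℝ) + 1) / n - (j : ℝ) / n = 1 / n := by field_simp; ring
  rw [h3] at hvm
  exact ENNReal.toReal_le_of_le_ofReal (by positivity) hvm

lemma sum_mul_le {n : ℕ} {c : ℝ} (hc : 0 ≤ c) (a g : Fin n → ℝ)
    (ha : ∀ i, 0 ≤ a i ∧ a i ≤ c) :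
    ∑ i, a i * g i ≤ c * ∑ i ∈ Finset.univ.filter (fun i => 0 ≤ g i), g i := by
  classical
  rw [Finset.mul_sum]
  calc ∑ i, a i * g i
      = (∑ i ∈ Finset.univ.filter (fun i => 0 ≤ g i), a i * g i)
        + ∑ i ∈ Finset.univ.filter (fun i => ¬ 0 ≤ g i), a i * g i :=
        (Finset.sum_filter_add_sum_filter_not _ _ _).symm
    _ ≤ (∑ i ∈ Finset.univ.filter (fun i => 0 ≤ g i), c * g i) + 0 := by
        apply add_le_add
        · apply Finset.sum_le_sum
          intro i hi
          exact mul_le_mul_of_nonneg_right (ha i).2 (Finset.mem_filter.mp hi).2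
        · apply Finset.sum_nonpos
          intro i hi
          have : g i ≤ 0 := le_of_not_ge (Finset.mem_filter.mp hi).2
          exact mul_nonpos_of_nonneg_of_nonpos (ha i).1 this
    _ = _ := by rw [add_zero]

lemma step_integral_le {n : ℕ} (hn : 1 ≤ n) {S X : Set ℝ} (hS : MeasurableSet S)
    (hX : MeasurableSet X) (hS1 : S ⊆ Set.Icc 0 1) (hX1 : X ⊆ Set.Icc 0 1) (f : ℕ → ℕ → ℝ) :
    ∃ I J : Finset (Fin n), (∫ s in S, ∫ x in X, f (toIdx n s) (toIdx n x))
      ≤ (1 / n) * ((1 / n) * ∑ i ∈ I, ∑ j ∈ J, f i j) := by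
  classical
  set b : Fin n → ℝ := fun j => (volume (X ∩ T n j)).toReal with hb
  set a : Fin n → ℝ := fun i => (volume (S ∩ T n i)).toReal with hadef
  have hbprop : ∀ j, 0 ≤ b j ∧ b j ≤ 1 / n :=
    fun j => ⟨ENNReal.toReal_nonneg, volume_T_le hn hX1 j⟩
  have haprop : ∀ i, 0 ≤ a i ∧ a i ≤ 1 / n :=
    fun i => ⟨ENNReal.toReal_nonneg, volume_T_le hn hS1 i⟩
  set H : ℕ → ℝ := fun m => ∑ j : Fin n, b j * f m j with hH
  have hinner : ∀ s : ℝ, (∫ x in X, f (toIdx n s) (toIdx n x)) = H (toIdx n s) :=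
    fun s => setIntegral_step hn hX hX1 (f (toIdx n s))
  have houter : (∫ s in S, ∫ x in X, f (toIdx n s) (toIdx n x))
      = ∑ i : Fin n, a i * H i := by
    simp_rw [hinner]
    exact setIntegral_step hn hS hS1 H
  set P : Finset (Fin n) := Finset.univ.filter (fun i => 0 ≤ H (i : ℕ)) with hP
  set Q : Finset (Fin n) := Finset.univ.filter (fun j : Fin n => 0 ≤ ∑ i ∈ P, f i j) with hQ
  refine ⟨P, Q, ?_⟩
  rw [houter]
  have h1 : ∑ i : Fin n, a i * H i ≤ (1 / n) * ∑ i ∈ P, H (i : ℕ) :=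
    sum_mul_le (by positivity) a _ haprop
  have h2 : ∑ i ∈ P, H (i : ℕ) = ∑ j : Fin n, b j * ∑ i ∈ P, f i j := by
    rw [hH]
    simp only []
    rw [Finset.sum_comm]
    apply Finset.sum_congr rfl
    intro j _
    rw [Finset.mul_sum]
  have h3 : ∑ j : Fin n, b j * ∑ i ∈ P, f i j ≤ (1 / n) * ∑ j ∈ Q, ∑ i ∈ P, f i j :=
    sum_mul_le (by positivity) b _ hbprop
  have hn0 : (0:ℝ) ≤ 1 / n := by positivity
  calc ∑ i : Fin n, a i * H i
      ≤ (1 / n) * ∑ i ∈ P, H (i : ℕ) := h1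
    _ = (1 / n) * (∑ j : Fin n, b j * ∑ i ∈ P, f i j) := by rw [h2]
    _ ≤ (1 / n) * ((1 / n) * ∑ j ∈ Q, ∑ i ∈ P, f i j) := mul_le_mul_of_nonneg_left h3 hn0
    _ = (1 / n) * ((1 / n) * ∑ i ∈ P, ∑ j ∈ Q, f i j) := by rw [Finset.sum_comm]

lemma exp_le_cosh_add {t u : ℝ} (hu : |u| ≤ 1) :
    Real.exp (t * u) ≤ Real.cosh t + Real.sinh t * u := by
  obtain ⟨hu1, hu2⟩ := abs_le.mp hu
  have hcvx : Real.exp (((1 + u) / 2) • t + ((1 - u) / 2) • (-t))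
      ≤ ((1 + u) / 2) • Real.exp t + ((1 - u) / 2) • Real.exp (-t) :=
    convexOn_exp.2 (Set.mem_univ t) (Set.mem_univ (-t)) (by linarith) (by linarith) (by ring)
  rw [smul_eq_mul, smul_eq_mul, smul_eq_mul, smul_eq_mul] at hcvx
  have harg : (1 + u) / 2 * t + (1 - u) / 2 * (-t) = t * u := by ring
  rw [harg] at hcvx
  have hrhs : (1 + u) / 2 * Real.exp t + (1 - u) / 2 * Real.exp (-t)
      = Real.cosh t + Real.sinh t * u := by
    rw [Real.cosh_eq, Real.sinh_eq]; ring
  linarith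

lemma cosh_le_one_add_sq {t : ℝ} (ht : |t| ≤ 1) : Real.cosh t ≤ 1 + t ^ 2 := by
  have h2 := Real.exp_bound ht (n := 2) (by norm_num)
  have h3 := Real.exp_bound (x := -t) (by rwa [abs_neg]) (n := 2) (by norm_num)
  have e1 : ∑ i ∈ Finset.range 2, t ^ i / (i.factorial : ℝ) = 1 + t := by
    simp [Finset.sum_range_succ]
  have e2 : ∑ i ∈ Finset.range 2, (-t) ^ i / (i.factorial : ℝ) = 1 - t := by
    simp [Finset.sum_range_succ]; ring
  rw [e1] at h2
  rw [e2] at h3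
  norm_num [Nat.factorial] at h2 h3
  have ha2 := (abs_le.mp h2).2
  have ha3 := (abs_le.mp h3).2
  rw [Real.cosh_eq]
  nlinarith [sq_nonneg t, sq_abs t, sq_abs (-t), abs_neg t]

lemma factor_bound {Ω : Type*} [Fintype Ω] (q v : Ω → ℝ) (hq0 : ∀ ω, 0 ≤ q ω)
    (hq1 : ∑ ω, q ω = 1) (hv : ∀ ω, |v ω| ≤ 1) (hmean : ∑ ω, q ω * v ω = 0)
    {t : ℝ} (ht : |t| ≤ 1) :
    ∑ ω, q ω * Real.exp (t * v ω) ≤ 1 + t ^ 2 := by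
  calc ∑ ω, q ω * Real.exp (t * v ω)
      ≤ ∑ ω, q ω * (Real.cosh t + Real.sinh t * v ω) := by
        apply Finset.sum_le_sum
        intro ω _
        exact mul_le_mul_of_nonneg_left (exp_le_cosh_add (hv ω)) (hq0 ω)
    _ = Real.cosh t * ∑ ω, q ω + Real.sinh t * ∑ ω, q ω * v ω := by
        simp_rw [mul_add, Finset.sum_add_distrib, Finset.mul_sum]
        congr 1
        · apply Finset.sum_congr rfl; intro ω _; ring
        · apply Finset.sum_congr rfl; intro ω _; ring
    _ = Real.cosh t := by rw [hq1, hmean]; ring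
    _ ≤ 1 + t ^ 2 := cosh_le_one_add_sq ht

set_option maxHeartbeats 1000000 in
open Classical in
lemma mgf_bound {Ω : Type*} [Fintype Ω] {n : ℕ}
    (p : Fin n → Fin n → Ω → ℝ) (hp0 : ∀ i j ω, 0 ≤ p i j ω)
    (hp1 : ∀ i j, ∑ ω, p i j ω = 1)
    {t : ℝ} (ht : |t| ≤ 1) (ω₀ : Ω) (I J : Finset (Fin n)) {e : ℝ} (he : e = 1 ∨ e = -1) :
    ∑ M : Fin n → Fin n → Ω, (∏ i, ∏ j, p i j (M i j)) *
      Real.exp (t * (e * ∑ i ∈ I, ∑ j ∈ J, (p i j ω₀ - if M i j = ω₀ then 1 else 0)))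
      ≤ (1 + t ^ 2) ^ (n * n) := by
  have he2 : e ^ 2 = 1 := by rcases he with h | h <;> rw [h] <;> norm_num
  have hea : |e| = 1 := by rcases he with h | h <;> rw [h] <;> norm_num
  set q : Fin n → Fin n → Ω → ℝ := fun i j ω' =>
    if i ∈ I then (if j ∈ J then t * e * (p i j ω₀ - if ω' = ω₀ then 1 else 0) else 0) else 0
    with hq
  -- exponent identity
  have hexp : ∀ M : Fin n → Fin n → Ω,
      t * (e * ∑ i ∈ I, ∑ j ∈ J, (p i j ω₀ - if M i j = ω₀ then 1 else 0))
      = ∑ i : Fin n, ∑ j : Fin n, q i j (M i j) := by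
    intro M
    have hrow : ∀ i : Fin n, ∑ j : Fin n, q i j (M i j)
        = if i ∈ I then ∑ j ∈ J, t * e * (p i j ω₀ - if M i j = ω₀ then 1 else 0) else 0 := by
      intro i
      by_cases hi : i ∈ I
      · simp only [hq, hi, if_true]
        rw [Finset.sum_ite_mem, Finset.univ_inter]
      · simp [hq, hi]
    rw [Finset.sum_congr rfl (fun i _ => hrow i), Finset.sum_ite_mem, Finset.univ_inter,
      ← mul_assoc, Finset.mul_sum]
    exact Finset.sum_congr rfl (fun i _ => Finset.mul_sum _ _ _)
  -- rewrite the summand as a product over coordinates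
  have hterm : ∀ M : Fin n → Fin n → Ω,
      (∏ i, ∏ j, p i j (M i j)) *
        Real.exp (t * (e * ∑ i ∈ I, ∑ j ∈ J, (p i j ω₀ - if M i j = ω₀ then 1 else 0)))
      = ∏ i, ∏ j, (p i j (M i j) * Real.exp (q i j (M i j))) := by
    intro M
    rw [hexp M, Real.exp_sum]
    rw [← Finset.prod_mul_distrib]
    apply Finset.prod_congr rfl
    intro i _
    rw [Real.exp_sum, ← Finset.prod_mul_distrib]
  simp_rw [hterm]
  -- sum over M of product = product of sums
  have hsp : ∑ M : Fin n → Fin n → Ω, ∏ i, ∏ j, (p i j (M i j) * Real.exp (q i j (M i j)))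
      = ∏ i, ∏ j, ∑ ω', p i j ω' * Real.exp (q i j ω') := by
    calc ∑ M : Fin n → Fin n → Ω, ∏ i, ∏ j, (p i j (M i j) * Real.exp (q i j (M i j)))
        = ∏ i, ∑ r : Fin n → Ω, ∏ j, (p i j (r j) * Real.exp (q i j (r j))) :=
          (Fintype.prod_sum (κ := fun _ : Fin n => Fin n → Ω)
            (f := fun i (r : Fin n → Ω) => ∏ j, (p i j (r j) * Real.exp (q i j (r j))))).symm
      _ = ∏ i, ∏ j, ∑ ω', p i j ω' * Real.exp (q i j ω') :=
          Finset.prod_congr rfl (fun i _ => (Fintype.prod_sum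
            (κ := fun _ : Fin n => Ω) (f := fun j ω' => p i j ω' * Real.exp (q i j ω'))).symm)
  rw [hsp]
  -- bound each factor
  have hfac : ∀ i j : Fin n, ∑ ω', p i j ω' * Real.exp (q i j ω') ≤ 1 + t ^ 2 := by
    intro i j
    by_cases hi : i ∈ I
    · by_cases hj : j ∈ J
      · have hqv : ∀ ω', q i j ω' = (t * e) * (p i j ω₀ - if ω' = ω₀ then 1 else 0) := by
          intro ω'; simp only [hq, hi, hj, if_true]
        simp_rw [hqv]
        have hp01 : p i j ω₀ ≤ 1 := by
          rw [← hp1 i j]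
          exact Finset.single_le_sum (fun ω _ => hp0 i j ω) (Finset.mem_univ ω₀)
        have hte : |t * e| ≤ 1 := by rw [abs_mul, hea, mul_one]; exact ht
        have hb := factor_bound (p i j) (fun ω' => p i j ω₀ - if ω' = ω₀ then 1 else 0)
          (hp0 i j) (hp1 i j)
          (fun ω' => by
            by_cases h : ω' = ω₀ <;> simp [h, abs_le] <;>
              constructor <;> nlinarith [hp0 i j ω₀, hp01])
          (by
            simp_rw [mul_sub, Finset.sum_sub_distrib, mul_ite, mul_one, mul_zero,
              Finset.sum_ite_eq', Finset.mem_univ, if_true, ← Finset.sum_mul, hp1 i j, one_mul]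
            ring)
          hte
        calc ∑ ω', p i j ω' * Real.exp ((t * e) * (p i j ω₀ - if ω' = ω₀ then 1 else 0))
            ≤ 1 + (t * e) ^ 2 := hb
          _ = 1 + t ^ 2 := by rw [mul_pow, he2, mul_one]
      · have hqv : ∀ ω', q i j ω' = 0 := by intro ω'; simp [hq, hj]
        simp_rw [hqv, Real.exp_zero, mul_one, hp1 i j]
        nlinarith [sq_nonneg t]
    · have hqv : ∀ ω', q i j ω' = 0 := by intro ω'; simp [hq, hi]
      simp_rw [hqv, Real.exp_zero, mul_one, hp1 i j]
      nlinarith [sq_nonneg t]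
  have hnn : ∀ i j : Fin n, (0:ℝ) ≤ ∑ ω', p i j ω' * Real.exp (q i j ω') := by
    intro i j
    exact Finset.sum_nonneg (fun ω' _ => mul_nonneg (hp0 i j ω') (Real.exp_pos _).le)
  calc ∏ i, ∏ j, ∑ ω', p i j ω' * Real.exp (q i j ω')
      ≤ ∏ i : Fin n, ∏ j : Fin n, (1 + t ^ 2) := by
        apply Finset.prod_le_prod
        · intro i _; exact Finset.prod_nonneg (fun j _ => hnn i j)
        · intro i _
          exact Finset.prod_le_prod (fun j _ => hnn i j) (fun j _ => hfac i j)
    _ = (1 + t ^ 2) ^ (n * n) := by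
        simp [Finset.prod_const, Finset.card_univ, ← pow_mul]


open Classical in
lemma cut_le_bound {Ω : Type*} [Fintype Ω] {n : ℕ} (hn : 1 ≤ n)
    (κ : ℝ → ℝ → Ω → ℝ) (s x : Fin n → ℝ)
    (M : Fin n → Fin n → Ω) {B : ℝ} (hB : 0 ≤ B)
    (hYB : ∀ (ω : Ω) (I J : Finset (Fin n)) (e : ℝ), e = 1 ∨ e = -1 →
      e * ∑ i ∈ I, ∑ j ∈ J, (κ (s i) (x j) ω - if M i j = ω then 1 else 0) ≤ B) :
    cutFK (sampleKer κ n s x) (sampleInd n M) ≤ (1 / n) * ((1 / n) * B) := by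
  have hn0 : (0:ℝ) ≤ 1 / n := by positivity
  apply Real.sSup_le
  · rintro d ⟨S, X, hS, hX, hS1, hX1, ω, rfl⟩
    set fd : ℕ → ℕ → ℝ := fun i j =>
      (if h : i < n ∧ j < n then κ (s ⟨i, h.1⟩) (x ⟨j, h.2⟩) ω else 0) -
      (if h : i < n ∧ j < n then (if M ⟨i, h.1⟩ ⟨j, h.2⟩ = ω then 1 else 0) else 0) with hfd
    have hker : ∀ s' x' : ℝ, sampleKer κ n s x s' x' ω - sampleInd n M s' x' ω
        = fd (toIdx n s') (toIdx n x') := fun _ _ => rfl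
    have hfdv : ∀ i j : Fin n, fd i j = κ (s i) (x j) ω - (if M i j = ω then 1 else 0) := by
      intro i j
      have hij : (i:ℕ) < n ∧ (j:ℕ) < n := ⟨i.isLt, j.isLt⟩
      simp only [hfd]
      rw [dif_pos hij, dif_pos hij]
    simp_rw [hker]
    rw [abs_le]
    constructor
    · obtain ⟨I, J, hIJ⟩ := step_integral_le hn hS hX hS1 hX1 (fun i j => -fd i j)
      have hneg : (∫ s' in S, ∫ x' in X, -fd (toIdx n s') (toIdx n x'))
          = - ∫ s' in S, ∫ x' in X, fd (toIdx n s') (toIdx n x') := by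
        simp_rw [integral_neg]
      rw [hneg] at hIJ
      have hsum : ∑ i ∈ I, ∑ j ∈ J, -fd i j
          = (-1) * ∑ i ∈ I, ∑ j ∈ J, (κ (s i) (x j) ω - if M i j = ω then 1 else 0) := by
        rw [neg_one_mul, ← Finset.sum_neg_distrib]
        apply Finset.sum_congr rfl
        intro i _
        rw [← Finset.sum_neg_distrib]
        apply Finset.sum_congr rfl
        intro j _
        rw [hfdv]
      rw [hsum] at hIJ
      have hYB' := hYB ω I J (-1) (Or.inr rfl)
      have : - (∫ s' in S, ∫ x' in X, fd (toIdx n s') (toIdx n x')) ≤ (1/n) * ((1/n) * B) :=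
        le_trans hIJ (mul_le_mul_of_nonneg_left (mul_le_mul_of_nonneg_left hYB' hn0) hn0)
      linarith
    · obtain ⟨I, J, hIJ⟩ := step_integral_le hn hS hX hS1 hX1 fd
      have hsum : ∑ i ∈ I, ∑ j ∈ J, fd i j
          = (1:ℝ) * ∑ i ∈ I, ∑ j ∈ J, (κ (s i) (x j) ω - if M i j = ω then 1 else 0) := by
        rw [one_mul]
        exact Finset.sum_congr rfl fun i _ => Finset.sum_congr rfl fun j _ => hfdv i j
      rw [hsum] at hIJ
      have hYB' := hYB ω I J 1 (Or.inl rfl)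
      exact le_trans hIJ (mul_le_mul_of_nonneg_left (mul_le_mul_of_nonneg_left hYB' hn0) hn0)
  · exact mul_nonneg hn0 (mul_nonneg hn0 hB)

set_option maxHeartbeats 1000000 in
open Classical in
lemma pointwise {Ω : Type*} [Fintype Ω] {n : ℕ} (hn : 1 ≤ n)
    (κ : ℝ → ℝ → Ω → ℝ) (hκ : IsKernel κ) (s x : Fin n → ℝ) :
    ∑ M : Fin n → Fin n → Ω, (∏ i, ∏ j, κ (s i) (x j) (M i j)) *
      cutFK (sampleKer κ n s x) (sampleInd n M)
    ≤ (Real.log (Fintype.card Ω) + 3 * Real.log 2 + 2) / Real.sqrt n := by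
  have hlog2 : (0:ℝ) ≤ Real.log 2 := Real.log_nonneg one_le_two
  have hlogcard : (0:ℝ) ≤ Real.log (Fintype.card Ω) := by
    rcases Nat.eq_zero_or_pos (Fintype.card Ω) with h | h
    · simp [h]
    · exact Real.log_nonneg (by exact_mod_cast h)
  rcases isEmpty_or_nonempty Ω with hΩ | hΩ
  · haveI : IsEmpty (Fin n → Fin n → Ω) := ⟨fun M => IsEmpty.false (M ⟨0, hn⟩ ⟨0, hn⟩)⟩
    rw [Finset.univ_eq_empty, Finset.sum_empty]
    have : (0:ℝ) ≤ Real.log (Fintype.card Ω) + 3 * Real.log 2 + 2 := by linarith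
    positivity
  obtain ⟨hκm, hκ0, hκ1⟩ := hκ
  set p : Fin n → Fin n → Ω → ℝ := fun i j => κ (s i) (x j) with hp
  have hp0 : ∀ i j ω, 0 ≤ p i j ω := fun i j ω => hκ0 _ _ _
  have hp1 : ∀ i j, ∑ ω, p i j ω = 1 := fun i j => hκ1 _ _
  have hnR : (1:ℝ) ≤ (n:ℝ) := by exact_mod_cast hn
  have hnpos : (0:ℝ) < n := lt_of_lt_of_le one_pos hnR
  have hsq : Real.sqrt n * Real.sqrt n = n := Real.mul_self_sqrt (by positivity)
  have hsq1 : (1:ℝ) ≤ Real.sqrt n := by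
    rw [show (1:ℝ) = Real.sqrt 1 by simp]
    exact Real.sqrt_le_sqrt hnR
  have hsqpos : (0:ℝ) < Real.sqrt n := lt_of_lt_of_le one_pos hsq1
  set lam : ℝ := (Real.sqrt n)⁻¹ with hlamdef
  have hlampos : 0 < lam := inv_pos.mpr hsqpos
  have hlam1 : lam ≤ 1 := by rw [hlamdef]; exact inv_le_one_of_one_le₀ hsq1
  have hlamabs : |lam| ≤ 1 := by rw [abs_of_pos hlampos]; exact hlam1
  have hlamsq : lam ^ 2 = (n:ℝ)⁻¹ := by rw [hlamdef, sq, ← mul_inv, hsq]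
  set N : ℝ := (Fintype.card (Ω × Finset (Fin n) × Finset (Fin n) × Bool) : ℝ) with hNdef
  have hN1 : (1:ℝ) ≤ N := by
    rw [hNdef]; exact_mod_cast Nat.one_le_iff_ne_zero.mpr Fintype.card_ne_zero
  have hNpos : (0:ℝ) < N := lt_of_lt_of_le one_pos hN1
  set a : ℝ := Real.sqrt n * (Real.log N + n) with ha
  have ha0 : 0 ≤ a := mul_nonneg hsqpos.le
    (add_nonneg (Real.log_nonneg hN1) (by positivity))
  set Y : (Ω × Finset (Fin n) × Finset (Fin n) × Bool) → (Fin n → Fin n → Ω) → ℝ :=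
    fun k M => (cond k.2.2.2 (1:ℝ) (-1)) *
      ∑ i ∈ k.2.1, ∑ j ∈ k.2.2.1, (p i j k.1 - if M i j = k.1 then 1 else 0) with hY
  set B : (Fin n → Fin n → Ω) → ℝ :=
    fun M => a + lam⁻¹ * ∑ k, Real.exp (lam * (Y k M - a)) with hBdef
  have hB0 : ∀ M, 0 ≤ B M := fun M => add_nonneg ha0
    (mul_nonneg (inv_pos.mpr hlampos).le
      (Finset.sum_nonneg fun k _ => (Real.exp_pos _).le))
  have hYleB : ∀ k M, Y k M ≤ B M := by
    intro k M
    have h1 : lam * (Y k M - a) ≤ Real.exp (lam * (Y k M - a)) := by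
      linarith [Real.add_one_le_exp (lam * (Y k M - a))]
    have h2 : Real.exp (lam * (Y k M - a)) ≤ ∑ k', Real.exp (lam * (Y k' M - a)) :=
      Finset.single_le_sum (f := fun k' => Real.exp (lam * (Y k' M - a)))
        (fun k' _ => (Real.exp_pos _).le) (Finset.mem_univ k)
    have h3 : Y k M - a = lam⁻¹ * (lam * (Y k M - a)) := by
      rw [inv_mul_cancel_left₀ hlampos.ne']
    have h4 : lam⁻¹ * (lam * (Y k M - a)) ≤ lam⁻¹ * ∑ k', Real.exp (lam * (Y k' M - a)) :=
      mul_le_mul_of_nonneg_left (le_trans h1 h2) (inv_pos.mpr hlampos).le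
    rw [hBdef]
    simp only []
    linarith [h3 ▸ h4]
  have hcut : ∀ M, cutFK (sampleKer κ n s x) (sampleInd n M) ≤ (1/n) * ((1/n) * B M) := by
    intro M
    apply cut_le_bound hn κ s x M (hB0 M)
    intro ω I J e he
    rcases he with he | he
    · have := hYleB (ω, I, J, true) M
      rw [hY] at this
      simp only [cond_true, one_mul] at this
      rw [he, one_mul]
      exact this
    · have := hYleB (ω, I, J, false) M
      rw [hY] at this
      simp only [cond_false] at this
      rw [he]
      exact this
  set w : (Fin n → Fin n → Ω) → ℝ := fun M => ∏ i, ∏ j, p i j (M i j) with hw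
  have hw0 : ∀ M, 0 ≤ w M := fun M =>
    Finset.prod_nonneg fun i _ => Finset.prod_nonneg fun j _ => hp0 i j _
  have hw1 : ∑ M : Fin n → Fin n → Ω, w M = 1 := by
    rw [hw]
    calc ∑ M : Fin n → Fin n → Ω, ∏ i, ∏ j, p i j (M i j)
        = ∏ i, ∑ r : Fin n → Ω, ∏ j, p i j (r j) :=
          (Fintype.prod_sum (κ := fun _ : Fin n => Fin n → Ω)
            (f := fun i (r : Fin n → Ω) => ∏ j, p i j (r j))).symm
      _ = ∏ i : Fin n, ∏ j : Fin n, ∑ ω, p i j ω :=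
          Finset.prod_congr rfl (fun i _ => (Fintype.prod_sum
            (κ := fun _ : Fin n => Ω) (f := fun j ω => p i j ω)).symm)
      _ = 1 := by simp [hp1]
  -- the mgf bound for each k
  have hmgf : ∀ k : Ω × Finset (Fin n) × Finset (Fin n) × Bool,
      ∑ M : Fin n → Fin n → Ω, w M * Real.exp (lam * Y k M) ≤ (1 + lam ^ 2) ^ (n * n) := by
    intro k
    obtain ⟨ω, I, J, b⟩ := k
    cases b
    · have := mgf_bound p hp0 hp1 hlamabs ω I J (e := (-1:ℝ)) (Or.inr rfl)
      exact this
    · have := mgf_bound p hp0 hp1 hlamabs ω I J (e := (1:ℝ)) (Or.inl rfl)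
      exact this
  -- bound on the weighted sum of B
  have hexpa : Real.exp (lam * a) = N * Real.exp n := by
    have : lam * a = Real.log N + n := by
      rw [ha, hlamdef, ← mul_assoc, inv_mul_cancel₀ hsqpos.ne', one_mul]
    rw [this, Real.exp_add, Real.exp_log hNpos]
  have hpow : (1 + lam ^ 2) ^ (n * n) ≤ Real.exp n := by
    calc (1 + lam ^ 2) ^ (n * n)
        ≤ Real.exp (lam ^ 2) ^ (n * n) := by
          apply pow_le_pow_left₀ (by positivity)
          linarith [Real.add_one_le_exp (lam ^ 2)]
      _ = Real.exp ((n * n : ℕ) * lam ^ 2) := by rw [← Real.exp_nat_mul]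
      _ = Real.exp n := by
        congr 1
        rw [hlamsq]
        push_cast
        field_simp
  have hBsum : ∑ M : Fin n → Fin n → Ω, w M * B M ≤ a + Real.sqrt n := by
    have hsplit : ∑ M : Fin n → Fin n → Ω, w M * B M
        = a + lam⁻¹ * ∑ k, (∑ M : Fin n → Fin n → Ω, w M * Real.exp (lam * (Y k M - a))) := by
      rw [hBdef]
      simp only []
      simp_rw [mul_add, Finset.sum_add_distrib, ← Finset.sum_mul, hw1, one_mul]
      congr 1
      simp_rw [Finset.mul_sum]
      rw [Finset.sum_comm]
      apply Finset.sum_congr rfl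
      intro k _
      apply Finset.sum_congr rfl
      intro M _
      ring
    rw [hsplit]
    have hterm : ∀ k : Ω × Finset (Fin n) × Finset (Fin n) × Bool,
        (∑ M : Fin n → Fin n → Ω, w M * Real.exp (lam * (Y k M - a))) ≤ 1 / N := by
      intro k
      have h1 : ∀ M, w M * Real.exp (lam * (Y k M - a))
          = (w M * Real.exp (lam * Y k M)) / Real.exp (lam * a) := by
        intro M
        rw [mul_sub, Real.exp_sub]
        ring
      simp_rw [h1, ← Finset.sum_div]
      rw [div_le_iff₀ (Real.exp_pos _)]
      calc ∑ M : Fin n → Fin n → Ω, w M * Real.exp (lam * Y k M)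
          ≤ (1 + lam ^ 2) ^ (n * n) := hmgf k
        _ ≤ Real.exp n := hpow
        _ = 1 / N * Real.exp (lam * a) := by
          rw [hexpa]
          field_simp
    have h2 : ∑ k, (∑ M : Fin n → Fin n → Ω, w M * Real.exp (lam * (Y k M - a)))
        ≤ ∑ _k : Ω × Finset (Fin n) × Finset (Fin n) × Bool, 1 / N :=
      Finset.sum_le_sum fun k _ => hterm k
    have h3 : ∑ _k : Ω × Finset (Fin n) × Finset (Fin n) × Bool, (1 / N : ℝ) = 1 := by
      rw [Finset.sum_const, Finset.card_univ, nsmul_eq_mul, ← hNdef]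
      field_simp
    have h4 : lam⁻¹ * ∑ k, (∑ M : Fin n → Fin n → Ω, w M * Real.exp (lam * (Y k M - a)))
        ≤ lam⁻¹ * 1 := by
      apply mul_le_mul_of_nonneg_left _ (inv_pos.mpr hlampos).le
      rw [← h3]
      exact h2
    have h5 : lam⁻¹ = Real.sqrt n := by rw [hlamdef, inv_inv]
    linarith [h4, h5 ▸ h4]
  -- log N bound
  have hlogN : Real.log N ≤ n * (Real.log (Fintype.card Ω) + 3 * Real.log 2) := by
    have hcard : N = (Fintype.card Ω : ℝ) * 2 ^ (2 * n + 1) := by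
      rw [hNdef]
      simp only [Fintype.card_prod, Fintype.card_finset, Fintype.card_bool, Fintype.card_fin]
      push_cast
      ring
    have hcardpos : (0:ℝ) < (Fintype.card Ω : ℝ) := by
      exact_mod_cast Fintype.card_pos
    rw [hcard, Real.log_mul hcardpos.ne' (by positivity), Real.log_pow]
    push_cast
    nlinarith [hlogcard, hlog2, hnR]
  -- final chain
  calc ∑ M : Fin n → Fin n → Ω, w M * cutFK (sampleKer κ n s x) (sampleInd n M)
      ≤ ∑ M : Fin n → Fin n → Ω, w M * ((1/n) * ((1/n) * B M)) :=
        Finset.sum_le_sum fun M _ => mul_le_mul_of_nonneg_left (hcut M) (hw0 M)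
    _ = (1/n) * ((1/n) * ∑ M : Fin n → Fin n → Ω, w M * B M) := by
        rw [Finset.mul_sum, Finset.mul_sum]
        apply Finset.sum_congr rfl
        intro M _
        ring
    _ ≤ (1/n) * ((1/n) * (a + Real.sqrt n)) := by
        apply mul_le_mul_of_nonneg_left _ (by positivity)
        exact mul_le_mul_of_nonneg_left hBsum (by positivity)
    _ = (1/n) * ((1/n) * (Real.sqrt n * (Real.log N + n + 1))) := by rw [ha]; ring
    _ ≤ (1/n) * ((1/n) * (Real.sqrt n *
          ((n:ℝ) * (Real.log (Fintype.card Ω) + 3 * Real.log 2 + 2)))) := by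
        apply mul_le_mul_of_nonneg_left _ (by positivity)
        apply mul_le_mul_of_nonneg_left _ (by positivity)
        apply mul_le_mul_of_nonneg_left _ hsqpos.le
        have hexp2 : (n:ℝ) * (Real.log (Fintype.card Ω) + 3 * Real.log 2 + 2)
            = (n:ℝ) * (Real.log (Fintype.card Ω) + 3 * Real.log 2) + 2 * n := by ring
        linarith [hlogN, hnR]
    _ = (Real.log (Fintype.card Ω) + 3 * Real.log 2 + 2) / Real.sqrt n := by
        rw [eq_div_iff hsqpos.ne', ← hsq]
        field_simp
        rw [Real.sq_sqrt hnpos.le]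
        ring_nf
        rw [Real.sq_sqrt hnpos.le]

end CutAux

/-- Lemma (sampling versus resampling). -/
theorem expected_cut_sample_resample {Ω : Type*} [Fintype Ω] :
    ∃ C : ℝ, 0 < C ∧ ∀ n : ℕ, 1 ≤ n → ∀ κ : ℝ → ℝ → Ω → ℝ, IsKernel κ →
      (∫ s in (Set.univ.pi fun _ : Fin n => Set.Icc (0 : ℝ) 1),
        (∫ x in (Set.univ.pi fun _ : Fin n => Set.Icc (0 : ℝ) 1),
          ∑ M : Fin n → Fin n → Ω,
            (∏ i, ∏ j, κ (s i) (x j) (M i j)) *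
              cutFK (sampleKer κ n s x) (sampleInd n M)))
      ≤ C / Real.sqrt n := by
  have hlog2 : (0:ℝ) < Real.log 2 := Real.log_pos one_lt_two
  have hlogcard : (0:ℝ) ≤ Real.log (Fintype.card Ω) := by
    rcases Nat.eq_zero_or_pos (Fintype.card Ω) with h | h
    · simp [h]
    · exact Real.log_nonneg (by exact_mod_cast h)
  refine ⟨Real.log (Fintype.card Ω) + 3 * Real.log 2 + 2, by linarith, ?_⟩
  intro n hn κ hκ
  set C : ℝ := Real.log (Fintype.card Ω) + 3 * Real.log 2 + 2 with hC
  have hC0 : 0 ≤ C := by rw [hC]; linarith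
  have hCd0 : 0 ≤ C / Real.sqrt n := div_nonneg hC0 (Real.sqrt_nonneg _)
  set cube : Set (Fin n → ℝ) := Set.univ.pi fun _ : Fin n => Set.Icc (0:ℝ) 1 with hcube
  have hcubem : MeasurableSet cube :=
    MeasurableSet.univ_pi fun _ => measurableSet_Icc
  have hvol : volume cube = 1 := by
    rw [hcube, volume_pi_pi]
    simp [Real.volume_Icc]
  have hvollt : volume cube < ⊤ := by rw [hvol]; exact ENNReal.one_lt_top
  set g : (Fin n → ℝ) → (Fin n → ℝ) → ℝ := fun s x =>
    ∑ M : Fin n → Fin n → Ω, (∏ i, ∏ j, κ (s i) (x j) (M i j)) *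
      cutFK (sampleKer κ n s x) (sampleInd n M) with hg
  have hgle : ∀ s x, g s x ≤ C / Real.sqrt n := fun s x => CutAux.pointwise hn κ hκ s x
  have hg0 : ∀ s x, 0 ≤ g s x := by
    intro s x
    apply Finset.sum_nonneg
    intro M _
    apply mul_nonneg
    · exact Finset.prod_nonneg fun i _ => Finset.prod_nonneg fun j _ => hκ.2.1 _ _ _
    · apply Real.sSup_nonneg
      rintro d ⟨S, X, _, _, _, _, ω, rfl⟩
      exact abs_nonneg _
  set φ : (Fin n → ℝ) → ℝ := fun s => ∫ x in cube, g s x with hφ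
  have hφ0 : ∀ s, 0 ≤ φ s := fun s => setIntegral_nonneg hcubem fun x _ => hg0 s x
  have hφle : ∀ s, φ s ≤ C / Real.sqrt n := by
    intro s
    by_cases hint : IntegrableOn (g s) cube volume
    · calc φ s ≤ ∫ _x in cube, C / Real.sqrt n :=
          setIntegral_mono_on hint (integrableOn_const hvollt.ne) hcubem
            (fun x _ => hgle s x)
        _ = C / Real.sqrt n := by
          rw [setIntegral_const, measureReal_def, hvol]
          simp
    · rw [hφ]
      simp only []
      rw [integral_undef hint]
      exact hCd0
  by_cases hint : IntegrableOn φ cube volume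
  · calc (∫ s in cube, φ s) ≤ ∫ _s in cube, C / Real.sqrt n :=
        setIntegral_mono_on hint (integrableOn_const hvollt.ne) hcubem
          (fun s _ => hφle s)
      _ = C / Real.sqrt n := by
        rw [setIntegral_const, measureReal_def, hvol]
        simp
  · rw [integral_undef hint]
    exact hCd0
end

section
/- Let S be the space of measurable functions σ : [0,1] → P(Ω) (Ω finite) modulo a.e. equality, and for a kernel κ : [0,1]² → P(Ω) let μ^κ be the distribution of the S-valued random variable s ↦ κ_{s,·} for uniform s ∈ [0,1]. Then for any measurable f, g : [0,1] → S with kernel representations κ^f, κ^g, the strong cut distance satisfies D_⊘(μ^f, μ^g) ≤ D_⊘(κ^f, κ^g). -/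
open scoped BigOperators
open MeasureTheory

/-- A measure-preserving bijection of `[0,1]` (with Lebesgue measure). -/
def IsMPB (φ : ℝ → ℝ) : Prop :=
  Set.BijOn φ (Set.Icc 0 1) (Set.Icc 0 1) ∧
  MeasurePreserving φ (volume.restrict (Set.Icc 0 1)) (volume.restrict (Set.Icc 0 1))

/-- The strong cut distance `D_⊘` between two laws (probability measures on the space
`S` of maps `[0,1] → P(Ω)`, modelled as functions `ℝ → Ω → ℝ`): the infimum over
couplings of the supremum over measurable events `B ⊆ S × S`, measurable `X ⊆ [0,1]`
and `ω ∈ Ω` of the discrepancy. -/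
noncomputable def cutSLaw {Ω : Type*} [Fintype Ω] [MeasurableSpace Ω]
    (μ ν : Measure (ℝ → Ω → ℝ)) : ℝ :=
  sInf { d | ∃ γ : Measure ((ℝ → Ω → ℝ) × (ℝ → Ω → ℝ)),
    γ.map Prod.fst = μ ∧ γ.map Prod.snd = ν ∧
    d = sSup { r | ∃ B : Set ((ℝ → Ω → ℝ) × (ℝ → Ω → ℝ)), MeasurableSet B ∧
      ∃ X : Set ℝ, MeasurableSet X ∧ X ⊆ Set.Icc 0 1 ∧ ∃ ω : Ω,
      r = |∫ p in B, (∫ x in X, (p.1 x ω - p.2 x ω)) ∂γ| } }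

/-- The strong cut distance `D_⊘` between two kernels: the infimum over
measure-preserving bijections `φ` of `[0,1]` of the supremum over measurable
`S, X ⊆ [0,1]` and `ω ∈ Ω` of the discrepancy. -/
noncomputable def cutSKer {Ω : Type*} [Fintype Ω] (κ κ' : ℝ → ℝ → Ω → ℝ) : ℝ :=
  sInf { d | ∃ φ : ℝ → ℝ, IsMPB φ ∧
    d = sSup { r | ∃ S X : Set ℝ, MeasurableSet S ∧ MeasurableSet X ∧
      S ⊆ Set.Icc 0 1 ∧ X ⊆ Set.Icc 0 1 ∧ ∃ ω : Ω,
      r = |∫ s in S, (∫ x in X, (κ s x ω - κ' (φ s) x ω))| } }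

/-- Lemma (laws are no further apart than their kernel representations): for
measurable `f, g : [0,1] → S` with kernel representations `κ^f, κ^g` and induced
laws `μ^f = f_*λ`, `μ^g = g_*λ`, one has `D_⊘(μ^f, μ^g) ≤ D_⊘(κ^f, κ^g)`. -/
theorem cutSLaw_le_cutSKer {Ω : Type*} [Fintype Ω] [MeasurableSpace Ω]
    (f g : ℝ → (ℝ → Ω → ℝ)) (hf : Measurable f) (hg : Measurable g)
    (hfP : ∀ s ∈ Set.Icc (0 : ℝ) 1, ∀ x ∈ Set.Icc (0 : ℝ) 1,
      (∀ ω, 0 ≤ f s x ω) ∧ ∑ ω, f s x ω = 1)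
    (hgP : ∀ s ∈ Set.Icc (0 : ℝ) 1, ∀ x ∈ Set.Icc (0 : ℝ) 1,
      (∀ ω, 0 ≤ g s x ω) ∧ ∑ ω, g s x ω = 1) :
    cutSLaw (Measure.map f (volume.restrict (Set.Icc 0 1)))
        (Measure.map g (volume.restrict (Set.Icc 0 1)))
      ≤ cutSKer (fun s x => f s x) (fun s x => g s x) := by
    classical
  set lam : Measure ℝ := volume.restrict (Set.Icc 0 1) with hlam
  -- the kernel distance is an sInf over a nonempty set
  apply le_csInf
  · exact ⟨_, id, ⟨Set.bijOn_id _, MeasurePreserving.id _⟩, rfl⟩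
  rintro d ⟨φ, hφ, rfl⟩
  set T : ℝ → (ℝ → Ω → ℝ) × (ℝ → Ω → ℝ) := fun s => (f s, g (φ s)) with hTdef
  have hTm : Measurable T := hf.prodMk (hg.comp hφ.2.measurable)
  set γ : Measure ((ℝ → Ω → ℝ) × (ℝ → Ω → ℝ)) := Measure.map T lam with hγdef
  have hfst : γ.map Prod.fst = Measure.map f lam := by
    rw [hγdef, Measure.map_map measurable_fst hTm]; rfl
  have hsnd : γ.map Prod.snd = Measure.map g lam := by
    rw [hγdef, Measure.map_map measurable_snd hTm]
    have h1 : (Prod.snd ∘ T) = g ∘ φ := rfl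
    rw [h1, ← Measure.map_map hg hφ.2.measurable, hφ.2.map_eq]
  -- basic bounds
  have hIccfin : (volume (Set.Icc (0:ℝ) 1)) = 1 := by
    simp [Real.volume_Icc]
  -- every element of the kernel sup-set is ≤ 1
  have hker_bdd : ∀ r ∈ { r | ∃ S X : Set ℝ, MeasurableSet S ∧ MeasurableSet X ∧
      S ⊆ Set.Icc 0 1 ∧ X ⊆ Set.Icc 0 1 ∧ ∃ ω : Ω,
      r = |∫ s in S, (∫ x in X, (f s x ω - g (φ s) x ω))| }, r ≤ 1 := by
    rintro r ⟨S, X, hS, hX, hSsub, hXsub, ω, rfl⟩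
    have hSfin : volume S < ⊤ :=
      lt_of_le_of_lt ((measure_mono hSsub : volume S ≤ volume (Set.Icc (0:ℝ) 1)))
        (by rw [hIccfin]; exact ENNReal.one_lt_top)
    have hXfin : volume X < ⊤ :=
      lt_of_le_of_lt ((measure_mono hXsub : volume X ≤ volume (Set.Icc (0:ℝ) 1)))
        (by rw [hIccfin]; exact ENNReal.one_lt_top)
    have hSle : (volume S).toReal ≤ 1 := by
      have : volume S ≤ volume (Set.Icc (0:ℝ) 1) := measure_mono hSsub
      rw [hIccfin] at this
      simpa using ENNReal.toReal_mono ENNReal.one_ne_top this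
    have hXle : (volume X).toReal ≤ 1 := by
      have : volume X ≤ volume (Set.Icc (0:ℝ) 1) := measure_mono hXsub
      rw [hIccfin] at this
      simpa using ENNReal.toReal_mono ENNReal.one_ne_top this
    have hinner : ∀ s ∈ S, ‖∫ x in X, (f s x ω - g (φ s) x ω)‖ ≤ 1 := by
      intro s hs
      have hsI := hSsub hs
      have hφsI := hφ.1.mapsTo hsI
      have hb : ∀ x ∈ X, ‖f s x ω - g (φ s) x ω‖ ≤ 1 := by
        intro x hx
        have hxI := hXsub hx
        obtain ⟨hf0, hf1⟩ := hfP s hsI x hxI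
        obtain ⟨hg0, hg1⟩ := hgP (φ s) hφsI x hxI
        have hfub : f s x ω ≤ 1 := by
          rw [← hf1]
          exact Finset.single_le_sum (fun ω' _ => hf0 ω') (Finset.mem_univ ω)
        have hgub : g (φ s) x ω ≤ 1 := by
          rw [← hg1]
          exact Finset.single_le_sum (fun ω' _ => hg0 ω') (Finset.mem_univ ω)
        rw [Real.norm_eq_abs, abs_le]
        constructor <;> [linarith [hf0 ω, hg0 ω]; linarith [hf0 ω, hg0 ω]]
      calc ‖∫ x in X, (f s x ω - g (φ s) x ω)‖ ≤ 1 * (volume X).toReal :=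
            norm_setIntegral_le_of_norm_le_const hXfin hb
        _ ≤ 1 := by simpa using hXle
    calc |∫ s in S, (∫ x in X, (f s x ω - g (φ s) x ω))|
        ≤ 1 * (volume S).toReal :=
          norm_setIntegral_le_of_norm_le_const hSfin hinner
      _ ≤ 1 := by simpa using hSle
  -- the law sInf set is bounded below by 0
  have hlaw_bdd : BddBelow { d | ∃ γ' : Measure ((ℝ → Ω → ℝ) × (ℝ → Ω → ℝ)),
      γ'.map Prod.fst = Measure.map f lam ∧ γ'.map Prod.snd = Measure.map g lam ∧
      d = sSup { r | ∃ B : Set ((ℝ → Ω → ℝ) × (ℝ → Ω → ℝ)), MeasurableSet B ∧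
        ∃ X : Set ℝ, MeasurableSet X ∧ X ⊆ Set.Icc 0 1 ∧ ∃ ω : Ω,
        r = |∫ p in B, (∫ x in X, (p.1 x ω - p.2 x ω)) ∂γ'| } } := by
    refine ⟨0, ?_⟩
    rintro a ⟨γ', _, _, rfl⟩
    exact Real.sSup_nonneg (by rintro r ⟨B, hB, X, hX, hXs, ω, rfl⟩; positivity)
  have hmem : sSup { r | ∃ B : Set ((ℝ → Ω → ℝ) × (ℝ → Ω → ℝ)), MeasurableSet B ∧
        ∃ X : Set ℝ, MeasurableSet X ∧ X ⊆ Set.Icc 0 1 ∧ ∃ ω : Ω,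
        r = |∫ p in B, (∫ x in X, (p.1 x ω - p.2 x ω)) ∂γ| } ∈
      { d | ∃ γ' : Measure ((ℝ → Ω → ℝ) × (ℝ → Ω → ℝ)),
      γ'.map Prod.fst = Measure.map f lam ∧ γ'.map Prod.snd = Measure.map g lam ∧
      d = sSup { r | ∃ B : Set ((ℝ → Ω → ℝ) × (ℝ → Ω → ℝ)), MeasurableSet B ∧
        ∃ X : Set ℝ, MeasurableSet X ∧ X ⊆ Set.Icc 0 1 ∧ ∃ ω : Ω,
        r = |∫ p in B, (∫ x in X, (p.1 x ω - p.2 x ω)) ∂γ'| } } :=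
    ⟨γ, hfst, hsnd, rfl⟩
  refine le_trans (csInf_le hlaw_bdd hmem) ?_
  -- now: sSup (law set for γ) ≤ sSup (kernel set for φ)
  refine Real.sSup_le ?_ ?_
  swap
  · exact Real.sSup_nonneg (by rintro r ⟨S, X, hS, hX, _, _, ω, rfl⟩; positivity)
  rintro r ⟨B, hB, X, hX, hXsub, ω, rfl⟩
  -- show r belongs to the kernel set, then ≤ its sSup
  have hkset_bdd : BddAbove { r | ∃ S X : Set ℝ, MeasurableSet S ∧ MeasurableSet X ∧
      S ⊆ Set.Icc 0 1 ∧ X ⊆ Set.Icc 0 1 ∧ ∃ ω : Ω,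
      r = |∫ s in S, (∫ x in X, (f s x ω - g (φ s) x ω))| } := ⟨1, hker_bdd⟩
  have key : |∫ p in B, (∫ x in X, (p.1 x ω - p.2 x ω)) ∂γ| ∈
      { r | ∃ S X : Set ℝ, MeasurableSet S ∧ MeasurableSet X ∧
      S ⊆ Set.Icc 0 1 ∧ X ⊆ Set.Icc 0 1 ∧ ∃ ω : Ω,
      r = |∫ s in S, (∫ x in X, (f s x ω - g (φ s) x ω))| } := by
    set H : (ℝ → Ω → ℝ) × (ℝ → Ω → ℝ) → ℝ := fun p => ∫ x in X, (p.1 x ω - p.2 x ω)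
      with hHdef
    by_cases hint : AEStronglyMeasurable H (γ.restrict B)
    · -- transfer via the pushforward
      have h1 : ∫ p in B, H p ∂γ = ∫ p, B.indicator H p ∂γ :=
        (integral_indicator hB).symm
      have h2 : AEStronglyMeasurable (B.indicator H) γ :=
        (aestronglyMeasurable_indicator_iff hB).2 hint
      have h3 : ∫ p, B.indicator H p ∂γ = ∫ s, B.indicator H (T s) ∂lam :=
        integral_map hTm.aemeasurable h2
      have h4 : ∀ s, B.indicator H (T s) = (T ⁻¹' B).indicator (H ∘ T) s := by
        intro s
        rw [Set.indicator_comp_right]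
      have h5 : ∫ s, B.indicator H (T s) ∂lam = ∫ s in T ⁻¹' B, H (T s) ∂lam := by
        simp_rw [h4]
        exact integral_indicator (hTm hB)
      have h6 : ∫ s in T ⁻¹' B, H (T s) ∂lam
          = ∫ s in T ⁻¹' B ∩ Set.Icc 0 1, H (T s) ∂volume := by
        rw [hlam, Measure.restrict_restrict (hTm hB)]
      refine ⟨T ⁻¹' B ∩ Set.Icc 0 1, X, (hTm hB).inter measurableSet_Icc, hX,
        Set.inter_subset_right, hXsub, ω, ?_⟩
      rw [h1, h3, h5, h6]
  
    · -- the integral is zero because the integrand isn't a.e. measurable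
      have : ¬ Integrable H (γ.restrict B) := fun h => hint h.1
      rw [integral_undef this]
      exact ⟨∅, X, MeasurableSet.empty, hX, by simp, hXsub, ω, by simp⟩
  exact le_csSup hkset_bdd key
end

section
/- The space K of measurable kernels [0,1]² → P(Ω) (Ω finite), modulo a.e. equality, is complete with respect to the cut metric D_⧠(κ,κ') = sup_{S,X,ω} |∫_S∫_X(κ_{s,x}(ω) − κ'_{s,x}(ω)) dx ds|. -/
open scoped BigOperators
open MeasureTheory Filter Topology
open scoped RealInnerProductSpace ENNReal

namespace KernelComplete

lemma exists_weak_limit {ι : Type*} [Finite ι] {H : Type*} [NormedAddCommGroup H]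
    [InnerProductSpace ℝ H] [CompleteSpace H] [TopologicalSpace.SeparableSpace H]
    (C : ℝ) (f : ℕ → ι → H) (hf : ∀ n i, ‖f n i‖ ≤ C) :
    ∃ φ : ℕ → ℕ, StrictMono φ ∧ ∃ F : ι → H,
      ∀ (i : ι) (g : H), Tendsto (fun k => ⟪g, f (φ k) i⟫) atTop (𝓝 ⟪g, F i⟫) := by
  cases isEmpty_or_nonempty ι with
  | inl h => exact ⟨id, strictMono_id, fun i => isEmptyElim i, fun i => isEmptyElim i⟩
  | inr h =>
  have hC : 0 ≤ C := le_trans (norm_nonneg _) (hf 0 (Classical.arbitrary ι))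
  have : Nonempty H := ⟨0⟩
  set u : ℕ → H := TopologicalSpace.denseSeq H with hu
  have hdense : DenseRange u := TopologicalSpace.denseRange_denseSeq H
  set a : ℕ → (ι × ℕ) → ℝ := fun n q => ⟪u q.2, f n q.1⟫ with ha
  have hmem : ∀ n, a n ∈ Set.pi Set.univ (fun q : ι × ℕ => Set.Icc (-(‖u q.2‖ * C)) (‖u q.2‖ * C)) := by
    intro n q _
    have h1 : |⟪u q.2, f n q.1⟫| ≤ ‖u q.2‖ * ‖f n q.1‖ := abs_real_inner_le_norm _ _
    have h2 : ‖u q.2‖ * ‖f n q.1‖ ≤ ‖u q.2‖ * C :=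
      mul_le_mul_of_nonneg_left (hf n q.1) (norm_nonneg _)
    have := abs_le.mp (h1.trans h2)
    exact ⟨this.1, this.2⟩
  have hcomp : IsCompact (Set.pi Set.univ (fun q : ι × ℕ => Set.Icc (-(‖u q.2‖ * C)) (‖u q.2‖ * C))) :=
    isCompact_univ_pi fun q => isCompact_Icc
  obtain ⟨b, _, φ, hφ, hconv⟩ := hcomp.tendsto_subseq hmem
  have hcoord : ∀ q : ι × ℕ, Tendsto (fun k => a (φ k) q) atTop (𝓝 (b q)) := by
    intro q
    exact (tendsto_pi_nhds.mp hconv q)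
  -- Cauchy against arbitrary g
  have key : ∀ (i : ι) (g : H), CauchySeq (fun k => ⟪g, f (φ k) i⟫) := by
    intro i g
    rw [Metric.cauchySeq_iff]
    intro ε hε
    obtain ⟨j, hj⟩ := hdense.exists_dist_lt g (by positivity : (0:ℝ) < ε / (3 * (C + 1)))
    have hcs : CauchySeq (fun k => a (φ k) (i, j)) := (hcoord (i, j)).cauchySeq
    rw [Metric.cauchySeq_iff] at hcs
    obtain ⟨N, hN⟩ := hcs (ε / 3) (by positivity)
    refine ⟨N, fun k hk l hl => ?_⟩
    have hbd : ∀ m, |⟪g - u j, f m i⟫| ≤ ε / 3 := by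
      intro m
      have h1 : |⟪g - u j, f m i⟫| ≤ ‖g - u j‖ * ‖f m i‖ := abs_real_inner_le_norm _ _
      have h2 : ‖g - u j‖ * ‖f m i‖ ≤ ‖g - u j‖ * C :=
        mul_le_mul_of_nonneg_left (hf m i) (norm_nonneg _)
      have h3 : ‖g - u j‖ ≤ ε / (3 * (C + 1)) := by
        rw [← dist_eq_norm]; exact le_of_lt hj
      have h4 : ‖g - u j‖ * C ≤ ε / (3 * (C + 1)) * (C + 1) := by
        apply mul_le_mul h3 (by linarith) hC (by positivity)
      have h5 : ε / (3 * (C + 1)) * (C + 1) = ε / 3 := by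
        field_simp
      linarith [h1.trans (h2.trans (h4.trans_eq h5))]
    have hsplit : ∀ m, ⟪g, f m i⟫ = ⟪g - u j, f m i⟫ + ⟪u j, f m i⟫ := by
      intro m
      rw [← inner_add_left, sub_add_cancel]
    have hNkl := hN k hk l hl
    simp only [ha] at hNkl
    rw [Real.dist_eq, abs_sub_lt_iff] at hNkl
    have e1 := abs_le.mp (hbd (φ k))
    have e2 := abs_le.mp (hbd (φ l))
    rw [Real.dist_eq, hsplit (φ k), hsplit (φ l), abs_lt]
    exact ⟨by linarith [hNkl.1, hNkl.2, e1.1, e1.2, e2.1, e2.2],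
           by linarith [hNkl.1, hNkl.2, e1.1, e1.2, e2.1, e2.2]⟩
  have hlim : ∀ (i : ι) (g : H), ∃ l : ℝ, Tendsto (fun k => ⟪g, f (φ k) i⟫) atTop (𝓝 l) :=
    fun i g => cauchySeq_tendsto_of_complete (key i g)
  choose L hL using hlim
  -- L i is a bounded linear functional
  have hadd : ∀ i g g', L i (g + g') = L i g + L i g' := by
    intro i g g'
    refine tendsto_nhds_unique ?_ ((hL i g).add (hL i g'))
    have : (fun k => ⟪g + g', f (φ k) i⟫) = fun k => ⟪g, f (φ k) i⟫ + ⟪g', f (φ k) i⟫ := by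
      funext k; rw [inner_add_left]
    rw [← this]; exact hL i (g + g')
  have hsmul : ∀ (i : ι) (c : ℝ) (g : H), L i (c • g) = c * L i g := by
    intro i c g
    refine tendsto_nhds_unique ?_ ((hL i g).const_mul c)
    have : (fun k => ⟪c • g, f (φ k) i⟫) = fun k => c * ⟪g, f (φ k) i⟫ := by
      funext k; rw [real_inner_smul_left]
    rw [← this]; exact hL i (c • g)
  have hbound : ∀ i g, |L i g| ≤ C * ‖g‖ := by
    intro i g
    refine le_of_tendsto (hL i g).abs (Eventually.of_forall fun k => ?_)
    calc |⟪g, f (φ k) i⟫| ≤ ‖g‖ * ‖f (φ k) i‖ := abs_real_inner_le_norm _ _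
      _ ≤ ‖g‖ * C := mul_le_mul_of_nonneg_left (hf _ _) (norm_nonneg _)
      _ = C * ‖g‖ := mul_comm _ _
  have hF : ∀ i : ι, ∃ F : H, ∀ g, ⟪F, g⟫ = L i g := by
    intro i
    let T : H →ₗ[ℝ] ℝ := { toFun := L i, map_add' := hadd i, map_smul' := fun c g => hsmul i c g }
    let Tc : H →L[ℝ] ℝ := LinearMap.mkContinuous T C (fun g => by
      simpa [T, Real.norm_eq_abs] using hbound i g)
    refine ⟨(InnerProductSpace.toDual ℝ H).symm Tc, fun g => ?_⟩
    exact InnerProductSpace.toDual_symm_apply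
  choose F hFspec using hF
  refine ⟨φ, hφ, F, fun i g => ?_⟩
  have : ⟪g, F i⟫ = L i g := by rw [real_inner_comm]; exact hFspec i g
  rw [this]; exact hL i g


/-- The unit square. -/
def Q : Set (ℝ × ℝ) := Set.Icc 0 1 ×ˢ Set.Icc 0 1

lemma measurableSet_Q : MeasurableSet Q := measurableSet_Icc.prod measurableSet_Icc

/-- Lebesgue measure restricted to the unit square. -/
noncomputable def μK : Measure (ℝ × ℝ) := volume.restrict Q

lemma μK_univ : μK Set.univ = 1 := by
  rw [μK, Measure.restrict_apply_univ, Q, Measure.volume_eq_prod, Measure.prod_prod, Real.volume_Icc]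
  norm_num

instance : IsFiniteMeasure μK := ⟨by rw [μK_univ]; exact ENNReal.one_lt_top⟩

variable {Ω : Type*} [Fintype Ω] {κ κ' : ℝ → ℝ → Ω → ℝ}

lemma kernel_le_one (hκ : IsKernel κ) (s x : ℝ) (ω : Ω) : κ s x ω ≤ 1 := by
  have h := hκ.2.2 s x
  calc κ s x ω ≤ ∑ ω', κ s x ω' :=
        Finset.single_le_sum (fun i _ => hκ.2.1 s x i) (Finset.mem_univ ω)
    _ = 1 := h

lemma kernel_memL2 (hκ : IsKernel κ) (ω : Ω) :
    MemLp (fun p : ℝ × ℝ => κ p.1 p.2 ω) 2 μK :=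
  MemLp.of_bound (hκ.1 ω).aestronglyMeasurable 1 (ae_of_all _ fun p => by
    rw [Real.norm_eq_abs, abs_of_nonneg (hκ.2.1 _ _ _)]
    exact kernel_le_one hκ _ _ _)

lemma kernel_norm_toLp_le (hκ : IsKernel κ) (ω : Ω) :
    ‖(kernel_memL2 hκ ω).toLp _‖ ≤ 1 := by
  rw [Lp.norm_toLp]
  have h := eLpNorm_le_of_ae_bound (μ := μK) (p := 2)
    (f := fun p : ℝ × ℝ => κ p.1 p.2 ω) (C := 1) (ae_of_all _ fun p => by
      rw [Real.norm_eq_abs, abs_of_nonneg (hκ.2.1 _ _ _)]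
      exact kernel_le_one hκ _ _ _)
  rw [μK_univ, ENNReal.one_rpow, one_mul, ENNReal.ofReal_one] at h
  calc (eLpNorm (fun p : ℝ × ℝ => κ p.1 p.2 ω) 2 μK).toReal
      ≤ (1 : ℝ≥0∞).toReal := ENNReal.toReal_mono ENNReal.one_ne_top h
    _ = 1 := by simp

lemma kernel_integrable (hκ : IsKernel κ) (ω : Ω) :
    Integrable (fun p : ℝ × ℝ => κ p.1 p.2 ω) μK :=
  (kernel_memL2 hκ ω).integrable one_le_two

lemma kernel_inner_indicator (hκ : IsKernel κ) (ω : Ω) {A : Set (ℝ × ℝ)}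
    (hA : MeasurableSet A) :
    ⟪indicatorConstLp 2 hA (measure_ne_top μK A) (1 : ℝ), (kernel_memL2 hκ ω).toLp _⟫ =
      ∫ p in A, κ p.1 p.2 ω ∂μK := by
  rw [L2.inner_indicatorConstLp_one]
  exact setIntegral_congr_ae hA ((MemLp.coeFn_toLp (kernel_memL2 hκ ω)).mono fun p hp _ => hp)

lemma vol_le_one {X : Set ℝ} (hXQ : X ⊆ Set.Icc 0 1) : (volume X).toReal ≤ 1 := by
  have h : volume X ≤ volume (Set.Icc (0:ℝ) 1) := measure_mono hXQ
  rw [Real.volume_Icc] at h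
  norm_num at h
  calc (volume X).toReal ≤ (1 : ℝ≥0∞).toReal := ENNReal.toReal_mono ENNReal.one_ne_top h
    _ = 1 := by simp

lemma vol_lt_top {X : Set ℝ} (hXQ : X ⊆ Set.Icc 0 1) : volume X < ∞ := by
  have h : volume X ≤ volume (Set.Icc (0:ℝ) 1) := measure_mono hXQ
  rw [Real.volume_Icc] at h
  exact lt_of_le_of_lt h (by norm_num)

/-- Conversion: iterated integral of a difference of kernels over `S × X` equals the difference
of set integrals w.r.t. `μK`. -/
lemma iter_eq (hκ : IsKernel κ) (hκ' : IsKernel κ') {S X : Set ℝ}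
    (hS : MeasurableSet S) (hX : MeasurableSet X)
    (hSQ : S ⊆ Set.Icc 0 1) (hXQ : X ⊆ Set.Icc 0 1) (ω : Ω) :
    ∫ s in S, (∫ x in X, (κ s x ω - κ' s x ω)) =
      (∫ p in S ×ˢ X, κ p.1 p.2 ω ∂μK) - ∫ p in S ×ˢ X, κ' p.1 p.2 ω ∂μK := by
  have hprod : S ×ˢ X ⊆ Q := Set.prod_mono hSQ hXQ
  have hmeas : MeasurableSet (S ×ˢ X) := hS.prod hX
  have hrestrict : μK.restrict (S ×ˢ X) = volume.restrict (S ×ˢ X) := by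
    rw [μK, Measure.restrict_restrict hmeas, Set.inter_eq_self_of_subset_left hprod]
  have hvol : (volume : Measure (ℝ × ℝ)) (S ×ˢ X) ≠ ∞ := by
    rw [Measure.volume_eq_prod, Measure.prod_prod]
    exact (ENNReal.mul_lt_top (vol_lt_top hSQ) (vol_lt_top hXQ)).ne
  have hint : IntegrableOn (fun p : ℝ × ℝ => κ p.1 p.2 ω - κ' p.1 p.2 ω) (S ×ˢ X) volume := by
    apply Measure.integrableOn_of_bounded hvol
      ((hκ.1 ω).sub (hκ'.1 ω)).aestronglyMeasurable (M := 2)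
    refine ae_of_all _ fun p => ?_
    rw [Real.norm_eq_abs, abs_le]
    simp only [Pi.sub_apply]
    constructor <;>
      nlinarith [hκ.2.1 p.1 p.2 ω, hκ'.2.1 p.1 p.2 ω, kernel_le_one hκ p.1 p.2 ω, kernel_le_one hκ' p.1 p.2 ω]
  have h1 : ∫ p in S ×ˢ X, (κ p.1 p.2 ω - κ' p.1 p.2 ω) ∂(volume : Measure (ℝ × ℝ)) =
      ∫ s in S, (∫ x in X, (κ s x ω - κ' s x ω)) := by
    rw [Measure.volume_eq_prod] at hint ⊢
    exact setIntegral_prod _ hint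
  rw [← h1]
  have h2 : ∀ g : ℝ × ℝ → ℝ, ∫ p in S ×ˢ X, g p ∂μK = ∫ p in S ×ˢ X, g p ∂(volume : Measure (ℝ × ℝ)) := by
    intro g
    unfold μK
    rw [Measure.restrict_restrict hmeas, Set.inter_eq_self_of_subset_left hprod]
  have hintμ : IntegrableOn (fun p : ℝ × ℝ => κ p.1 p.2 ω - κ' p.1 p.2 ω) (S ×ˢ X) μK := by
    rw [IntegrableOn, μK, Measure.restrict_restrict hmeas, Set.inter_eq_self_of_subset_left hprod]
    exact hint
  rw [← integral_sub ((kernel_integrable hκ ω).integrableOn) ((kernel_integrable hκ' ω).integrableOn),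
    h2 (fun p => κ p.1 p.2 ω - κ' p.1 p.2 ω)]


lemma abs_iter_le_two (hκ : IsKernel κ) (hκ' : IsKernel κ') {S X : Set ℝ}
    (hS : MeasurableSet S) (hX : MeasurableSet X)
    (hSQ : S ⊆ Set.Icc 0 1) (hXQ : X ⊆ Set.Icc 0 1) (ω : Ω) :
    |∫ s in S, (∫ x in X, (κ s x ω - κ' s x ω))| ≤ 2 := by
  have hinner : ∀ s : ℝ, |∫ x in X, (κ s x ω - κ' s x ω)| ≤ 2 := by
    intro s
    have h := norm_setIntegral_le_of_norm_le_const (μ := volume) (s := X) (C := 2)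
      (vol_lt_top hXQ) (f := fun x => κ s x ω - κ' s x ω) (fun x _ => by
        rw [Real.norm_eq_abs, abs_le]
        refine ⟨?_, ?_⟩ <;> beta_reduce <;>
          nlinarith [hκ.2.1 s x ω, hκ'.2.1 s x ω, kernel_le_one hκ s x ω, kernel_le_one hκ' s x ω])
    rw [Real.norm_eq_abs, Measure.real] at h
    nlinarith [vol_le_one hXQ, ENNReal.toReal_nonneg (a := volume X)]
  have h := norm_setIntegral_le_of_norm_le_const (μ := volume) (s := S) (C := 2)
    (vol_lt_top hSQ) (f := fun s => ∫ x in X, (κ s x ω - κ' s x ω)) (fun s _ => by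
      rw [Real.norm_eq_abs]; exact hinner s)
  rw [Real.norm_eq_abs, Measure.real] at h
  nlinarith [vol_le_one hSQ, ENNReal.toReal_nonneg (a := volume S)]

lemma cutFK_bddAbove (hκ : IsKernel κ) (hκ' : IsKernel κ') :
    ∀ d ∈ { d | ∃ S X : Set ℝ, MeasurableSet S ∧ MeasurableSet X ∧
      S ⊆ Set.Icc 0 1 ∧ X ⊆ Set.Icc 0 1 ∧ ∃ ω : Ω,
      d = |∫ s in S, (∫ x in X, (κ s x ω - κ' s x ω))| }, d ≤ 2 := by
  rintro d ⟨S, X, hS, hX, hSQ, hXQ, ω, rfl⟩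
  exact abs_iter_le_two hκ hκ' hS hX hSQ hXQ ω

lemma abs_iter_le_cutFK (hκ : IsKernel κ) (hκ' : IsKernel κ') {S X : Set ℝ}
    (hS : MeasurableSet S) (hX : MeasurableSet X)
    (hSQ : S ⊆ Set.Icc 0 1) (hXQ : X ⊆ Set.Icc 0 1) (ω : Ω) :
    |∫ s in S, (∫ x in X, (κ s x ω - κ' s x ω))| ≤ cutFK κ κ' :=
  le_csSup ⟨2, fun d hd => cutFK_bddAbove hκ hκ' d hd⟩ ⟨S, X, hS, hX, hSQ, hXQ, ω, rfl⟩

lemma cutFK_nonneg [Nonempty Ω] (hκ : IsKernel κ) (hκ' : IsKernel κ') :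
    0 ≤ cutFK κ κ' := by
  have h0 := abs_iter_le_cutFK hκ hκ' MeasurableSet.empty MeasurableSet.empty
    (Set.empty_subset _) (Set.empty_subset _) (Classical.arbitrary Ω)
  simpa using le_trans (abs_nonneg _) h0

lemma cutFK_le (hκ : IsKernel κ) (hκ' : IsKernel κ') {c : ℝ} (hc : 0 ≤ c)
    (h : ∀ (S X : Set ℝ), MeasurableSet S → MeasurableSet X →
      S ⊆ Set.Icc 0 1 → X ⊆ Set.Icc 0 1 → ∀ ω : Ω,
      |∫ s in S, (∫ x in X, (κ s x ω - κ' s x ω))| ≤ c) :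
    cutFK κ κ' ≤ c := by
  apply Real.sSup_le _ hc
  rintro d ⟨S, X, hS, hX, hSQ, hXQ, ω, rfl⟩
  exact h S X hS hX hSQ hXQ ω



end KernelComplete

open KernelComplete

/-- Lemma (completeness of the kernel space under the cut metric `D_⧠`): every
`D_⧠`-Cauchy sequence of kernels `[0,1]² → P(Ω)` converges in `D_⧠` to a kernel. -/
theorem kernel_space_complete {Ω : Type*} [Fintype Ω]
    (κ : ℕ → (ℝ → ℝ → Ω → ℝ)) (hker : ∀ n, IsKernel (κ n))
    (hcauchy : ∀ ε : ℝ, 0 < ε → ∃ N, ∀ m ≥ N, ∀ n ≥ N, cutFK (κ m) (κ n) < ε) :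
    ∃ κ' : ℝ → ℝ → Ω → ℝ, IsKernel κ' ∧
      Tendsto (fun n => cutFK (κ n) κ') atTop (nhds 0) := by
  classical
  cases isEmpty_or_nonempty Ω with
  | inl h =>
    exact absurd ((hker 0).2.2 0 0) (by simp)
  | inr hne =>
  haveI : Nonempty Ω := hne
  haveI : Fact ((2:ℝ≥0∞) ≠ ∞) := ⟨by norm_num⟩
  obtain ⟨φ, hφ, F, hweak⟩ := exists_weak_limit (H := Lp ℝ 2 μK) 1
    (fun n ω => ((kernel_memL2 (hker n) ω).toLp _))
    (fun n ω => kernel_norm_toLp_le (hker n) ω)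
  let m : Ω → ℝ × ℝ → ℝ := fun ω => ((Lp.aestronglyMeasurable (F ω)).mk _)
  have hm_meas : ∀ ω, Measurable (m ω) := fun ω =>
    (Lp.aestronglyMeasurable (F ω)).stronglyMeasurable_mk.measurable
  have hm_ae : ∀ ω, (F ω : ℝ × ℝ → ℝ) =ᵐ[μK] m ω := fun ω =>
    (Lp.aestronglyMeasurable (F ω)).ae_eq_mk
  have hm_int : ∀ ω, Integrable (m ω) μK := fun ω =>
    ((Lp.memLp (F ω)).integrable one_le_two).congr (hm_ae ω)
  -- key convergence of set integrals
  have hkey : ∀ (ω : Ω) (A : Set (ℝ × ℝ)), MeasurableSet A →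
      Tendsto (fun k => ∫ p in A, κ (φ k) p.1 p.2 ω ∂μK) atTop
        (𝓝 (∫ p in A, m ω p ∂μK)) := by
    intro ω A hA
    have h := hweak ω (indicatorConstLp 2 hA (measure_ne_top μK A) (1 : ℝ))
    have hlim : ⟪indicatorConstLp 2 hA (measure_ne_top μK A) (1 : ℝ), F ω⟫ =
        ∫ p in A, m ω p ∂μK := by
      rw [L2.inner_indicatorConstLp_one hA (measure_ne_top μK A) (F ω)]
      exact setIntegral_congr_ae hA ((hm_ae ω).mono fun p hp _ => hp)
    rw [hlim] at h
    exact h.congr (fun k => kernel_inner_indicator (hker (φ k)) ω hA)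
  -- nonnegativity a.e.
  have hnn : ∀ ω, ∀ᵐ p ∂μK, 0 ≤ m ω p := by
    intro ω
    exact ae_nonneg_of_forall_setIntegral_nonneg (hm_int ω) (fun A hA _ =>
      ge_of_tendsto (hkey ω A hA) (Eventually.of_forall fun k =>
        setIntegral_nonneg hA fun p _ => (hker _).2.1 _ _ _))
  -- sum is 1 a.e.
  have hsum_const : ∀ (n : ℕ) (A : Set (ℝ × ℝ)), MeasurableSet A →
      ∑ ω : Ω, ∫ p in A, κ n p.1 p.2 ω ∂μK = (μK A).toReal := by
    intro n A hA
    rw [← integral_finset_sum _ (fun ω _ => (kernel_integrable (hker n) ω).integrableOn)]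
    have h1 : ∀ p : ℝ × ℝ, ∑ ω : Ω, κ n p.1 p.2 ω = 1 := fun p => (hker n).2.2 p.1 p.2
    simp only [h1]
    rw [setIntegral_const]
    simp
    rfl
  have hsum : ∀ᵐ p ∂μK, ∑ ω : Ω, m ω p = 1 := by
    have h : (fun p => ∑ ω : Ω, m ω p) =ᵐ[μK] (fun _ => (1:ℝ)) := by
      apply ae_eq_of_forall_setIntegral_eq_of_sigmaFinite
      · intro A hA _
        exact (integrable_finset_sum _ (fun ω _ => hm_int ω)).integrableOn
      · intro A hA _
        exact (integrable_const (1:ℝ)).integrableOn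
      · intro A hA _
        rw [integral_finset_sum _ (fun ω _ => (hm_int ω).integrableOn)]
        have h1 : Tendsto (fun k => ∑ ω : Ω, ∫ p in A, κ (φ k) p.1 p.2 ω ∂μK) atTop
            (𝓝 (∑ ω : Ω, ∫ p in A, m ω p ∂μK)) :=
          tendsto_finset_sum _ (fun ω _ => hkey ω A hA)
        have h2 : (fun k => ∑ ω : Ω, ∫ p in A, κ (φ k) p.1 p.2 ω ∂μK) =
            fun _ => (μK A).toReal := funext fun k => hsum_const (φ k) A hA
        rw [h2] at h1
        have h3 := tendsto_nhds_unique h1 tendsto_const_nhds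
        rw [h3, setIntegral_const]
        simp
        rfl
    exact h
  -- the good set
  set G : Set (ℝ × ℝ) := {p | (∀ ω : Ω, 0 ≤ m ω p) ∧ ∑ ω : Ω, m ω p = 1} with hG
  have hGmeas : MeasurableSet G := by
    have h1 : G = (⋂ ω : Ω, {p | 0 ≤ m ω p}) ∩ {p | ∑ ω : Ω, m ω p = 1} := by
      ext p; simp [hG, Set.mem_iInter]
    rw [h1]
    exact (MeasurableSet.iInter fun ω =>
        measurableSet_le measurable_const (hm_meas ω)).inter
      (measurableSet_eq_fun (Finset.measurable_sum _ (fun ω _ => hm_meas ω)) measurable_const)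
  have hGae : ∀ᵐ p ∂μK, p ∈ G := by
    have h1 : ∀ᵐ p ∂μK, ∀ ω : Ω, 0 ≤ m ω p := ae_all_iff.2 hnn
    filter_upwards [h1, hsum] with p hp1 hp2
    exact ⟨hp1, hp2⟩
  obtain ⟨ω₀⟩ := hne
  set κ' : ℝ → ℝ → Ω → ℝ :=
    fun s x ω => if (s, x) ∈ G then m ω (s, x) else if ω = ω₀ then 1 else 0 with hκ'def
  have hκ' : IsKernel κ' := by
    refine ⟨fun ω => ?_, fun s x ω => ?_, fun s x => ?_⟩
    · have h : (fun p : ℝ × ℝ => κ' p.1 p.2 ω) =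
          fun p => if p ∈ G then m ω p else if ω = ω₀ then 1 else 0 := by
        funext p; simp [hκ'def]
      rw [h]
      exact Measurable.ite hGmeas (hm_meas ω) measurable_const
    · by_cases hp : (s, x) ∈ G
      · simpa [hκ'def, hp] using hp.1 ω
      · simp only [hκ'def, hp, if_false]
        split_ifs <;> norm_num
    · by_cases hp : (s, x) ∈ G
      · simpa [hκ'def, hp] using hp.2
      · simp [hκ'def, hp]
  have hκ'A : ∀ (ω : Ω) (A : Set (ℝ × ℝ)), MeasurableSet A →
      ∫ p in A, κ' p.1 p.2 ω ∂μK = ∫ p in A, m ω p ∂μK := by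
    intro ω A hA
    apply setIntegral_congr_ae hA
    filter_upwards [hGae] with p hp _
    simp [hκ'def, hp]
  -- main quantitative bound
  have hmain : ∀ ε : ℝ, 0 < ε → ∃ N, ∀ n ≥ N, cutFK (κ n) κ' ≤ ε := by
    intro ε hε
    obtain ⟨N, hN⟩ := hcauchy ε hε
    refine ⟨N, fun n hn => ?_⟩
    apply cutFK_le (hker n) hκ' (le_of_lt hε)
    intro S X hS hX hSQ hXQ ω
    rw [iter_eq (hker n) hκ' hS hX hSQ hXQ ω, hκ'A ω (S ×ˢ X) (hS.prod hX)]
    have htd : Tendsto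
        (fun k => |(∫ p in S ×ˢ X, κ n p.1 p.2 ω ∂μK) - ∫ p in S ×ˢ X, κ (φ k) p.1 p.2 ω ∂μK|)
        atTop
        (𝓝 |(∫ p in S ×ˢ X, κ n p.1 p.2 ω ∂μK) - ∫ p in S ×ˢ X, m ω p ∂μK|) :=
      (tendsto_const_nhds.sub (hkey ω _ (hS.prod hX))).abs
    refine le_of_tendsto htd ?_
    filter_upwards [eventually_ge_atTop N] with k hk
    have hφk : N ≤ φ k := le_trans hk hφ.le_apply
    rw [← iter_eq (hker n) (hker (φ k)) hS hX hSQ hXQ ω]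
    exact le_of_lt (lt_of_le_of_lt
      (abs_iter_le_cutFK (hker n) (hker (φ k)) hS hX hSQ hXQ ω) (hN n hn (φ k) hφk))
  refine ⟨κ', hκ', ?_⟩
  rw [Metric.tendsto_atTop]
  intro ε hε
  obtain ⟨N, hN⟩ := hmain (ε / 2) (half_pos hε)
  refine ⟨N, fun n hn => ?_⟩
  rw [Real.dist_eq, sub_zero, abs_of_nonneg (cutFK_nonneg (hker n) hκ')]
  linarith [hN n hn]
end

section
/- Let ψ : [0,1] → [0,1] be a measure-preserving bijection, n ≥ 1, and let I_j = [(j−1)/n, j/n) for j ∈ [n]. Define a bipartite graph G on vertex sets {v_1,...,v_n} and {w_1,...,w_n} where v_i is adjacent to w_j iff λ(I_j ∩ ψ(I_i)) ≥ n^{−3}. Then G has a perfect matching. -/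
open MeasureTheory ENNReal

/-- The interval `I_j = [j/n, (j+1)/n)` (`0`-based indexing, `j ∈ Fin n`). -/
noncomputable def subInt (n : ℕ) (j : Fin n) : Set ℝ :=
  Set.Ico ((j : ℝ) / n) (((j : ℝ) + 1) / n)

lemma subInt_subset (n : ℕ) (hn : 1 ≤ n) (j : Fin n) : subInt n j ⊆ Set.Icc 0 1 := by
  have hn' : (0:ℝ) < n := by exact_mod_cast hn
  rintro x ⟨h1, h2⟩
  refine ⟨le_trans (by positivity) h1, h2.le.trans ?_⟩
  rw [div_le_one hn']
  exact_mod_cast Nat.succ_le_of_lt j.isLt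

lemma vol_subInt (n : ℕ) (hn : 1 ≤ n) (j : Fin n) :
    volume (subInt n j) = ((n : ℝ≥0∞))⁻¹ := by
  have hn' : (0:ℝ) < n := by exact_mod_cast hn
  rw [subInt, Real.volume_Ico,
    show ((j:ℝ)+1)/n - (j:ℝ)/n = ((n:ℝ))⁻¹ by field_simp; ring,
    ENNReal.ofReal_inv_of_pos hn', ENNReal.ofReal_natCast]

lemma subInt_disj (n : ℕ) (hn : 1 ≤ n) {i j : Fin n} (h : i ≠ j) :
    Disjoint (subInt n i) (subInt n j) := by
  have hn' : (0:ℝ) < n := by exact_mod_cast hn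
  rw [subInt, subInt, Set.Ico_disjoint_Ico]
  rcases lt_or_gt_of_ne h with hij | hij
  · have hle : ((i:ℝ)+1) ≤ (j:ℝ) := by exact_mod_cast hij
    calc min (((i:ℝ)+1)/n) (((j:ℝ)+1)/n) ≤ ((i:ℝ)+1)/n := min_le_left _ _
      _ ≤ (j:ℝ)/n := by gcongr
      _ ≤ max ((i:ℝ)/n) ((j:ℝ)/n) := le_max_right _ _
  · have hle : ((j:ℝ)+1) ≤ (i:ℝ) := by exact_mod_cast hij
    calc min (((i:ℝ)+1)/n) (((j:ℝ)+1)/n) ≤ ((j:ℝ)+1)/n := min_le_right _ _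
      _ ≤ (i:ℝ)/n := by gcongr
      _ ≤ max ((i:ℝ)/n) ((j:ℝ)/n) := le_max_left _ _

lemma cover_lemma (n : ℕ) (hn : 1 ≤ n) :
    Set.Icc (0:ℝ) 1 ⊆ (⋃ j : Fin n, subInt n j) ∪ {1} := by
  rintro x ⟨hx0, hx1⟩
  rcases eq_or_lt_of_le hx1 with h | h
  · right; simp [h]
  · left
    have hn' : (0:ℝ) < n := by exact_mod_cast hn
    have hxn : 0 ≤ x * n := by positivity
    have hj : ⌊x * n⌋₊ < n := by
      rw [Nat.floor_lt hxn]
      nlinarith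
    refine Set.mem_iUnion.2 ⟨⟨⌊x * n⌋₊, hj⟩, ?_, ?_⟩
    · rw [div_le_iff₀ hn']
      simpa using Nat.floor_le hxn
    · rw [lt_div_iff₀ hn']
      simpa using Nat.lt_floor_add_one (x * n)

lemma image_vol_ge (ψ : ℝ → ℝ) (hψ : IsMPB ψ) {E : Set ℝ} (hE : E ⊆ Set.Icc 0 1) :
    volume E ≤ volume (ψ '' E) := by
  set ρ := volume.restrict (Set.Icc (0:ℝ) 1) with hρ
  have hres : ∀ s : Set ℝ, ρ s = volume (s ∩ Set.Icc 0 1) := fun s =>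
    Measure.restrict_apply' measurableSet_Icc
  have him : ψ '' E ⊆ Set.Icc 0 1 :=
    (Set.image_mono (f := ψ) hE).trans hψ.1.mapsTo.image_subset
  have hT := measurableSet_toMeasurable ρ (ψ '' E)
  have hpre : E ⊆ ψ ⁻¹' (toMeasurable ρ (ψ '' E)) := fun x hx =>
    subset_toMeasurable _ _ (Set.mem_image_of_mem ψ hx)
  calc volume E = ρ E := by rw [hres, Set.inter_eq_self_of_subset_left hE]
    _ ≤ ρ (ψ ⁻¹' (toMeasurable ρ (ψ '' E))) := measure_mono hpre
    _ = ρ (toMeasurable ρ (ψ '' E)) := hψ.2.measure_preimage hT.nullMeasurableSet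
    _ = ρ (ψ '' E) := measure_toMeasurable _
    _ = volume (ψ '' E) := by rw [hres, Set.inter_eq_self_of_subset_left him]

set_option maxHeartbeats 1000000 in
/-- Lemma (Hall matching for a measure-preserving bijection): if `ψ` is a
measure-preserving bijection of `[0,1]` and `v_i ~ w_j` iff
`λ(I_j ∩ ψ(I_i)) ≥ n^{−3}`, then the bipartite graph has a perfect matching,
i.e. there is a permutation `π` of `[n]` with `λ(I_{π(i)} ∩ ψ(I_i)) ≥ n^{−3}`
for all `i`. -/
theorem hall_matching_of_measurePreserving (n : ℕ) (hn : 1 ≤ n)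
    (ψ : ℝ → ℝ) (hψ : IsMPB ψ) :
    ∃ π : Equiv.Perm (Fin n), ∀ i : Fin n,
      ENNReal.ofReal (1 / (n : ℝ) ^ 3) ≤ volume (subInt n (π i) ∩ ψ '' subInt n i) := by
  classical
  set c := ENNReal.ofReal (1 / (n : ℝ) ^ 3) with hc
  set t : Fin n → Finset (Fin n) :=
    fun i => Finset.univ.filter (fun j => c ≤ volume (subInt n j ∩ ψ '' subInt n i)) with ht
  set N := (n : ℝ≥0∞) with hN
  have hn' : (0:ℝ) < n := by exact_mod_cast hn
  have hN0 : N ≠ 0 := by simp [hN]; omega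
  have hNtop : N ≠ ⊤ := by simp [hN]
  have hcval : c = (N ^ 3)⁻¹ := by
    rw [hc, one_div, ENNReal.ofReal_inv_of_pos (by positivity),
      ENNReal.ofReal_pow (by positivity), ENNReal.ofReal_natCast]
  have hall : ∀ A : Finset (Fin n), A.card ≤ (A.biUnion t).card := by
    intro A
    by_contra hlt
    push_neg at hlt
    set B := A.biUnion t with hB
    have hA : A.Nonempty := by
      rw [Finset.nonempty_iff_ne_empty]
      rintro rfl; simp at hlt
    have hBne : Bᶜ.Nonempty := by
      rw [← Finset.card_pos, Finset.card_compl, Fintype.card_fin]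
      have h1 : B.card < n := lt_of_lt_of_le hlt (le_trans (Finset.card_le_univ A) (by simp))
      omega
    set E := ⋃ i ∈ A, subInt n i with hE
    have hEsub : E ⊆ Set.Icc 0 1 := Set.iUnion₂_subset fun i _ => subInt_subset n hn i
    have hvolE : volume E = A.card * N⁻¹ := by
      rw [hE, measure_biUnion_finset (fun i _ j _ hij => subInt_disj n hn hij)
        (fun i _ => measurableSet_Ico)]
      simp [vol_subInt n hn, hN]
    have himE : ψ '' E = ⋃ i ∈ A, ψ '' subInt n i := by
      rw [hE, Set.image_iUnion₂]
    have hsplit : volume (ψ '' E) ≤ ∑ j : Fin n, volume (subInt n j ∩ ψ '' E) := by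
      have h1 : ψ '' E ⊆ (⋃ j : Fin n, (subInt n j ∩ ψ '' E)) ∪ {1} := by
        intro x hx
        have hx1 : x ∈ Set.Icc (0:ℝ) 1 :=
          hψ.1.mapsTo.image_subset (Set.image_mono (f := ψ) hEsub hx)
        rcases cover_lemma n hn hx1 with h | h
        · obtain ⟨j, hj⟩ := Set.mem_iUnion.1 h
          exact Or.inl (Set.mem_iUnion.2 ⟨j, hj, hx⟩)
        · exact Or.inr h
      calc volume (ψ '' E) ≤ volume ((⋃ j : Fin n, subInt n j ∩ ψ '' E) ∪ {1}) :=
            measure_mono h1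
        _ ≤ volume (⋃ j : Fin n, subInt n j ∩ ψ '' E) + volume ({1} : Set ℝ) :=
            measure_union_le _ _
        _ = volume (⋃ j : Fin n, subInt n j ∩ ψ '' E) := by simp
        _ ≤ ∑ j : Fin n, volume (subInt n j ∩ ψ '' E) := measure_iUnion_fintype_le _ _
    have hBsum : ∑ j ∈ B, volume (subInt n j ∩ ψ '' E) ≤ B.card * N⁻¹ := by
      calc ∑ j ∈ B, volume (subInt n j ∩ ψ '' E) ≤ ∑ _j ∈ B, N⁻¹ :=
            Finset.sum_le_sum fun j _ =>
              le_trans (measure_mono Set.inter_subset_left) (vol_subInt n hn j).le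
        _ = B.card * N⁻¹ := by simp [mul_comm]
    have hcompl : ∑ j ∈ Bᶜ, volume (subInt n j ∩ ψ '' E) < N⁻¹ := by
      obtain ⟨p, hpmem, hpmax⟩ := Finset.exists_max_image (Bᶜ ×ˢ A)
        (fun p => volume (subInt n p.1 ∩ ψ '' subInt n p.2)) (hBne.product hA)
      set c' := volume (subInt n p.1 ∩ ψ '' subInt n p.2) with hc'
      have hc'lt : c' < c := by
        rw [Finset.mem_product] at hpmem
        have hnot : p.1 ∉ t p.2 := fun hmem =>
          (Finset.mem_compl.1 hpmem.1) (Finset.mem_biUnion.2 ⟨p.2, hpmem.2, hmem⟩)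
        rw [ht] at hnot
        simp only [Finset.mem_filter, Finset.mem_univ, true_and, not_le] at hnot
        exact hnot
      have hkey : N * N * c = N⁻¹ := by
        rw [hcval, show N ^ 3 = (N * N) * N by ring,
          ENNReal.mul_inv (Or.inl (mul_ne_zero hN0 hN0))
            (Or.inl (ENNReal.mul_ne_top hNtop hNtop))]
        calc N * N * ((N * N)⁻¹ * N⁻¹) = (N * N) * (N * N)⁻¹ * N⁻¹ := by ring
          _ = 1 * N⁻¹ := by
              rw [ENNReal.mul_inv_cancel (mul_ne_zero hN0 hN0)
                (ENNReal.mul_ne_top hNtop hNtop)]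
          _ = N⁻¹ := one_mul _
      calc ∑ j ∈ Bᶜ, volume (subInt n j ∩ ψ '' E)
          ≤ ∑ j ∈ Bᶜ, ∑ i ∈ A, volume (subInt n j ∩ ψ '' subInt n i) := by
            refine Finset.sum_le_sum fun j _ => ?_
            rw [himE, Set.inter_iUnion₂]
            exact measure_biUnion_finset_le _ _
        _ ≤ ∑ _j ∈ Bᶜ, ∑ _i ∈ A, c' := by
            refine Finset.sum_le_sum fun j hj => Finset.sum_le_sum fun i hi => ?_
            exact hpmax (j, i) (Finset.mem_product.2 ⟨hj, hi⟩)
        _ = (Bᶜ.card : ℝ≥0∞) * ((A.card : ℝ≥0∞) * c') := by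
            simp [Finset.sum_const, mul_comm, mul_assoc]
        _ ≤ N * (N * c') := by
            have h1 : (Bᶜ.card : ℝ≥0∞) ≤ N := by
              rw [hN]; exact_mod_cast (Finset.card_le_univ Bᶜ).trans (by simp)
            have h2 : (A.card : ℝ≥0∞) ≤ N := by
              rw [hN]; exact_mod_cast (Finset.card_le_univ A).trans (by simp)
            exact mul_le_mul' h1 (mul_le_mul' h2 le_rfl)
        _ = (N * N) * c' := by ring
        _ < (N * N) * c := (ENNReal.mul_lt_mul_iff_right (mul_ne_zero hN0 hN0)
              (ENNReal.mul_ne_top hNtop hNtop)).2 hc'lt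
        _ = N⁻¹ := hkey
    have hBfin : (B.card : ℝ≥0∞) * N⁻¹ ≠ ⊤ :=
      ENNReal.mul_ne_top (ENNReal.natCast_ne_top _) (ENNReal.inv_ne_top.2 hN0)
    have hchain : (A.card : ℝ≥0∞) * N⁻¹ < (A.card : ℝ≥0∞) * N⁻¹ := by
      calc (A.card : ℝ≥0∞) * N⁻¹ = volume E := hvolE.symm
        _ ≤ volume (ψ '' E) := image_vol_ge ψ hψ hEsub
        _ ≤ ∑ j : Fin n, volume (subInt n j ∩ ψ '' E) := hsplit
        _ = ∑ j ∈ B, volume (subInt n j ∩ ψ '' E)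
            + ∑ j ∈ Bᶜ, volume (subInt n j ∩ ψ '' E) := (Finset.sum_add_sum_compl B _).symm
        _ ≤ (B.card : ℝ≥0∞) * N⁻¹ + ∑ j ∈ Bᶜ, volume (subInt n j ∩ ψ '' E) := by
            gcongr
        _ < (B.card : ℝ≥0∞) * N⁻¹ + N⁻¹ := ENNReal.add_lt_add_left hBfin hcompl
        _ = ((B.card : ℝ≥0∞) + 1) * N⁻¹ := by ring
        _ ≤ (A.card : ℝ≥0∞) * N⁻¹ := by
            gcongr
            exact_mod_cast hlt
    exact lt_irrefl _ hchain
  obtain ⟨f, hfinj, hf⟩ := (Finset.all_card_le_biUnion_card_iff_exists_injective t).1 hall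
  refine ⟨Equiv.ofBijective f (Finite.injective_iff_bijective.1 hfinj), fun i => ?_⟩
  have h := hf i
  rw [ht] at h
  simp only [Finset.mem_filter, Finset.mem_univ, true_and] at h
  exact h
end
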